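/- arXiv:math/0612591 — 5 statements merged into one kernel-verified Lean document; each statement's English description precedes it below -/
import Mathlib

section
/- For all integers ℓ ≥ 0 and r ≥ 0 and every x = (x_1,...,x_ℓ) ∈ ℝ^ℓ, the point x belongs to D_{ℓ,r} if and only if ⌈x_{i−1}⌉ ≤ ⌊x_i⌋ for every i = 1, ..., ℓ+1, where by convention x_0 = 0 and x_{ℓ+1} = r (here ⌈·⌉ and ⌊·⌋ denote the ceiling and floor functions). (Remark 2.6 of the paper.) -/
/-- An integer cube in `ℝ^ℓ`: a product of factors each of which is either an integer
singleton `{m}` or an integer unit interval `[m, m+1]`. -/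
def IsIntegerCube {l : ℕ} (C : Set (Fin l → ℝ)) : Prop :=
  ∃ (m : Fin l → ℤ) (s : Fin l → Bool),
    C = Set.univ.pi fun i =>
      if s i then Set.Icc (m i : ℝ) ((m i : ℝ) + 1) else {(m i : ℝ)}

/-- The domain `{x : 0 ≤ x 1 ≤ x 2 ≤ … ≤ x ℓ ≤ r}` in `ℝ^ℓ`. -/
def XDomain (l r : ℕ) : Set (Fin l → ℝ) :=
  {x | (∀ i j : Fin l, i ≤ j → x i ≤ x j) ∧ (∀ i, 0 ≤ x i) ∧ ∀ i, x i ≤ (r : ℝ)}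

/-- `D_{ℓ,r}`: the union of all integer cubes contained in the domain
`0 ≤ x 1 ≤ … ≤ x ℓ ≤ r`. -/
def Dlr (l r : ℕ) : Set (Fin l → ℝ) :=
  ⋃ C ∈ {C : Set (Fin l → ℝ) | IsIntegerCube C ∧ C ⊆ XDomain l r}, C

/-- Auxiliary `ℕ`-indexed version of the extension of `x` by `0` and `r`. -/
def Faux (l r : ℕ) (x : Fin l → ℝ) : ℕ → ℝ := fun n =>
  if h : 0 < n ∧ n ≤ l then x ⟨n - 1, by omega⟩ else if n = 0 then 0 else (r : ℝ)

lemma Faux_zero (l r : ℕ) (x : Fin l → ℝ) : Faux l r x 0 = 0 := by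
  simp [Faux]

lemma Faux_mid (l r : ℕ) (x : Fin l → ℝ) (i : Fin l) : Faux l r x (i.val + 1) = x i := by
  unfold Faux
  rw [dif_pos ⟨Nat.succ_pos _, i.isLt⟩]
  congr 1

lemma Faux_top (l r : ℕ) (x : Fin l → ℝ) : Faux l r x (l + 1) = (r : ℝ) := by
  unfold Faux
  rw [dif_neg (by omega), if_neg (by omega)]

lemma Faux_eq (l r : ℕ) (x : Fin l → ℝ) (j : Fin (l + 2)) :
    (Fin.cons 0 (Fin.snoc x (r : ℝ)) : Fin (l + 2) → ℝ) j = Faux l r x j.val := by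
  induction j using Fin.cases with
  | zero => simp [Faux_zero]
  | succ k =>
    rw [Fin.cons_succ]
    induction k using Fin.lastCases with
    | last =>
      rw [Fin.snoc_last]
      simp [Faux_top]
    | cast a =>
      rw [Fin.snoc_castSucc]
      simp [Faux_mid]

/-- **Remark 2.6.** A point `x ∈ ℝ^ℓ` belongs to `D_{ℓ,r}` if and only if
`⌈x (i-1)⌉ ≤ ⌊x i⌋` for `i = 1, …, ℓ+1`, with the conventions `x 0 = 0` and
`x (ℓ+1) = r`.  (Here `Fin.cons 0 (Fin.snoc x r) : Fin (ℓ+2) → ℝ` is the extension of `x`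
by these conventions.) -/
theorem mem_Dlr_iff_ceil_le_floor (l r : ℕ) (x : Fin l → ℝ) :
    x ∈ Dlr l r ↔ ∀ i : Fin (l + 1),
      ⌈(Fin.cons 0 (Fin.snoc x (r : ℝ)) : Fin (l + 2) → ℝ) i.castSucc⌉ ≤
        ⌊(Fin.cons 0 (Fin.snoc x (r : ℝ)) : Fin (l + 2) → ℝ) i.succ⌋ := by
  constructor
  · rintro hx i
    simp only [Dlr, Set.mem_iUnion, Set.mem_setOf_eq] at hx
    obtain ⟨C, ⟨⟨m, s, rfl⟩, hsub⟩, hx⟩ := hx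
    rw [Set.mem_univ_pi] at hx
    set E : Fin l → ℤ := fun i => if s i then 1 else 0 with hE
    have hlow : ∀ i, (m i : ℝ) ≤ x i := by
      intro i
      have := hx i
      by_cases h : s i
      · simp only [h, if_true, Set.mem_Icc] at this
        exact this.1
      · simp only [h, if_false, Bool.false_eq_true, Set.mem_singleton_iff] at this
        exact this.ge
    have hup : ∀ i, x i ≤ ((m i + E i : ℤ) : ℝ) := by
      intro i
      have := hx i
      by_cases h : s i
      · simp only [h, if_true, Set.mem_Icc] at this
        simp only [hE, h, if_true]
        push_cast
        exact this.2
      · simp only [h, if_false, Bool.false_eq_true, Set.mem_singleton_iff] at this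
        simp only [hE, h, if_false, Bool.false_eq_true, add_zero]
        exact this.le
    have hmemlow : (fun k => (m k : ℝ)) ∈
        Set.univ.pi fun i => if s i then Set.Icc (m i : ℝ) ((m i : ℝ) + 1) else {(m i : ℝ)} := by
      rw [Set.mem_univ_pi]
      intro k
      by_cases h : s k <;> simp [h]
    have hmemz : ∀ i₀ : Fin l, (fun k => if k = i₀ then ((m k + E k : ℤ) : ℝ) else (m k : ℝ)) ∈
        Set.univ.pi fun i => if s i then Set.Icc (m i : ℝ) ((m i : ℝ) + 1) else {(m i : ℝ)} := by
      intro i₀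
      rw [Set.mem_univ_pi]
      intro k
      by_cases hk : k = i₀
      · subst hk
        by_cases h : s k <;> simp [h, hE]
      · by_cases h : s k <;> simp [hk, h]
    have h0m : ∀ i, (0 : ℤ) ≤ m i := by
      intro i
      have h : (0 : ℝ) ≤ ((m i : ℤ) : ℝ) := (hsub hmemlow).2.1 i
      exact_mod_cast h
    have hrm : ∀ i, m i + E i ≤ (r : ℤ) := by
      intro i
      have h : (if (i : Fin l) = i then ((m i + E i : ℤ) : ℝ) else (m i : ℝ)) ≤ (r : ℝ) :=
        (hsub (hmemz i)).2.2 i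
      rw [if_pos rfl] at h
      exact_mod_cast h
    have hstep : ∀ i j : Fin l, i < j → m i + E i ≤ m j := by
      intro i j hij
      have h : (if i = i then ((m i + E i : ℤ) : ℝ) else (m i : ℝ)) ≤
          (if j = i then ((m j + E j : ℤ) : ℝ) else (m j : ℝ)) := (hsub (hmemz i)).1 i j hij.le
      rw [if_pos rfl, if_neg (Fin.ne_of_gt hij)] at h
      exact_mod_cast h
    have hfl : ∀ i, m i ≤ ⌊x i⌋ := fun i => Int.le_floor.2 (hlow i)
    have hcu : ∀ i, ⌈x i⌉ ≤ m i + E i := fun i => by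
      have := Int.ceil_le.2 (hup i)
      simpa using this
    rw [Faux_eq, Faux_eq, Fin.coe_castSucc, Fin.val_succ]
    have hi : i.val ≤ l := by omega
    rcases Nat.eq_zero_or_pos i.val with h0 | hpos
    · rw [h0, Faux_zero]
      rcases Nat.eq_zero_or_pos l with hl | hl
      · subst hl
        rw [show (0 : ℕ) + 1 = 0 + 1 from rfl, Faux_top]
        simp
      · have : (0 : ℕ) + 1 = (⟨0, hl⟩ : Fin l).val + 1 := rfl
        rw [this, Faux_mid]
        have := le_trans (h0m ⟨0, hl⟩) (hfl ⟨0, hl⟩)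
        simpa using this
    · -- i.val ≥ 1 : Faux i.val = x ⟨i.val - 1⟩
      have hlt : i.val - 1 < l := by omega
      have e1 : i.val = (⟨i.val - 1, hlt⟩ : Fin l).val + 1 := by
        simp only [Fin.val_mk]; omega
      rw [e1, Faux_mid]
      rcases Nat.lt_or_ge i.val l with hltl | hgel
      · have hlt2 : i.val < l := hltl
        have e2 : (⟨i.val - 1, hlt⟩ : Fin l).val + 1 + 1 = (⟨i.val, hlt2⟩ : Fin l).val + 1 := by
          simp only [Fin.val_mk]; omega
        rw [e2, Faux_mid]
        calc ⌈x ⟨i.val - 1, hlt⟩⌉ ≤ m ⟨i.val - 1, hlt⟩ + E ⟨i.val - 1, hlt⟩ := hcu _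
          _ ≤ m ⟨i.val, hlt2⟩ := hstep _ _ (by rw [Fin.lt_def]; simp only [Fin.val_mk]; omega)
          _ ≤ ⌊x ⟨i.val, hlt2⟩⌋ := hfl _
      · have : i.val = l := by omega
        have e2 : (⟨i.val - 1, hlt⟩ : Fin l).val + 1 + 1 = l + 1 := by
          simp only [Fin.val_mk]; omega
        rw [e2, Faux_top]
        calc ⌈x ⟨i.val - 1, hlt⟩⌉ ≤ m ⟨i.val - 1, hlt⟩ + E ⟨i.val - 1, hlt⟩ := hcu _
          _ ≤ (r : ℤ) := hrm _
          _ = ⌊(r : ℝ)⌋ := by simp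
  · intro H
    have H' : ∀ n, n ≤ l → ⌈Faux l r x n⌉ ≤ ⌊Faux l r x (n + 1)⌋ := by
      intro n hn
      have := H ⟨n, by omega⟩
      rwa [Faux_eq, Faux_eq, Fin.coe_castSucc, Fin.val_succ] at this
    have hchain : ∀ b a, a < b → b ≤ l + 1 → ⌈Faux l r x a⌉ ≤ ⌊Faux l r x b⌋ := by
      intro b
      induction b with
      | zero => omega
      | succ c ih =>
        intro a ha hb
        rcases Nat.lt_or_ge a c with hac | hac
        · calc ⌈Faux l r x a⌉ ≤ ⌊Faux l r x c⌋ := ih a hac (by omega)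
            _ ≤ ⌈Faux l r x c⌉ := Int.floor_le_ceil _
            _ ≤ ⌊Faux l r x (c + 1)⌋ := H' c (by omega)
        · have : a = c := by omega
          subst this
          exact H' a (by omega)
    have hx0 : ∀ i : Fin l, (0 : ℤ) ≤ ⌊x i⌋ := by
      intro i
      have := hchain (i.val + 1) 0 (by omega) (by omega)
      rwa [Faux_zero, Faux_mid, Int.ceil_zero] at this
    have hxr : ∀ i : Fin l, ⌈x i⌉ ≤ (r : ℤ) := by
      intro i
      have := hchain (l + 1) (i.val + 1) (by omega) le_rfl
      rwa [Faux_mid, Faux_top, Int.floor_natCast] at this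
    have hcons : ∀ i j : Fin l, i < j → ⌈x i⌉ ≤ ⌊x j⌋ := by
      intro i j hij
      have := hchain (j.val + 1) (i.val + 1) (Nat.succ_lt_succ hij) (by omega)
      rwa [Faux_mid, Faux_mid] at this
    set C : Set (Fin l → ℝ) := Set.univ.pi fun i =>
      if (decide (⌊x i⌋ < ⌈x i⌉) : Bool) then Set.Icc ((⌊x i⌋ : ℤ) : ℝ) (((⌊x i⌋ : ℤ) : ℝ) + 1)
      else {((⌊x i⌋ : ℤ) : ℝ)} with hC
    have ybound : ∀ y ∈ C, ∀ i, ((⌊x i⌋ : ℤ) : ℝ) ≤ y i ∧ y i ≤ ((⌈x i⌉ : ℤ) : ℝ) := by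
      intro y hy i
      rw [hC, Set.mem_univ_pi] at hy
      have hyi := hy i
      by_cases h : ⌊x i⌋ < ⌈x i⌉
      · have hc : ⌈x i⌉ = ⌊x i⌋ + 1 :=
          le_antisymm (Int.ceil_le_floor_add_one _) (by omega)
        simp only [h, decide_eq_true_eq, if_true, Set.mem_Icc] at hyi
        refine ⟨hyi.1, ?_⟩
        rw [hc]
        push_cast
        exact hyi.2
      · have hc : ⌈x i⌉ = ⌊x i⌋ := le_antisymm (by omega) (Int.floor_le_ceil _)
        simp only [h, decide_eq_true_eq, if_false, Set.mem_singleton_iff] at hyi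
        rw [hyi, hc]
        exact ⟨le_rfl, le_rfl⟩
    have hxC : x ∈ C := by
      rw [hC, Set.mem_univ_pi]
      intro i
      by_cases h : ⌊x i⌋ < ⌈x i⌉
      · have hc : ⌈x i⌉ = ⌊x i⌋ + 1 :=
          le_antisymm (Int.ceil_le_floor_add_one _) (by omega)
        simp only [h, decide_eq_true_eq, if_true, Set.mem_Icc]
        refine ⟨Int.floor_le _, ?_⟩
        have := Int.le_ceil (x i)
        rw [hc] at this
        push_cast at this
        exact this
      · have hc : ⌈x i⌉ = ⌊x i⌋ := le_antisymm (by omega) (Int.floor_le_ceil _)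
        simp only [h, decide_eq_true_eq, if_false, Set.mem_singleton_iff]
        have h1 := Int.floor_le (x i)
        have h2 := Int.le_ceil (x i)
        rw [hc] at h2
        linarith
    refine Set.mem_biUnion ⟨⟨_, _, hC⟩, ?_⟩ hxC
    intro y hy
    refine ⟨?_, ?_, ?_⟩
    · intro i j hij
      rcases eq_or_lt_of_le hij with h | h
      · rw [h]
      · calc y i ≤ ((⌈x i⌉ : ℤ) : ℝ) := (ybound y hy i).2
          _ ≤ ((⌊x j⌋ : ℤ) : ℝ) := by exact_mod_cast hcons i j h
          _ ≤ y j := (ybound y hy j).1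
    · intro i
      calc (0 : ℝ) ≤ ((⌊x i⌋ : ℤ) : ℝ) := by exact_mod_cast hx0 i
        _ ≤ y i := (ybound y hy i).1
    · intro i
      calc y i ≤ ((⌈x i⌉ : ℤ) : ℝ) := (ybound y hy i).2
        _ ≤ (r : ℝ) := by exact_mod_cast hxr i
end

section
/- For every n ≥ 1, the cutting map Π_n is a well-defined, order-preserving map of posets Π_n : Φ(underline-n) → Ψ([n+1]); in particular, if T̂ ≥ T̂' in Φ(underline-n) then Π_n(T̂) ≥ Π_n(T̂') in Ψ([n+1]). (Lemma 2.10 of the paper.) -/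
/-! ### Ψ-trees, encoded by systems of compatible brackets (partial parenthesizations) -/

/-- A bracket for `Ψ([n])`: an interval `{i, …, j}` of leaves with `i < j ≤ n`,
different from the full interval `{0, …, n}`.  Brackets correspond to internal
vertices (other than the root) of a `Ψ`-tree with leaves `0, 1, …, n`. -/
abbrev PsiBracket (n : ℕ) : Type :=
  {p : ℕ × ℕ // p.1 < p.2 ∧ p.2 ≤ n ∧ ¬(p.1 = 0 ∧ p.2 = n)}

/-- The set of leaves grouped by a `Ψ`-bracket. -/
def PsiBracket.leaves {n : ℕ} (b : PsiBracket n) : Set ℕ := Set.Icc b.1.1 b.1.2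

/-- Two `Ψ`-brackets are compatible when their leaf sets are disjoint or nested. -/
def PsiCompat {n : ℕ} (b c : PsiBracket n) : Prop :=
  Disjoint b.leaves c.leaves ∨ b.leaves ⊆ c.leaves ∨ c.leaves ⊆ b.leaves

/-- The poset `Ψ([n])` of `Ψ`-trees with leaves `0, 1, …, n`, encoded as systems of
pairwise compatible brackets; `T ≤ T'` (i.e. `T' ≥ T`, `T` is obtained from `T'` by
contracting internal edges) iff the bracket system of `T` is contained in that of `T'`. -/
abbrev Psi (n : ℕ) : Type :=
  {S : Finset (PsiBracket n) // ∀ b ∈ S, ∀ c ∈ S, PsiCompat b c}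


/-! ### Fans, encoded by systems of compatible brackets -/

/-- A non-trunk bracket of a fan with leaves `{* = 0, 1, …, n}`: an interval
`{i, …, j}` of leaves with `1 ≤ i < j ≤ n` (not containing the distinguished leaf `*`).
These correspond to internal vertices not lying on the trunk. -/
abbrev FanIntl (n : ℕ) : Type :=
  {p : ℕ × ℕ // 1 ≤ p.1 ∧ p.1 < p.2 ∧ p.2 ≤ n}

/-- A trunk bracket of a fan with leaves `{* = 0, 1, …, n}`: a pair `(a, b)` with
`0 ≤ a < b ≤ n + 1`, not `(0, n+1)`, grouping the leaves `{*} ∪ {1, …, a} ∪ {b, …, n}`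
(the leaves `1, …, a` lying on one side of the trunk and `b, …, n` on the other).
These correspond to internal vertices lying on the trunk (other than the root). -/
abbrev FanTrunk (n : ℕ) : Type :=
  {p : ℕ × ℕ // p.1 < p.2 ∧ p.2 ≤ n + 1 ∧ ¬(p.1 = 0 ∧ p.2 = n + 1)}

/-- A bracket of a fan: either a non-trunk bracket or a trunk bracket. -/
abbrev FanBracket (n : ℕ) : Type := FanIntl n ⊕ FanTrunk n

/-- The set of leaves grouped by a bracket of a fan (the distinguished leaf `*` is `0`). -/
def FanBracket.leaves {n : ℕ} : FanBracket n → Set ℕ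
  | .inl b => Set.Icc b.1.1 b.1.2
  | .inr p => {0} ∪ Set.Icc 1 p.1.1 ∪ Set.Icc p.1.2 n

/-- Compatibility of two brackets of a fan: two non-trunk brackets must have disjoint or
nested leaf sets; two trunk brackets must be nested as trunk brackets (each side of the
trunk separately); a non-trunk bracket `{i, …, j}` and a trunk bracket `(a, b)` must be
either disjoint (`a < i` and `j < b`) or nested on a single side of the trunk (`j ≤ a`,
or `b ≤ i`). -/
def FanCompat {n : ℕ} : FanBracket n → FanBracket n → Prop
  | .inr p, .inr q => (p.1.1 ≤ q.1.1 ∧ q.1.2 ≤ p.1.2) ∨ (q.1.1 ≤ p.1.1 ∧ p.1.2 ≤ q.1.2)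
  | .inl b, .inr p => b.1.2 ≤ p.1.1 ∨ p.1.2 ≤ b.1.1 ∨ (p.1.1 < b.1.1 ∧ b.1.2 < p.1.2)
  | .inr p, .inl b => b.1.2 ≤ p.1.1 ∨ p.1.2 ≤ b.1.1 ∨ (p.1.1 < b.1.1 ∧ b.1.2 < p.1.2)
  | .inl b, .inl c =>
      Disjoint (FanBracket.leaves (.inl b)) (FanBracket.leaves (.inl c)) ∨
      FanBracket.leaves (.inl b) ⊆ FanBracket.leaves (.inl c) ∨
      FanBracket.leaves (.inl c) ⊆ FanBracket.leaves (.inl b)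

/-- The poset `Φ(underline-n)` of fans with leaves `{* = 0, 1, …, n}`, encoded as systems
of pairwise compatible brackets; `T̂ ≤ T̂'` iff `T̂` is obtained from `T̂'` by contracting
non-leaf edges, iff the bracket system of `T̂` is contained in that of `T̂'`. -/
abbrev Fan (n : ℕ) : Type :=
  {S : Finset (FanBracket n) // ∀ x ∈ S, ∀ y ∈ S, FanCompat x y}

/-! ### The cutting map `Π_n` -/

/-- The brackets of `Π_n(T̂)` produced by a single bracket of the fan `T̂`: a non-trunk
bracket is kept unchanged, while a trunk bracket `(a, b)` produces the left-most bracket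
`{0, …, a}` (when `a ≥ 1`) and the right-most bracket `{b, …, n+1}` (when `b ≤ n`);
here the distinguished leaf `*` of the fan has been split into the leaves `0` and `n+1`. -/
def cutBracket {n : ℕ} : FanBracket n → Finset (PsiBracket (n + 1))
  | .inl b => {⟨b.1, by obtain ⟨h1, h2, h3⟩ := b.2; omega⟩}
  | .inr p =>
      (if h : 1 ≤ p.1.1 then {⟨(0, p.1.1), by obtain ⟨h1, h2, h3⟩ := p.2; omega⟩} else ∅) ∪
      (if h : p.1.2 ≤ n then {⟨(p.1.2, n + 1), by obtain ⟨h1, h2, h3⟩ := p.2; omega⟩} else ∅)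

/-- The cutting map on bracket systems. -/
def cutSet {n : ℕ} (S : Finset (FanBracket n)) : Finset (PsiBracket (n + 1)) :=
  S.biUnion cutBracket

lemma psiCompat_of {n : ℕ} (b c : PsiBracket n)
    (h : b.1.2 < c.1.1 ∨ c.1.2 < b.1.1 ∨ (c.1.1 ≤ b.1.1 ∧ b.1.2 ≤ c.1.2) ∨
      (b.1.1 ≤ c.1.1 ∧ c.1.2 ≤ b.1.2)) : PsiCompat b c := by
  rcases h with h | h | h | h
  · left
    rw [Set.disjoint_left]
    intro a ha hc
    simp only [PsiBracket.leaves, Set.mem_Icc] at ha hc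
    omega
  · left
    rw [Set.disjoint_left]
    intro a ha hc
    simp only [PsiBracket.leaves, Set.mem_Icc] at ha hc
    omega
  · right; left; exact Set.Icc_subset_Icc h.1 h.2
  · right; right; exact Set.Icc_subset_Icc h.1 h.2

lemma mem_cut_inr {n : ℕ} (p : FanTrunk n) (b : PsiBracket (n + 1))
    (hb : b ∈ cutBracket (.inr p : FanBracket n)) :
    (b.1 = (0, p.1.1) ∧ 1 ≤ p.1.1) ∨ (b.1 = (p.1.2, n + 1) ∧ p.1.2 ≤ n) := by
  simp only [cutBracket, Finset.mem_union] at hb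
  rcases hb with hb | hb <;> split_ifs at hb with h <;>
    simp only [Finset.mem_singleton, Finset.notMem_empty] at hb
  · left; exact ⟨congrArg Subtype.val hb, h⟩
  · right; exact ⟨congrArg Subtype.val hb, h⟩

lemma mem_cut_inl {n : ℕ} (c : FanIntl n) (b : PsiBracket (n + 1))
    (hb : b ∈ cutBracket (.inl c : FanBracket n)) : b.1 = c.1 := by
  simp only [cutBracket, Finset.mem_singleton] at hb
  exact congrArg Subtype.val hb

lemma fanLeaves_inl {n : ℕ} (c : FanIntl n) :
    FanBracket.leaves (.inl c : FanBracket n) = Set.Icc c.1.1 c.1.2 := rfl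

lemma cut_compat {n : ℕ} {x y : FanBracket n} (h : FanCompat x y) :
    ∀ b ∈ cutBracket x, ∀ c ∈ cutBracket y, PsiCompat b c := by
  intro b hb c hc
  cases x with
  | inl bx =>
    have hb' := mem_cut_inl bx b hb
    cases y with
    | inl cy =>
      have hc' := mem_cut_inl cy c hc
      simp only [FanCompat, fanLeaves_inl] at h
      rcases h with h | h | h
      · apply psiCompat_of
        rw [hb', hc']
        rw [Set.disjoint_left] at h
        rcases Nat.lt_or_ge bx.1.2 cy.1.1 with h1 | h1
        · exact Or.inl h1
        rcases Nat.lt_or_ge cy.1.2 bx.1.1 with h2 | h2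
        · exact Or.inr (Or.inl h2)
        exfalso
        obtain ⟨hbx1, hbx2, hbx3⟩ := bx.2
        obtain ⟨hcy1, hcy2, hcy3⟩ := cy.2
        rcases Nat.le_total bx.1.1 cy.1.1 with h3 | h3
        · exact h (a := cy.1.1) (by simp [Set.mem_Icc]; omega)
            (by simp [Set.mem_Icc]; omega)
        · exact h (a := bx.1.1) (by simp [Set.mem_Icc]; omega)
            (by simp [Set.mem_Icc]; omega)
      · apply psiCompat_of
        obtain ⟨hbx1, hbx2, hbx3⟩ := bx.2
        obtain ⟨hcy1, hcy2, hcy3⟩ := cy.2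
        have h1 := h (Set.left_mem_Icc.2 (by omega))
        have h2 := h (Set.right_mem_Icc.2 (by omega))
        simp only [Set.mem_Icc] at h1 h2
        right; right; left
        constructor <;> [rw [hb', hc']; rw [hb', hc']] <;> omega
      · apply psiCompat_of
        obtain ⟨hbx1, hbx2, hbx3⟩ := bx.2
        obtain ⟨hcy1, hcy2, hcy3⟩ := cy.2
        have h1 := h (Set.left_mem_Icc.2 (by omega))
        have h2 := h (Set.right_mem_Icc.2 (by omega))
        simp only [Set.mem_Icc] at h1 h2
        right; right; right
        constructor <;> [rw [hb', hc']; rw [hb', hc']] <;> omega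
    | inr py =>
      rcases mem_cut_inr py c hc with ⟨hc', hc2⟩ | ⟨hc', hc2⟩ <;>
        apply psiCompat_of <;>
        obtain ⟨hbx1, hbx2, hbx3⟩ := bx.2 <;>
        obtain ⟨hpy1, hpy2, hpy3⟩ := py.2 <;>
        simp only [FanCompat] at h <;>
        rw [hb', hc'] <;> simp only [Prod.fst, Prod.snd] <;> omega
  | inr px =>
    rcases mem_cut_inr px b hb with ⟨hb', hb2⟩ | ⟨hb', hb2⟩ <;>
    · cases y with
      | inl cy =>
        have hc' := mem_cut_inl cy c hc
        apply psiCompat_of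
        obtain ⟨hcy1, hcy2, hcy3⟩ := cy.2
        obtain ⟨hpx1, hpx2, hpx3⟩ := px.2
        simp only [FanCompat] at h
        rw [hb', hc']
        simp only [Prod.fst, Prod.snd]
        omega
      | inr py =>
        rcases mem_cut_inr py c hc with ⟨hc', hc2⟩ | ⟨hc', hc2⟩ <;>
          apply psiCompat_of <;>
          obtain ⟨hpx1, hpx2, hpx3⟩ := px.2 <;>
          obtain ⟨hpy1, hpy2, hpy3⟩ := py.2 <;>
          simp only [FanCompat] at h <;>
          rw [hb', hc'] <;> simp only [Prod.fst, Prod.snd] <;> omega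

/-- **Lemma 2.10.** The cutting construction defines a well-defined, order-preserving map
of posets `Π_n : Φ(underline-n) → Ψ([n+1])`: the cut of every fan is a genuine `Ψ`-tree
(its brackets are pairwise compatible), and if `T ≥ T'` in `Φ(underline-n)` then
`Π_n T ≥ Π_n T'` in `Ψ([n+1])`. -/
theorem cutting_wellDefined_monotone (n : ℕ) (hn : 1 ≤ n) :
    ∃ Pi : Fan n → Psi (n + 1),
      (∀ S : Fan n, (Pi S).1 = cutSet S.1) ∧ Monotone Pi := by
  refine ⟨fun S => ⟨cutSet S.1, ?_⟩, fun S => rfl, ?_⟩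
  · intro b hb c hc
    simp only [cutSet, Finset.mem_biUnion] at hb hc
    obtain ⟨x, hx, hbx⟩ := hb
    obtain ⟨y, hy, hcy⟩ := hc
    exact cut_compat (S.2 x hx y hy) b hbx c hcy
  · intro S T hST
    show cutSet S.1 ≤ cutSet T.1
    exact Finset.biUnion_subset_biUnion_of_subset_left _ hST
end

section
/- Let n ≥ 1, Y ∈ Ψ([n+1]) and T̂ ∈ Φ(underline-n) satisfy Y ≥ Π_n(T̂). Then the geometric realization of the full subposet Π_n^{-1}(Y | ≥ T̂) = {Ŷ ∈ Φ(underline-n) : Π_n(Ŷ) = Y and Ŷ ≥ T̂} of Φ(underline-n) is contractible. (Proposition 3.6 of the paper; in fact this poset is isomorphic to a finite product of posets X_{ℓ_i,r_i}.) -/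
/-- The geometric realization of a poset `P` (the realization of the nerve of `P`, i.e. of
the order complex of `P`), modelled concretely as the space of finitely supported
"barycentric coordinate" functions: assignments of nonnegative weights summing to `1`
whose support is a chain of `P`.  It is topologized as a subspace of `P → ℝ` with the
product topology. -/
def PosetRealization (P : Type*) [Preorder P] : Set (P → ℝ) :=
  {f | (∀ p, 0 ≤ f p) ∧ (Function.support f).Finite ∧ ∑ᶠ p, f p = 1 ∧
      IsChain (· ≤ ·) (Function.support f)}

/-- The map of geometric realizations induced by a map of posets `g : P → Q`
(the realization of the induced simplicial map of nerves): a point with barycentric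
coordinates `f` is sent to the point whose weight at `q` is the total weight of the
fiber `g ⁻¹ {q}`. -/
noncomputable def inducedChainMap {P Q : Type*} (g : P → Q) (f : P → ℝ) : Q → ℝ :=
  fun q => ∑ᶠ p ∈ {p | g p = q}, f p

theorem psiCompat_mk {m : ℕ} {p q : ℕ × ℕ}
    (hp : p.1 < p.2 ∧ p.2 ≤ m ∧ ¬(p.1 = 0 ∧ p.2 = m))
    (hq : q.1 < q.2 ∧ q.2 ≤ m ∧ ¬(q.1 = 0 ∧ q.2 = m))
    (h : p.2 < q.1 ∨ q.2 < p.1 ∨ (q.1 ≤ p.1 ∧ p.2 ≤ q.2) ∨ (p.1 ≤ q.1 ∧ q.2 ≤ p.2)) :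
    PsiCompat (⟨p, hp⟩ : PsiBracket m) ⟨q, hq⟩ := by
  unfold PsiCompat PsiBracket.leaves
  rcases h with h | h | h | h
  · refine Or.inl (Set.disjoint_left.mpr fun a ha hb => ?_)
    simp only [Set.mem_Icc] at ha hb; omega
  · refine Or.inl (Set.disjoint_left.mpr fun a ha hb => ?_)
    simp only [Set.mem_Icc] at ha hb; omega
  · exact Or.inr (Or.inl (Set.Icc_subset_Icc h.1 h.2))
  · exact Or.inr (Or.inr (Set.Icc_subset_Icc h.1 h.2))

theorem cutSet_compat {n : ℕ} (S : Fan n) :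
    ∀ b ∈ cutSet S.1, ∀ c ∈ cutSet S.1, PsiCompat b c := by
  intro b hb c hc
  simp only [cutSet, Finset.mem_biUnion] at hb hc
  obtain ⟨x, hxS, hbx⟩ := hb
  obtain ⟨y, hyS, hcy⟩ := hc
  have hcompat := S.2 x hxS y hyS
  rcases x with bx | px <;> rcases y with by' | py
  · simp only [cutBracket, Finset.mem_singleton] at hbx hcy
    subst hbx; subst hcy
    simp only [FanCompat, FanBracket.leaves] at hcompat
    obtain ⟨h1, h2, h3⟩ := bx.2
    obtain ⟨h4, h5, h6⟩ := by'.2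
    rcases hcompat with h | h | h
    · have key : bx.1.2 < by'.1.1 ∨ by'.1.2 < bx.1.1 := by
        by_contra hcon
        push_neg at hcon
        have hmem1 : max bx.1.1 by'.1.1 ∈ Set.Icc bx.1.1 bx.1.2 := by
          simp only [Set.mem_Icc]; omega
        have hmem2 : max bx.1.1 by'.1.1 ∈ Set.Icc by'.1.1 by'.1.2 := by
          simp only [Set.mem_Icc]; omega
        exact Set.disjoint_left.mp h hmem1 hmem2
      exact psiCompat_mk _ _ (by omega)
    · rw [Set.Icc_subset_Icc_iff (by omega)] at h
      exact psiCompat_mk _ _ (by omega)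
    · rw [Set.Icc_subset_Icc_iff (by omega)] at h
      exact psiCompat_mk _ _ (by omega)
  · simp only [cutBracket, Finset.mem_singleton] at hbx
    subst hbx
    simp only [cutBracket, Finset.mem_union] at hcy
    simp only [FanCompat] at hcompat
    obtain ⟨h1, h2, h3⟩ := bx.2
    obtain ⟨h4, h5, h6⟩ := py.2
    rcases hcy with hcy | hcy <;> split_ifs at hcy with hif <;>
      first
        | exact absurd hcy (Finset.notMem_empty _)
        | (simp only [Finset.mem_singleton] at hcy; subst hcy;
           exact psiCompat_mk _ _ (by omega))
  · simp only [cutBracket, Finset.mem_singleton] at hcy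
    subst hcy
    simp only [cutBracket, Finset.mem_union] at hbx
    simp only [FanCompat] at hcompat
    obtain ⟨h1, h2, h3⟩ := by'.2
    obtain ⟨h4, h5, h6⟩ := px.2
    rcases hbx with hbx | hbx <;> split_ifs at hbx with hif <;>
      first
        | exact absurd hbx (Finset.notMem_empty _)
        | (simp only [Finset.mem_singleton] at hbx; subst hbx;
           exact psiCompat_mk _ _ (by omega))
  · simp only [cutBracket, Finset.mem_union] at hbx hcy
    simp only [FanCompat] at hcompat
    obtain ⟨h1, h2, h3⟩ := px.2
    obtain ⟨h4, h5, h6⟩ := py.2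
    rcases hbx with hbx | hbx <;> rcases hcy with hcy | hcy <;>
        split_ifs at hbx hcy with hif1 hif2 <;>
      first
        | exact absurd hbx (Finset.notMem_empty _)
        | exact absurd hcy (Finset.notMem_empty _)
        | (simp only [Finset.mem_singleton] at hbx hcy; subst hbx; subst hcy;
           exact psiCompat_mk _ _ (by omega))

/-- The cutting map (functor) `Π_n : Φ(underline-n) → Ψ([n+1])`. -/
def cutFan {n : ℕ} (S : Fan n) : Psi (n + 1) := ⟨cutSet S.1, cutSet_compat S⟩

open Classical

section Core

variable {P Q : Type*} [PartialOrder P] [Fintype P] [PartialOrder Q] [Fintype Q]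

theorem mem_pr_iff {x : P → ℝ} :
    x ∈ PosetRealization P ↔
      (∀ p, 0 ≤ x p) ∧ ∑ p, x p = 1 ∧ IsChain (· ≤ ·) (Function.support x) := by
  unfold PosetRealization
  simp only [Set.mem_setOf_eq, finsum_eq_sum_of_fintype]
  exact ⟨fun h => ⟨h.1, h.2.2.1, h.2.2.2⟩, fun h => ⟨h.1, Set.toFinite _, h.2.1, h.2.2⟩⟩

theorem inducedChainMap_eq_sum (g : P → Q) (x : P → ℝ) (q : Q) :
    inducedChainMap g x q = ∑ p ∈ Finset.univ.filter (fun p => g p = q), x p := by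
  rw [inducedChainMap, ← finsum_mem_coe_finset]
  congr 1
  ext p
  simp

/-- cumulative sum over `{y | y ≤ p}` -/
noncomputable def cum (x : P → ℝ) (p : P) : ℝ :=
  ∑ y ∈ Finset.univ.filter (fun y => y ≤ p), x y

/-- cumulative sum over `{y | y < p}` -/
noncomputable def cumLt (x : P → ℝ) (p : P) : ℝ :=
  ∑ y ∈ Finset.univ.filter (fun y => y < p), x y

variable {x : P → ℝ}

theorem cum_sub_cumLt (p : P) : cum x p = cumLt x p + x p := by
  unfold cum cumLt
  have h : Finset.univ.filter (fun y => y ≤ p) =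
      insert p (Finset.univ.filter (fun y => y < p)) := by
    ext y
    simp only [Finset.mem_filter, Finset.mem_univ, true_and, Finset.mem_insert]
    constructor
    · intro h; rcases eq_or_lt_of_le h with h | h
      · exact Or.inl h
      · exact Or.inr h
    · rintro (rfl | h); · exact le_refl _
      · exact le_of_lt h
  rw [h, Finset.sum_insert (by simp)]
  ring

theorem cumLt_le_cum (hx0 : ∀ p, 0 ≤ x p) (p : P) : cumLt x p ≤ cum x p := by
  apply Finset.sum_le_sum_of_subset_of_nonneg
  · intro y hy
    simp only [Finset.mem_filter, Finset.mem_univ, true_and] at hy ⊢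
    exact le_of_lt hy
  · intro i _ _; exact hx0 i

theorem cum_nonneg (hx0 : ∀ p, 0 ≤ x p) (p : P) : 0 ≤ cum x p :=
  Finset.sum_nonneg fun i _ => hx0 i

theorem cumLt_nonneg (hx0 : ∀ p, 0 ≤ x p) (p : P) : 0 ≤ cumLt x p :=
  Finset.sum_nonneg fun i _ => hx0 i

theorem cum_le_one (hx0 : ∀ p, 0 ≤ x p) (hx1 : ∑ p, x p = 1) (p : P) : cum x p ≤ 1 := by
  rw [← hx1]
  apply Finset.sum_le_sum_of_subset_of_nonneg (Finset.filter_subset _ _)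
  intro i _ _; exact hx0 i

theorem cumLt_le_one (hx0 : ∀ p, 0 ≤ x p) (hx1 : ∑ p, x p = 1) (p : P) : cumLt x p ≤ 1 := by
  rw [← hx1]
  apply Finset.sum_le_sum_of_subset_of_nonneg (Finset.filter_subset _ _)
  intro i _ _; exact hx0 i

theorem cum_le_cumLt_of_lt (hx0 : ∀ p, 0 ≤ x p) {p q : P} (h : p < q) :
    cum x p ≤ cumLt x q := by
  apply Finset.sum_le_sum_of_subset_of_nonneg
  · intro y hy
    simp only [Finset.mem_filter, Finset.mem_univ, true_and] at hy ⊢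
    exact lt_of_le_of_lt hy h
  · intro i _ _; exact hx0 i

/-- the two pieces of the prism homotopy -/
noncomputable def prA (x : P → ℝ) (s : ℝ) (p : P) : ℝ :=
  min (cum x p) s - min (cumLt x p) s

noncomputable def prB (x : P → ℝ) (s : ℝ) (p : P) : ℝ :=
  max (cum x p - s) 0 - max (cumLt x p - s) 0

theorem prA_add_prB (p : P) (s : ℝ) : prA x s p + prB x s p = x p := by
  have key : ∀ c : ℝ, min c s + max (c - s) 0 = c := by
    intro c
    rcases le_total c s with h | h
    · rw [min_eq_left h, max_eq_right (by linarith)]; ring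
    · rw [min_eq_right h, max_eq_left (by linarith)]; ring
  have h1 := key (cum x p)
  have h2 := key (cumLt x p)
  have h3 := cum_sub_cumLt (x := x) p
  unfold prA prB
  linarith

theorem prA_nonneg (hx0 : ∀ p, 0 ≤ x p) (p : P) (s : ℝ) : 0 ≤ prA x s p := by
  unfold prA
  have := cumLt_le_cum hx0 p
  have : min (cumLt x p) s ≤ min (cum x p) s := min_le_min this (le_refl s)
  linarith

theorem prB_nonneg (hx0 : ∀ p, 0 ≤ x p) (p : P) (s : ℝ) : 0 ≤ prB x s p := by
  unfold prB
  have h := cumLt_le_cum hx0 p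
  have : max (cumLt x p - s) 0 ≤ max (cum x p - s) 0 := max_le_max (by linarith) (le_refl 0)
  linarith

theorem prA_ne_zero (hx0 : ∀ p, 0 ≤ x p) {p : P} {s : ℝ} (h : prA x s p ≠ 0) :
    x p ≠ 0 ∧ cumLt x p < s := by
  have hc := cum_sub_cumLt (x := x) p
  constructor
  · intro hxp
    apply h
    unfold prA
    rw [hc, hxp]; ring_nf
  · by_contra hlt
    push_neg at hlt
    apply h
    unfold prA
    rw [min_eq_right hlt, min_eq_right (le_trans hlt (cumLt_le_cum hx0 p))]
    ring

theorem prB_ne_zero (hx0 : ∀ p, 0 ≤ x p) {p : P} {s : ℝ} (h : prB x s p ≠ 0) :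
    x p ≠ 0 ∧ s < cum x p := by
  have hc := cum_sub_cumLt (x := x) p
  constructor
  · intro hxp
    apply h
    unfold prB
    rw [hc, hxp]; ring_nf
  · by_contra hlt
    push_neg at hlt
    apply h
    unfold prB
    rw [max_eq_right (by linarith), max_eq_right
      (by have := cumLt_le_cum hx0 p; linarith)]
    ring

/-- The prism homotopy formula. -/
noncomputable def prH (f g : P → Q) (x : P → ℝ) (s : ℝ) (q : Q) : ℝ :=
  (∑ p ∈ Finset.univ.filter (fun p => f p = q), prA x s p) +
    ∑ p ∈ Finset.univ.filter (fun p => g p = q), prB x s p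

theorem prH_nonneg (hx0 : ∀ p, 0 ≤ x p) (f g : P → Q) (s : ℝ) (q : Q) :
    0 ≤ prH f g x s q :=
  add_nonneg (Finset.sum_nonneg fun i _ => prA_nonneg hx0 i s)
    (Finset.sum_nonneg fun i _ => prB_nonneg hx0 i s)

theorem sum_fiber' (F : P → Q) (w : P → ℝ) :
    ∑ q, ∑ p ∈ Finset.univ.filter (fun p => F p = q), w p = ∑ p, w p := by
  classical
  convert Finset.sum_fiberwise Finset.univ F w using 2 with q

theorem prH_sum (hx1 : ∑ p, x p = 1) (f g : P → Q) (s : ℝ) :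
    ∑ q, prH f g x s q = 1 := by
  unfold prH
  rw [Finset.sum_add_distrib, sum_fiber', sum_fiber', ← Finset.sum_add_distrib]
  rw [← hx1]
  exact Finset.sum_congr rfl fun p _ => prA_add_prB p s



theorem prH_ne_zero (hx0 : ∀ p, 0 ≤ x p) {f g : P → Q} {s : ℝ} {q : Q}
    (h : prH f g x s q ≠ 0) :
    ∃ p, x p ≠ 0 ∧ ((f p = q ∧ cumLt x p < s) ∨ (g p = q ∧ s < cum x p)) := by
  by_contra hc
  push_neg at hc
  apply h
  unfold prH
  rw [Finset.sum_eq_zero, Finset.sum_eq_zero, add_zero]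
  · intro p hp
    simp only [Finset.mem_filter, Finset.mem_univ, true_and] at hp
    by_contra hB
    obtain ⟨hx, hcum⟩ := prB_ne_zero hx0 hB
    exact absurd hcum (not_lt.mpr ((hc p hx).2 hp))
  · intro p hp
    simp only [Finset.mem_filter, Finset.mem_univ, true_and] at hp
    by_contra hA
    obtain ⟨hx, hcum⟩ := prA_ne_zero hx0 hA
    exact absurd hcum (not_lt.mpr ((hc p hx).1 hp))

theorem prH_chain (hx : x ∈ PosetRealization P) (f g : P →o Q)
    (hfg : ∀ p, f p ≤ g p) (s : ℝ) :
    IsChain (· ≤ ·) (Function.support (prH f g x s)) := by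
  obtain ⟨hx0, hx1, hxc⟩ := mem_pr_iff.mp hx
  intro q₁ hq₁ q₂ hq₂ hne
  obtain ⟨p₁, hxp₁, hc₁⟩ := prH_ne_zero hx0 (Function.mem_support.mp hq₁)
  obtain ⟨p₂, hxp₂, hc₂⟩ := prH_ne_zero hx0 (Function.mem_support.mp hq₂)
  have hcomp : p₁ ≤ p₂ ∨ p₂ ≤ p₁ := by
    rcases eq_or_ne p₁ p₂ with rfl | hpne
    · exact Or.inl (le_refl _)
    · rcases hxc hxp₁ hxp₂ hpne with h | h
      · exact Or.inl h
      · exact Or.inr h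
  have key : ∀ p p' : P, cumLt x p < s → s < cum x p' → p' ≤ p →
      f p ≤ g p' ∨ g p' ≤ f p := by
    intro p p' h1 h2 hle
    rcases eq_or_lt_of_le hle with heq | hlt
    · subst heq
      exact Or.inl (hfg _)
    · exfalso
      have := cum_le_cumLt_of_lt hx0 hlt
      linarith
  rcases hc₁ with ⟨hf₁, hA₁⟩ | ⟨hg₁, hB₁⟩ <;> rcases hc₂ with ⟨hf₂, hA₂⟩ | ⟨hg₂, hB₂⟩
  · subst hf₁; subst hf₂
    rcases hcomp with h | h
    · exact Or.inl (f.mono h)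
    · exact Or.inr (f.mono h)
  · subst hf₁; subst hg₂
    rcases hcomp with h | h
    · exact Or.inl (le_trans (f.mono h) (hfg p₂))
    · exact key p₁ p₂ hA₁ hB₂ h
  · subst hg₁; subst hf₂
    rcases hcomp with h | h
    · rcases key p₂ p₁ hA₂ hB₁ h with h' | h'
      · exact Or.inr h'
      · exact Or.inl h'
    · exact Or.inr (le_trans (f.mono h) (hfg p₁))
  · subst hg₁; subst hg₂
    rcases hcomp with h | h
    · exact Or.inl (g.mono h)
    · exact Or.inr (g.mono h)


theorem prH_mem (hx : x ∈ PosetRealization P) (f g : P →o Q)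
    (hfg : ∀ p, f p ≤ g p) (s : ℝ) : prH f g x s ∈ PosetRealization Q := by
  obtain ⟨hx0, hx1, hxc⟩ := mem_pr_iff.mp hx
  exact mem_pr_iff.mpr ⟨prH_nonneg hx0 f g s, prH_sum hx1 f g s, prH_chain hx f g hfg s⟩

theorem prH_at_one (hx0 : ∀ p, 0 ≤ x p) (hx1 : ∑ p, x p = 1) (f g : P → Q) :
    prH f g x 1 = inducedChainMap f x := by
  funext q
  rw [inducedChainMap_eq_sum]
  unfold prH
  have hB : ∑ p ∈ Finset.univ.filter (fun p => g p = q), prB x 1 p = 0 :=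
    Finset.sum_eq_zero fun p _ => by
      unfold prB
      rw [max_eq_right (by have := cum_le_one hx0 hx1 p; linarith),
        max_eq_right (by have := cumLt_le_one hx0 hx1 p; linarith)]
      ring
  have hA : ∑ p ∈ Finset.univ.filter (fun p => f p = q), prA x 1 p =
      ∑ p ∈ Finset.univ.filter (fun p => f p = q), x p :=
    Finset.sum_congr rfl fun p _ => by
      unfold prA
      rw [min_eq_left (cum_le_one hx0 hx1 p), min_eq_left (cumLt_le_one hx0 hx1 p),
        cum_sub_cumLt]
      ring
  rw [hA, hB, add_zero]

theorem prH_at_zero (hx0 : ∀ p, 0 ≤ x p) (f g : P → Q) :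
    prH f g x 0 = inducedChainMap g x := by
  funext q
  rw [inducedChainMap_eq_sum]
  unfold prH
  have hA : ∑ p ∈ Finset.univ.filter (fun p => f p = q), prA x 0 p = 0 :=
    Finset.sum_eq_zero fun p _ => by
      unfold prA
      rw [min_eq_right (cum_nonneg hx0 p), min_eq_right (cumLt_nonneg hx0 p)]
      ring
  have hB : ∑ p ∈ Finset.univ.filter (fun p => g p = q), prB x 0 p =
      ∑ p ∈ Finset.univ.filter (fun p => g p = q), x p :=
    Finset.sum_congr rfl fun p _ => by
      unfold prB
      rw [max_eq_left (by have := cum_nonneg hx0 p; linarith),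
        max_eq_left (by have := cumLt_nonneg hx0 p; linarith), cum_sub_cumLt]
      ring
  rw [hA, hB, zero_add]

theorem continuous_cum_comp (p : P) :
    Continuous (fun x : ↥(PosetRealization P) => cum x.1 p) := by
  unfold cum
  exact continuous_finset_sum _ fun y _ => (continuous_apply y).comp continuous_subtype_val

theorem continuous_cumLt_comp (p : P) :
    Continuous (fun x : ↥(PosetRealization P) => cumLt x.1 p) := by
  unfold cumLt
  exact continuous_finset_sum _ fun y _ => (continuous_apply y).comp continuous_subtype_val

/-- The realization of a monotone map, as a continuous map of realizations. -/
noncomputable def chainMapC (f : P →o Q) :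
    C(↥(PosetRealization P), ↥(PosetRealization Q)) where
  toFun x := ⟨inducedChainMap f x.1, by
    have h := prH_mem x.2 f f (fun _ => le_rfl) 1
    obtain ⟨hx0, hx1, _⟩ := mem_pr_iff.mp x.2
    rwa [prH_at_one hx0 hx1] at h⟩
  continuous_toFun := by
    apply Continuous.subtype_mk
    apply continuous_pi
    intro q
    have : (fun x : ↥(PosetRealization P) => inducedChainMap f x.1 q) =
        fun x => ∑ p ∈ Finset.univ.filter (fun p => f p = q), x.1 p := by
      funext x; exact inducedChainMap_eq_sum f x.1 q
    rw [this]
    exact continuous_finset_sum _ fun y _ => (continuous_apply y).comp continuous_subtype_val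

theorem chainMapC_homotopic (f g : P →o Q) (hfg : f ≤ g) :
    (chainMapC f).Homotopic (chainMapC g) := by
  refine ⟨{
    toFun := fun ts => ⟨prH f g ts.2.1 (1 - ts.1.1), prH_mem ts.2.2 f g hfg _⟩
    continuous_toFun := by
      apply Continuous.subtype_mk
      apply continuous_pi
      intro q
      unfold prH
      have hs : Continuous fun a : ↥unitInterval × ↥(PosetRealization P) =>
          (1 : ℝ) - (a.1 : ℝ) :=
        continuous_const.sub (continuous_subtype_val.comp continuous_fst)
      apply Continuous.add
      · apply continuous_finset_sum
        intro p _
        unfold prA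
        exact (((continuous_cum_comp p).comp continuous_snd).min hs).sub
          (((continuous_cumLt_comp p).comp continuous_snd).min hs)
      · apply continuous_finset_sum
        intro p _
        unfold prB
        exact ((((continuous_cum_comp p).comp continuous_snd).sub hs).max
            continuous_const).sub
          ((((continuous_cumLt_comp p).comp continuous_snd).sub hs).max continuous_const)
    map_zero_left := fun x => by
      obtain ⟨hx0, hx1, _⟩ := mem_pr_iff.mp x.2
      apply Subtype.ext
      simp only [Set.Icc.coe_zero, sub_zero]
      exact prH_at_one hx0 hx1 f g
    map_one_left := fun x => by
      obtain ⟨hx0, _, _⟩ := mem_pr_iff.mp x.2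
      apply Subtype.ext
      simp only [Set.Icc.coe_one, sub_self]
      exact prH_at_zero hx0 f g }⟩

/-- The vertex point of the realization corresponding to `z₀`. -/
noncomputable def vertexPt (z₀ : P) : ↥(PosetRealization P) :=
  ⟨fun q => if z₀ = q then 1 else 0, by
    refine mem_pr_iff.mpr ⟨fun p => by positivity, ?_, ?_⟩
    · rw [Finset.sum_ite_eq Finset.univ z₀ (fun _ => (1 : ℝ))]
      simp
    · intro a ha b hb hne
      exfalso
      apply hne
      have ha' : z₀ = a := by
        by_contra h
        apply Function.mem_support.mp ha
        simp [h]
      have hb' : z₀ = b := by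
        by_contra h
        apply Function.mem_support.mp hb
        simp [h]
      rw [← ha', ← hb']⟩

theorem chainMapC_id : chainMapC (OrderHom.id : P →o P) = ContinuousMap.id _ := by
  ext x q
  show inducedChainMap id x.1 q = x.1 q
  rw [inducedChainMap_eq_sum]
  rw [show Finset.univ.filter (fun p => id p = q) = {q} by ext p; simp [eq_comm]]
  simp

theorem chainMapC_const (z₀ : P) :
    chainMapC (OrderHom.const P z₀) = ContinuousMap.const _ (vertexPt z₀ : ↥(PosetRealization P)) := by
  ext x q
  show inducedChainMap (fun _ => z₀) x.1 q = _
  rw [inducedChainMap_eq_sum]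
  obtain ⟨hx0, hx1, _⟩ := mem_pr_iff.mp x.2
  show _ = if z₀ = q then (1:ℝ) else 0
  by_cases h : z₀ = q
  · rw [if_pos h, show Finset.univ.filter (fun _ : P => z₀ = q) = Finset.univ by
      simp [h], hx1]
  · rw [if_neg h, show Finset.univ.filter (fun _ : P => z₀ = q) = ∅ by
      simp [h]]
    simp

/-- Comparability of monotone self-maps. -/
def CmpRel (P : Type*) [Preorder P] : (P →o P) → (P →o P) → Prop :=
  fun f g => f ≤ g ∨ g ≤ f

/-- A poset is "zigzag dismantlable" if the identity is connected to a constant map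
through a chain of pairwise-comparable monotone self maps. -/
def IsZZ (P : Type*) [PartialOrder P] : Prop :=
  ∃ z₀ : P, Relation.ReflTransGen (CmpRel P) OrderHom.id (OrderHom.const P z₀)

theorem IsZZ.contractibleSpace (h : IsZZ P) :
    ContractibleSpace ↥(PosetRealization P) := by
  obtain ⟨z₀, hrel⟩ := h
  rw [contractible_iff_id_nullhomotopic]
  refine ⟨vertexPt z₀, ?_⟩
  rw [← chainMapC_id, ← chainMapC_const z₀]
  have key : ∀ g : P →o P, Relation.ReflTransGen (CmpRel P) OrderHom.id g →
      (chainMapC (OrderHom.id : P →o P)).Homotopic (chainMapC g) := by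
    intro g hg
    induction hg with
    | refl => exact ContinuousMap.Homotopic.refl _
    | tail _ hstep ih =>
        rcases hstep with hle | hle
        · exact ih.trans (chainMapC_homotopic _ _ hle)
        · exact ih.trans (chainMapC_homotopic _ _ hle).symm
  exact key _ hrel

end Core

section ZZTransport

variable {P Q : Type*} [PartialOrder P] [PartialOrder Q]

/-- conjugation of a monotone self map along an order isomorphism -/
def ohConj (e : P ≃o Q) (f : Q →o Q) : P →o P :=
  ⟨fun p => e.symm (f (e p)), fun a b hab => e.symm.monotone (f.mono (e.monotone hab))⟩

theorem isZZ_of_orderIso (e : P ≃o Q) (h : IsZZ Q) : IsZZ P := by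
  obtain ⟨z₀, hrel⟩ := h
  refine ⟨e.symm z₀, ?_⟩
  have hlift : Relation.ReflTransGen (CmpRel P) (ohConj e OrderHom.id) (ohConj e (OrderHom.const Q z₀)) :=
    Relation.ReflTransGen.lift (r := CmpRel Q) (p := CmpRel P) (ohConj e)
    (fun a b hab => by
      rcases hab with hle | hle
      · exact Or.inl fun p => e.symm.monotone (hle (e p))
      · exact Or.inr fun p => e.symm.monotone (hle (e p))) _ _ hrel
  have h1 : ohConj e OrderHom.id = OrderHom.id := by
    apply OrderHom.ext; funext p; exact e.symm_apply_apply p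
  have h2 : ohConj e (OrderHom.const Q z₀) = OrderHom.const P (e.symm z₀) := by
    apply OrderHom.ext; funext p; rfl
  rwa [h1, h2] at hlift

/-- conjugation along a retraction-like pair -/
def ohSandwich (ρ : P →o Q) (ι : Q →o P) (f : Q →o Q) : P →o P := ι.comp (f.comp ρ)

theorem isZZ_conj (ρ : P →o Q) (ι : Q →o P)
    (hmid : Relation.ReflTransGen (CmpRel P) OrderHom.id (ι.comp ρ))
    (h : IsZZ Q) : IsZZ P := by
  obtain ⟨z₀, hrel⟩ := h
  refine ⟨ι z₀, ?_⟩
  have hlift : Relation.ReflTransGen (CmpRel P) (ohSandwich ρ ι OrderHom.id)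
      (ohSandwich ρ ι (OrderHom.const Q z₀)) :=
    Relation.ReflTransGen.lift (r := CmpRel Q) (p := CmpRel P) (ohSandwich ρ ι)
    (fun a b hab => by
      rcases hab with hle | hle
      · exact Or.inl fun p => ι.monotone (hle (ρ p))
      · exact Or.inr fun p => ι.monotone (hle (ρ p))) _ _ hrel
  have h1 : ohSandwich ρ ι OrderHom.id = ι.comp ρ := by
    apply OrderHom.ext; funext p; rfl
  have h2 : ohSandwich ρ ι (OrderHom.const Q z₀) = OrderHom.const P (ι z₀) := by
    apply OrderHom.ext; funext p; rfl
  rw [h1, h2] at hlift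
  exact hmid.trans hlift

end ZZTransport



/-! ### The abstract grid framework -/

/-- compatibility (nestedness) of trunk brackets, as a relation on `ℕ × ℕ` -/
def kap (p q : ℕ × ℕ) : Prop := (p.1 ≤ q.1 ∧ q.2 ≤ p.2) ∨ (q.1 ≤ p.1 ∧ p.2 ≤ q.2)

instance : DecidableRel kap := fun p q => by unfold kap; infer_instance

theorem kap_refl (p : ℕ × ℕ) : kap p p := Or.inl ⟨le_rfl, le_rfl⟩

theorem kap_symm {p q : ℕ × ℕ} (h : kap p q) : kap q p := h.symm

/-- validity of a bracket system in the grid model -/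
def GridValid (V F : Finset (ℕ × ℕ)) (dL dR : Finset ℕ) (S : Finset (ℕ × ℕ)) : Prop :=
  S ⊆ V ∧ (∀ p ∈ S, ∀ q ∈ S, kap p q) ∧ F ⊆ S ∧
    (∀ a ∈ dL, ∃ p ∈ S, p.1 = a) ∧ (∀ b ∈ dR, ∃ p ∈ S, p.2 = b)

/-- the poset of valid bracket systems -/
def GridPoset (V F : Finset (ℕ × ℕ)) (dL dR : Finset ℕ) : Type :=
  {S : Finset (ℕ × ℕ) // GridValid V F dL dR S}

instance {V F dL dR} : PartialOrder (GridPoset V F dL dR) :=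
  Subtype.partialOrder _

theorem GridPoset.le_iff {V F dL dR} (S S' : GridPoset V F dL dR) :
    S ≤ S' ↔ S.1 ⊆ S'.1 := Iff.rfl

/-- order isomorphism from predicate equivalence -/
def gridIso {V₁ F₁ dL₁ dR₁ V₂ F₂ dL₂ dR₂}
    (h : ∀ S, GridValid V₁ F₁ dL₁ dR₁ S ↔ GridValid V₂ F₂ dL₂ dR₂ S) :
    GridPoset V₁ F₁ dL₁ dR₁ ≃o GridPoset V₂ F₂ dL₂ dR₂ where
  toEquiv := Equiv.subtypeEquiv (Equiv.refl _) (fun S => by simpa using h S)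
  map_rel_iff' := Iff.rfl

theorem zz_of_equiv {V₁ F₁ dL₁ dR₁ V₂ F₂ dL₂ dR₂}
    (h : ∀ S, GridValid V₁ F₁ dL₁ dR₁ S ↔ GridValid V₂ F₂ dL₂ dR₂ S)
    (hz : IsZZ (GridPoset V₂ F₂ dL₂ dR₂)) : IsZZ (GridPoset V₁ F₁ dL₁ dR₁) :=
  isZZ_of_orderIso (gridIso h) hz

theorem zz_terminal {V F dL dR} (hVF : V ⊆ F)
    (hex : ∃ S, GridValid V F dL dR S) : IsZZ (GridPoset V F dL dR) := by
  obtain ⟨S₀, hS₀⟩ := hex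
  have hSF : ∀ S : GridPoset V F dL dR, S.1 = F :=
    fun S => Finset.Subset.antisymm (S.2.1.trans hVF) S.2.2.2.1
  have hF : GridValid V F dL dR F := by
    have h := hSF ⟨S₀, hS₀⟩
    simp only [Subtype.coe_mk] at h
    rwa [h] at hS₀
  refine ⟨⟨F, hF⟩, ?_⟩
  have : (OrderHom.id : GridPoset V F dL dR →o _) =
      OrderHom.const _ (⟨F, hF⟩ : GridPoset V F dL dR) := by
    apply OrderHom.ext
    funext S
    exact Subtype.ext (hSF S)
  rw [this]
  exact Relation.ReflTransGen.refl

/-- drop a row duty witnessed by a frozen element -/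
theorem zz_dropL {V F dL dR} (a : ℕ) (ha : a ∈ dL) (hwit : ∃ p ∈ F, p.1 = a)
    (hz : IsZZ (GridPoset V F (dL.erase a) dR)) : IsZZ (GridPoset V F dL dR) := by
  refine zz_of_equiv (fun S => ?_) hz
  unfold GridValid
  constructor
  · rintro ⟨h1, h2, h3, h4, h5⟩
    exact ⟨h1, h2, h3, fun a' ha' => h4 a' (Finset.mem_of_mem_erase ha'), h5⟩
  · rintro ⟨h1, h2, h3, h4, h5⟩
    refine ⟨h1, h2, h3, fun a' ha' => ?_, h5⟩
    by_cases hee : a' = a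
    · obtain ⟨p, hp, hpa⟩ := hwit
      exact ⟨p, h3 hp, by rw [hpa, hee]⟩
    · exact h4 a' (Finset.mem_erase.mpr ⟨hee, ha'⟩)

/-- drop a column duty witnessed by a frozen element -/
theorem zz_dropR {V F dL dR} (b : ℕ) (hb : b ∈ dR) (hwit : ∃ p ∈ F, p.2 = b)
    (hz : IsZZ (GridPoset V F dL (dR.erase b))) : IsZZ (GridPoset V F dL dR) := by
  refine zz_of_equiv (fun S => ?_) hz
  unfold GridValid
  constructor
  · rintro ⟨h1, h2, h3, h4, h5⟩
    exact ⟨h1, h2, h3, h4, fun b' hb' => h5 b' (Finset.mem_of_mem_erase hb')⟩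
  · rintro ⟨h1, h2, h3, h4, h5⟩
    refine ⟨h1, h2, h3, h4, fun b' hb' => ?_⟩
    by_cases hee : b' = b
    · obtain ⟨p, hp, hpb⟩ := hwit
      exact ⟨p, h3 hp, by rw [hpb, hee]⟩
    · exact h5 b' (Finset.mem_erase.mpr ⟨hee, hb'⟩)

/-- remove a dutyless, unfrozen element -/
theorem zz_remove {V F dL dR} (v : ℕ × ℕ) (hvF : v ∉ F)
    (hdL : v.1 ∉ dL) (hdR : v.2 ∉ dR)
    (hz : IsZZ (GridPoset (V.erase v) F dL dR)) : IsZZ (GridPoset V F dL dR) := by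
  have ρval : ∀ S : GridPoset V F dL dR, GridValid (V.erase v) F dL dR (S.1.erase v) := by
    rintro ⟨S, h1, h2, h3, h4, h5⟩
    refine ⟨fun p hp => ?_, fun p hp q hq => h2 p (Finset.mem_of_mem_erase hp) q
      (Finset.mem_of_mem_erase hq), fun p hp => ?_, fun a ha => ?_, fun b hb => ?_⟩
    · rw [Finset.mem_erase] at hp ⊢
      exact ⟨hp.1, h1 hp.2⟩
    · exact Finset.mem_erase.mpr ⟨fun he => hvF (he ▸ hp), h3 hp⟩
    · obtain ⟨p, hp, hpa⟩ := h4 a ha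
      exact ⟨p, Finset.mem_erase.mpr ⟨fun he => hdL (by rw [he] at hpa; rw [hpa]; exact ha), hp⟩, hpa⟩
    · obtain ⟨p, hp, hpb⟩ := h5 b hb
      exact ⟨p, Finset.mem_erase.mpr ⟨fun he => hdR (by rw [he] at hpb; rw [hpb]; exact hb), hp⟩, hpb⟩
  have ιval : ∀ S : GridPoset (V.erase v) F dL dR, GridValid V F dL dR S.1 := by
    rintro ⟨S, h1, h2, h3, h4, h5⟩
    exact ⟨fun p hp => Finset.mem_of_mem_erase (h1 hp), h2, h3, h4, h5⟩
  refine isZZ_conj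
    ⟨fun S => ⟨S.1.erase v, ρval S⟩, fun S S' h => Finset.erase_subset_erase v h⟩
    ⟨fun S => ⟨S.1, ιval S⟩, fun S S' h => h⟩ ?_ hz
  exact Relation.ReflTransGen.single (Or.inr fun S => Finset.erase_subset v S.1)

/-- force in a universally compatible element -/
theorem zz_forceIn {V F dL dR} (v : ℕ × ℕ) (hv : v ∈ V) (huniv : ∀ u ∈ V, kap u v)
    (hz : IsZZ (GridPoset V (insert v F) (dL.erase v.1) (dR.erase v.2))) :
    IsZZ (GridPoset V F dL dR) := by
  have ρval : ∀ S : GridPoset V F dL dR,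
      GridValid V (insert v F) (dL.erase v.1) (dR.erase v.2) (insert v S.1) := by
    rintro ⟨S, h1, h2, h3, h4, h5⟩
    refine ⟨Finset.insert_subset hv h1, fun p hp q hq => ?_, Finset.insert_subset_insert _ h3,
      fun a ha => ?_, fun b hb => ?_⟩
    · rw [Finset.mem_insert] at hp hq
      rcases hp with rfl | hp <;> rcases hq with rfl | hq
      · exact kap_refl _
      · exact kap_symm (huniv q (h1 hq))
      · exact huniv p (h1 hp)
      · exact h2 p hp q hq
    · obtain ⟨p, hp, hpa⟩ := h4 a (Finset.mem_of_mem_erase ha)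
      exact ⟨p, Finset.mem_insert_of_mem hp, hpa⟩
    · obtain ⟨p, hp, hpb⟩ := h5 b (Finset.mem_of_mem_erase hb)
      exact ⟨p, Finset.mem_insert_of_mem hp, hpb⟩
  have ιval : ∀ S : GridPoset V (insert v F) (dL.erase v.1) (dR.erase v.2),
      GridValid V F dL dR S.1 := by
    rintro ⟨S, h1, h2, h3, h4, h5⟩
    have hvS : v ∈ S := h3 (Finset.mem_insert_self v F)
    refine ⟨h1, h2, fun p hp => h3 (Finset.mem_insert_of_mem hp), fun a ha => ?_,
      fun b hb => ?_⟩
    · by_cases hav : a = v.1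
      · exact ⟨v, hvS, hav.symm⟩
      · exact h4 a (Finset.mem_erase.mpr ⟨hav, ha⟩)
    · by_cases hbv : b = v.2
      · exact ⟨v, hvS, hbv.symm⟩
      · exact h5 b (Finset.mem_erase.mpr ⟨hbv, hb⟩)
  refine isZZ_conj
    ⟨fun S => ⟨insert v S.1, ρval S⟩, fun S S' h => Finset.insert_subset_insert _ h⟩
    ⟨fun S => ⟨S.1, ιval S⟩, fun S S' h => h⟩ ?_ hz
  exact Relation.ReflTransGen.single (Or.inl fun S => Finset.subset_insert v S.1)

/-- promote a forced element (unique witness of a row duty) to a frozen element,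
pruning elements incompatible with it -/
theorem zz_promote {V F dL dR} (v : ℕ × ℕ) (hdL : v.1 ∈ dL)
    (hunique : ∀ p ∈ V, p.1 = v.1 → p = v)
    (hz : IsZZ (GridPoset (V.filter (fun p => kap p v)) (insert v F)
      (dL.erase v.1) (dR.erase v.2))) :
    IsZZ (GridPoset V F dL dR) := by
  refine zz_of_equiv (fun S => ?_) hz
  constructor
  · rintro ⟨h1, h2, h3, h4, h5⟩
    obtain ⟨p, hp, hpa⟩ := h4 v.1 hdL
    have hpv : p = v := hunique p (h1 hp) hpa
    subst hpv
    refine ⟨fun q hq => Finset.mem_filter.mpr ⟨h1 hq, h2 q hq p hp⟩,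
      h2, Finset.insert_subset hp h3, fun a ha => h4 a (Finset.mem_of_mem_erase ha),
      fun b hb => h5 b (Finset.mem_of_mem_erase hb)⟩
  · rintro ⟨h1, h2, h3, h4, h5⟩
    have hvS : v ∈ S := h3 (Finset.mem_insert_self v F)
    refine ⟨fun q hq => (Finset.mem_filter.mp (h1 hq)).1, h2,
      fun p hp => h3 (Finset.mem_insert_of_mem hp), fun a ha => ?_, fun b hb => ?_⟩
    · by_cases hav : a = v.1
      · exact ⟨v, hvS, hav.symm⟩
      · exact h4 a (Finset.mem_erase.mpr ⟨hav, ha⟩)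
    · by_cases hbv : b = v.2
      · exact ⟨v, hvS, hbv.symm⟩
      · exact h5 b (Finset.mem_erase.mpr ⟨hbv, hb⟩)

/-- transfer: a duty-row element at the minimal column is slid to the next column,
then removed. -/
theorem zz_transfer {V F dL dR} (v w : ℕ × ℕ) (hw : w ∈ V) (hvw : v ≠ w) (hvF : v ∉ F)
    (hdom : ∀ u ∈ V, kap u v → kap u w)
    (hdL : w.1 = v.1) (hdR : v.2 ∉ dR)
    (hz : IsZZ (GridPoset (V.erase v) F dL dR)) : IsZZ (GridPoset V F dL dR) := by
  classical
  have αval : ∀ S : GridPoset V F dL dR,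
      GridValid V F dL dR (if v ∈ S.1 then insert w S.1 else S.1) := by
    rintro ⟨S, h1, h2, h3, h4, h5⟩
    by_cases hvS : v ∈ S
    · rw [if_pos hvS]
      refine ⟨Finset.insert_subset hw h1, fun p hp q hq => ?_,
        h3.trans (Finset.subset_insert _ _), fun a ha => ?_, fun b hb => ?_⟩
      · rw [Finset.mem_insert] at hp hq
        rcases hp with rfl | hp <;> rcases hq with rfl | hq
        · exact kap_refl _
        · exact kap_symm (hdom q (h1 hq) (h2 q hq v hvS))
        · exact hdom p (h1 hp) (h2 p hp v hvS)
        · exact h2 p hp q hq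
      · obtain ⟨p, hp, hpa⟩ := h4 a ha
        exact ⟨p, Finset.mem_insert_of_mem hp, hpa⟩
      · obtain ⟨p, hp, hpb⟩ := h5 b hb
        exact ⟨p, Finset.mem_insert_of_mem hp, hpb⟩
    · rw [if_neg hvS]
      exact ⟨h1, h2, h3, h4, h5⟩
  have αmono : ∀ S S' : GridPoset V F dL dR, S ≤ S' →
      (if v ∈ S.1 then insert w S.1 else S.1) ⊆
        (if v ∈ S'.1 then insert w S'.1 else S'.1) := by
    rintro ⟨S, _⟩ ⟨S', _⟩ h
    have h' : S ⊆ S' := h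
    by_cases hvS : v ∈ S
    · rw [if_pos hvS, if_pos (h' hvS)]
      exact Finset.insert_subset_insert _ h'
    · rw [if_neg hvS]
      by_cases hvS' : v ∈ S'
      · rw [if_pos hvS']
        exact fun x hx => Finset.mem_insert_of_mem (h' hx)
      · rw [if_neg hvS']
        exact h'
  have ρval : ∀ S : GridPoset V F dL dR,
      GridValid (V.erase v) F dL dR ((if v ∈ S.1 then insert w S.1 else S.1).erase v) := by
    intro S
    obtain ⟨h1', h2', h3', h4', h5'⟩ := αval S
    refine ⟨fun p hp => ?_, fun p hp q hq => h2' p (Finset.mem_of_mem_erase hp) q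
      (Finset.mem_of_mem_erase hq), fun p hp => ?_, fun a ha => ?_, fun b hb => ?_⟩
    · rw [Finset.mem_erase] at hp ⊢
      exact ⟨hp.1, h1' hp.2⟩
    · exact Finset.mem_erase.mpr ⟨fun he => hvF (he ▸ hp), h3' hp⟩
    · obtain ⟨p, hp, hpa⟩ := h4' a ha
      by_cases hpv : p = v
      · subst hpv
        have hpS : p ∈ S.1 := by
          by_contra hn
          rw [if_neg hn] at hp
          exact hn hp
        refine ⟨w, Finset.mem_erase.mpr ⟨Ne.symm hvw, ?_⟩, by rw [hdL, hpa]⟩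
        rw [if_pos hpS]
        exact Finset.mem_insert_self w S.1
      · exact ⟨p, Finset.mem_erase.mpr ⟨hpv, hp⟩, hpa⟩
    · obtain ⟨p, hp, hpb⟩ := h5' b hb
      have hpv : p ≠ v := fun he => hdR (by rw [he] at hpb; rw [hpb]; exact hb)
      exact ⟨p, Finset.mem_erase.mpr ⟨hpv, hp⟩, hpb⟩
  have ιval : ∀ S : GridPoset (V.erase v) F dL dR, GridValid V F dL dR S.1 := by
    rintro ⟨S, h1, h2, h3, h4, h5⟩
    exact ⟨fun p hp => Finset.mem_of_mem_erase (h1 hp), h2, h3, h4, h5⟩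
  set A : GridPoset V F dL dR →o GridPoset V F dL dR :=
    ⟨fun S => ⟨if v ∈ S.1 then insert w S.1 else S.1, αval S⟩,
      fun S S' h => αmono S S' h⟩ with hA
  refine isZZ_conj
    ⟨fun S => ⟨(if v ∈ S.1 then insert w S.1 else S.1).erase v, ρval S⟩,
      fun S S' h => Finset.erase_subset_erase v (αmono S S' h)⟩
    ⟨fun S => ⟨S.1, ιval S⟩, fun S S' h => h⟩ ?_ hz
  refine Relation.ReflTransGen.tail (b := A)
    (Relation.ReflTransGen.single (Or.inl ?_)) (Or.inr ?_)
  · intro S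
    show S.1 ⊆ (if v ∈ S.1 then insert w S.1 else S.1)
    by_cases hvS : v ∈ S.1
    · rw [if_pos hvS]
      exact Finset.subset_insert _ _
    · rw [if_neg hvS]
  · intro S
    show Finset.erase _ v ⊆ (if v ∈ S.1 then insert w S.1 else S.1)
    exact Finset.erase_subset _ _

/-! ### validity transport helpers -/

theorem not_kap_iff {p q : ℕ × ℕ} :
    ¬kap p q ↔ (p.1 < q.1 ∧ p.2 < q.2) ∨ (q.1 < p.1 ∧ q.2 < p.2) := by
  unfold kap; omega

theorem gridValid_mono_duty {V F : Finset (ℕ × ℕ)} {dL dR dL' dR' : Finset ℕ}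
    {S : Finset (ℕ × ℕ)} (hL : dL' ⊆ dL) (hR : dR' ⊆ dR)
    (h : GridValid V F dL dR S) : GridValid V F dL' dR' S :=
  ⟨h.1, h.2.1, h.2.2.1, fun a ha => h.2.2.2.1 a (hL ha), fun b hb => h.2.2.2.2 b (hR hb)⟩

theorem gridValid_erase {V F : Finset (ℕ × ℕ)} {dL dR : Finset ℕ} {S : Finset (ℕ × ℕ)}
    (v : ℕ × ℕ) (hvF : v ∉ F) (hdL : v.1 ∉ dL) (hdR : v.2 ∉ dR)
    (h : GridValid V F dL dR S) : GridValid (V.erase v) F dL dR (S.erase v) := by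
  obtain ⟨h1, h2, h3, h4, h5⟩ := h
  refine ⟨fun p hp => ?_, fun p hp q hq => h2 p (Finset.mem_of_mem_erase hp) q
    (Finset.mem_of_mem_erase hq), fun p hp => ?_, fun a ha => ?_, fun b hb => ?_⟩
  · rw [Finset.mem_erase] at hp ⊢
    exact ⟨hp.1, h1 hp.2⟩
  · exact Finset.mem_erase.mpr ⟨fun he => hvF (he ▸ hp), h3 hp⟩
  · obtain ⟨p, hp, hpa⟩ := h4 a ha
    exact ⟨p, Finset.mem_erase.mpr ⟨fun he => hdL (by rw [he] at hpa; rw [hpa]; exact ha), hp⟩, hpa⟩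
  · obtain ⟨p, hp, hpb⟩ := h5 b hb
    exact ⟨p, Finset.mem_erase.mpr ⟨fun he => hdR (by rw [he] at hpb; rw [hpb]; exact hb), hp⟩, hpb⟩

theorem gridValid_insert {V F : Finset (ℕ × ℕ)} {dL dR : Finset ℕ} {S : Finset (ℕ × ℕ)}
    (v : ℕ × ℕ) (hv : v ∈ V) (huniv : ∀ u ∈ V, kap u v)
    (h : GridValid V F dL dR S) :
    GridValid V (insert v F) (dL.erase v.1) (dR.erase v.2) (insert v S) := by
  obtain ⟨h1, h2, h3, h4, h5⟩ := h
  refine ⟨Finset.insert_subset hv h1, fun p hp q hq => ?_,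
    Finset.insert_subset_insert _ h3, fun a ha => ?_, fun b hb => ?_⟩
  · rw [Finset.mem_insert] at hp hq
    rcases hp with rfl | hp <;> rcases hq with rfl | hq
    · exact kap_refl _
    · exact kap_symm (huniv q (h1 hq))
    · exact huniv p (h1 hp)
    · exact h2 p hp q hq
  · obtain ⟨p, hp, hpa⟩ := h4 a (Finset.mem_of_mem_erase ha)
    exact ⟨p, Finset.mem_insert_of_mem hp, hpa⟩
  · obtain ⟨p, hp, hpb⟩ := h5 b (Finset.mem_of_mem_erase hb)
    exact ⟨p, Finset.mem_insert_of_mem hp, hpb⟩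

theorem gridValid_promote {V F : Finset (ℕ × ℕ)} {dL dR : Finset ℕ} {S : Finset (ℕ × ℕ)}
    (v : ℕ × ℕ) (hdL : v.1 ∈ dL) (hunique : ∀ p ∈ V, p.1 = v.1 → p = v)
    (h : GridValid V F dL dR S) :
    GridValid (V.filter (fun p => kap p v)) (insert v F) (dL.erase v.1) (dR.erase v.2) S := by
  obtain ⟨h1, h2, h3, h4, h5⟩ := h
  obtain ⟨p, hp, hpa⟩ := h4 v.1 hdL
  have hpv : p = v := hunique p (h1 hp) hpa
  subst hpv
  exact ⟨fun q hq => Finset.mem_filter.mpr ⟨h1 hq, h2 q hq p hp⟩,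
    h2, Finset.insert_subset hp h3, fun a ha => h4 a (Finset.mem_of_mem_erase ha),
    fun b hb => h5 b (Finset.mem_of_mem_erase hb)⟩

theorem gridValid_transfer {V F : Finset (ℕ × ℕ)} {dL dR : Finset ℕ} {S : Finset (ℕ × ℕ)}
    (v w : ℕ × ℕ) (hw : w ∈ V) (hvw : v ≠ w) (hvF : v ∉ F)
    (hdom : ∀ u ∈ V, kap u v → kap u w) (hdL : w.1 = v.1) (hdR : v.2 ∉ dR)
    (h : GridValid V F dL dR S) :
    GridValid (V.erase v) F dL dR ((if v ∈ S then insert w S else S).erase v) := by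
  classical
  obtain ⟨h1, h2, h3, h4, h5⟩ := h
  have hval : GridValid V F dL dR (if v ∈ S then insert w S else S) := by
    by_cases hvS : v ∈ S
    · rw [if_pos hvS]
      refine ⟨Finset.insert_subset hw h1, fun p hp q hq => ?_,
        h3.trans (Finset.subset_insert _ _), fun a ha => ?_, fun b hb => ?_⟩
      · rw [Finset.mem_insert] at hp hq
        rcases hp with rfl | hp <;> rcases hq with rfl | hq
        · exact kap_refl _
        · exact kap_symm (hdom q (h1 hq) (h2 q hq v hvS))
        · exact hdom p (h1 hp) (h2 p hp v hvS)
        · exact h2 p hp q hq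
      · obtain ⟨p, hp, hpa⟩ := h4 a ha
        exact ⟨p, Finset.mem_insert_of_mem hp, hpa⟩
      · obtain ⟨p, hp, hpb⟩ := h5 b hb
        exact ⟨p, Finset.mem_insert_of_mem hp, hpb⟩
    · rw [if_neg hvS]
      exact ⟨h1, h2, h3, h4, h5⟩
  obtain ⟨h1', h2', h3', h4', h5'⟩ := hval
  refine ⟨fun p hp => ?_, fun p hp q hq => h2' p (Finset.mem_of_mem_erase hp) q
    (Finset.mem_of_mem_erase hq), fun p hp => ?_, fun a ha => ?_, fun b hb => ?_⟩
  · rw [Finset.mem_erase] at hp ⊢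
    exact ⟨hp.1, h1' hp.2⟩
  · exact Finset.mem_erase.mpr ⟨fun he => hvF (he ▸ hp), h3' hp⟩
  · obtain ⟨p, hp, hpa⟩ := h4' a ha
    by_cases hpv : p = v
    · subst hpv
      have hpS : p ∈ S := by
        by_contra hn
        rw [if_neg hn] at hp
        exact hn hp
      refine ⟨w, Finset.mem_erase.mpr ⟨Ne.symm hvw, ?_⟩, by rw [hdL, hpa]⟩
      rw [if_pos hpS]
      exact Finset.mem_insert_self w S
    · exact ⟨p, Finset.mem_erase.mpr ⟨hpv, hp⟩, hpa⟩
  · obtain ⟨p, hp, hpb⟩ := h5' b hb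
    have hpv : p ≠ v := fun he => hdR (by rw [he] at hpb; rw [hpb]; exact hb)
    exact ⟨p, Finset.mem_erase.mpr ⟨hpv, hp⟩, hpb⟩

/-- the termination measure -/
def gmeas (V F : Finset (ℕ × ℕ)) (dL dR : Finset ℕ) : ℕ :=
  (V \ F).card * (dL.card + dR.card + 1) + dL.card + dR.card

theorem gmeas_lt_duty {V F : Finset (ℕ × ℕ)} {dL dR dL' dR' : Finset ℕ}
    (h : dL'.card + dR'.card < dL.card + dR.card) :
    gmeas V F dL' dR' < gmeas V F dL dR := by
  unfold gmeas
  have := Nat.mul_le_mul_left (V \ F).card (show dL'.card + dR'.card + 1 ≤ dL.card + dR.card + 1 by omega)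
  omega

theorem gmeas_lt_card {V F V' F' : Finset (ℕ × ℕ)} {dL dR dL' dR' : Finset ℕ}
    (h : (V' \ F').card < (V \ F).card)
    (hL : dL'.card ≤ dL.card) (hR : dR'.card ≤ dR.card) :
    gmeas V' F' dL' dR' < gmeas V F dL dR := by
  unfold gmeas
  have h1 : (V' \ F').card * (dL'.card + dR'.card + 1) ≤
      ((V \ F).card - 1) * (dL.card + dR.card + 1) :=
    Nat.mul_le_mul (by omega) (by omega)
  have h2 : ((V \ F).card - 1) * (dL.card + dR.card + 1) =
      (V \ F).card * (dL.card + dR.card + 1) - (dL.card + dR.card + 1) := by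
    rw [Nat.sub_mul, one_mul]
  have h3 : dL.card + dR.card + 1 ≤ (V \ F).card * (dL.card + dR.card + 1) :=
    Nat.le_mul_of_pos_left _ (by omega)
  omega



/-! ### The grid algorithm -/

set_option maxHeartbeats 1600000 in
theorem grid_alg (A B : Finset ℕ) (hA : A.Nonempty) (hB : B.Nonempty) :
    ∀ μ : ℕ, ∀ V F H : Finset (ℕ × ℕ), ∀ dL dR : Finset ℕ,
      gmeas V F dL dR ≤ μ →
      V ⊆ (A ×ˢ B).erase (A.min' hA, B.max' hB) →
      F ⊆ V →
      (∀ p ∈ V, ∀ q ∈ F, kap p q) →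
      (∀ p ∈ (A ×ˢ B).erase (A.min' hA, B.max' hB), (∀ q ∈ F, kap p q) → p ∉ H → p ∈ V) →
      (∀ p ∈ H, ∀ q ∈ V \ F, p.2 < q.2 ∨ (p.2 = q.2 ∧ p.1 < q.1)) →
      (∀ a ∈ dL, a ∈ A ∧ A.min' hA < a) →
      (∀ b ∈ dR, b ∈ B ∧ b < B.max' hB) →
      (∃ S, GridValid V F dL dR S) →
      IsZZ (GridPoset V F dL dR) := by
  intro μ
  induction μ using Nat.strong_induction_on with
  | _ μ ih =>
  intro V F H dL dR hμ I1 I2 I3 I4 I5 I6L I6R I7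
  classical
  -- C1 : some row duty has a frozen witness
  by_cases hC1 : ∃ a ∈ dL, ∃ p ∈ F, p.1 = a
  · obtain ⟨a, ha, hwit⟩ := hC1
    refine zz_dropL a ha hwit ?_
    have hcard : (dL.erase a).card + dR.card < dL.card + dR.card := by
      have h1 := Finset.card_erase_of_mem ha
      have h2 : 0 < dL.card := Finset.card_pos.mpr ⟨a, ha⟩
      omega
    obtain ⟨S, hS⟩ := I7
    exact ih (gmeas V F (dL.erase a) dR) (lt_of_lt_of_le (gmeas_lt_duty hcard) hμ)
      V F H (dL.erase a) dR le_rfl I1 I2 I3 I4 I5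
      (fun a' ha' => I6L a' (Finset.mem_of_mem_erase ha')) I6R
      ⟨S, gridValid_mono_duty (Finset.erase_subset _ _) (Finset.Subset.refl _) hS⟩
  -- C2 : some column duty has a frozen witness
  by_cases hC2 : ∃ b ∈ dR, ∃ p ∈ F, p.2 = b
  · obtain ⟨b, hb, hwit⟩ := hC2
    refine zz_dropR b hb hwit ?_
    have hcard : dL.card + (dR.erase b).card < dL.card + dR.card := by
      have h1 := Finset.card_erase_of_mem hb
      have h2 : 0 < dR.card := Finset.card_pos.mpr ⟨b, hb⟩
      omega
    obtain ⟨S, hS⟩ := I7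
    exact ih (gmeas V F dL (dR.erase b)) (lt_of_lt_of_le (gmeas_lt_duty hcard) hμ)
      V F H dL (dR.erase b) le_rfl I1 I2 I3 I4 I5 I6L
      (fun b' hb' => I6R b' (Finset.mem_of_mem_erase hb'))
      ⟨S, gridValid_mono_duty (Finset.Subset.refl _) (Finset.erase_subset _ _) hS⟩
  -- C3 : terminal case
  by_cases hVF : V \ F = ∅
  · exact zz_terminal (fun p hp => by
      by_contra hn
      exact (Finset.eq_empty_iff_forall_notMem.mp hVF p) (Finset.mem_sdiff.mpr ⟨hp, hn⟩)) I7
  -- main case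
  have hVFne : (V \ F).Nonempty := Finset.nonempty_iff_ne_empty.mpr hVF
  have himg : ((V \ F).image Prod.snd).Nonempty := hVFne.image _
  set bs := ((V \ F).image Prod.snd).min' himg with hbsdef
  have hbsmin : ∀ q ∈ V \ F, bs ≤ q.2 := fun q hq =>
    Finset.min'_le _ _ (Finset.mem_image_of_mem _ hq)
  obtain ⟨q0, hq0, hq0b⟩ := Finset.mem_image.mp (Finset.min'_mem _ himg)
  have hq0V : q0 ∈ V := (Finset.mem_sdiff.mp hq0).1
  have hq0F : q0 ∉ F := (Finset.mem_sdiff.mp hq0).2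
  have hcolne : ((V.filter (fun p => p.2 = bs)).image Prod.fst).Nonempty :=
    (Finset.Nonempty.image ⟨q0, Finset.mem_filter.mpr ⟨hq0V, hq0b⟩⟩ _)
  set aT := ((V.filter (fun p => p.2 = bs)).image Prod.fst).max' hcolne with haTdef
  have hvT : (aT, bs) ∈ V := by
    obtain ⟨p, hp, hp1⟩ := Finset.mem_image.mp (Finset.max'_mem _ hcolne)
    obtain ⟨hpV, hp2⟩ := Finset.mem_filter.mp hp
    have hpe : p = (aT, bs) := Prod.ext hp1 hp2
    rwa [hpe] at hpV
  have haTmax : ∀ p ∈ V, p.2 = bs → p.1 ≤ aT := fun p hp h2 =>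
    Finset.le_max' _ _ (Finset.mem_image_of_mem _ (Finset.mem_filter.mpr ⟨hp, h2⟩))
  have hbsB : bs ∈ B := by
    have := I1 hvT
    rw [Finset.mem_erase, Finset.mem_product] at this
    exact this.2.2
  have haTA : aT ∈ A := by
    have := I1 hvT
    rw [Finset.mem_erase, Finset.mem_product] at this
    exact this.2.1
  by_cases hTop : (aT, bs) ∈ F
  case neg =>
    -- C4a : force in the top of the minimal column
    have hvTVF : (aT, bs) ∈ V \ F := Finset.mem_sdiff.mpr ⟨hvT, hTop⟩
    have huniv : ∀ u ∈ V, kap u (aT, bs) := by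
      intro u hu
      by_cases huF : u ∈ F
      · exact kap_symm (I3 _ hvT u huF)
      · have huVF : u ∈ V \ F := Finset.mem_sdiff.mpr ⟨hu, huF⟩
        have hub : bs ≤ u.2 := hbsmin u huVF
        by_contra hk
        rw [not_kap_iff] at hk
        simp only at hk
        have hk' : aT < u.1 ∧ bs < u.2 := by omega
        have huA : u.1 ∈ A := by
          have := I1 hu
          rw [Finset.mem_erase, Finset.mem_product] at this
          exact this.2.1
        have hrect : ((u.1 : ℕ), bs) ∈ (A ×ˢ B).erase (A.min' hA, B.max' hB) := by
          rw [Finset.mem_erase, Finset.mem_product]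
          refine ⟨fun he => ?_, huA, hbsB⟩
          have h1 : u.1 = A.min' hA := congrArg Prod.fst he
          have h2 : A.min' hA ≤ aT := Finset.min'_le _ _ haTA
          omega
        have halive : ∀ fz ∈ F, kap (u.1, bs) fz := by
          intro fz hfz
          have h1 := I3 u hu fz hfz
          have h2 := I3 (aT, bs) hvT fz hfz
          unfold kap at h1 h2 ⊢
          simp only at h1 h2 ⊢
          omega
        have hnotH : ((u.1 : ℕ), bs) ∉ H := by
          intro hH
          have := I5 _ hH (aT, bs) hvTVF
          simp only at this
          omega
        have hmem := I4 _ hrect halive hnotH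
        have := haTmax _ hmem rfl
        simp only at this
        omega
    refine zz_forceIn (aT, bs) hvT huniv ?_
    have hsd : V \ insert (aT, bs) F = (V \ F).erase (aT, bs) := by
      ext p
      simp only [Finset.mem_sdiff, Finset.mem_insert, Finset.mem_erase]
      tauto
    have hcard : (V \ insert (aT, bs) F).card < (V \ F).card := by
      rw [hsd, Finset.card_erase_of_mem hvTVF]
      have : 0 < (V \ F).card := Finset.card_pos.mpr hVFne
      omega
    obtain ⟨S, hS⟩ := I7
    refine ih (gmeas V (insert (aT, bs) F) (dL.erase aT) (dR.erase bs))
      (lt_of_lt_of_le (gmeas_lt_card hcard (Finset.card_le_card (Finset.erase_subset _ _))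
        (Finset.card_le_card (Finset.erase_subset _ _))) hμ)
      V (insert (aT, bs) F) H (dL.erase aT) (dR.erase bs) le_rfl I1
      (Finset.insert_subset hvT I2)
      (fun p hp q hq => by
        rw [Finset.mem_insert] at hq
        rcases hq with rfl | hq
        · exact huniv p hp
        · exact I3 p hp q hq)
      (fun p hp halive hH => I4 p hp
        (fun q hq => halive q (Finset.mem_insert_of_mem hq)) hH)
      (fun p hp q hq => I5 p hp q (by
        rw [Finset.mem_sdiff] at hq ⊢
        exact ⟨hq.1, fun hqF => hq.2 (Finset.mem_insert_of_mem hqF)⟩))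
      (fun a' ha' => I6L a' (Finset.mem_of_mem_erase ha'))
      (fun b' hb' => I6R b' (Finset.mem_of_mem_erase hb'))
      ⟨insert (aT, bs) S, gridValid_insert _ hvT huniv hS⟩
  case pos =>
    -- C4b : the top of the minimal column is frozen
    have hbsdR : bs ∉ dR := fun h => hC2 ⟨bs, h, (aT, bs), hTop, rfl⟩
    have hcolFne : (((V \ F).filter (fun p => p.2 = bs)).image Prod.fst).Nonempty :=
      Finset.Nonempty.image ⟨q0, Finset.mem_filter.mpr ⟨hq0, hq0b⟩⟩ _
    set aB := (((V \ F).filter (fun p => p.2 = bs)).image Prod.fst).min' hcolFne with haBdef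
    have hvB : (aB, bs) ∈ V \ F := by
      obtain ⟨p, hp, hp1⟩ := Finset.mem_image.mp (Finset.min'_mem _ hcolFne)
      obtain ⟨hpV, hp2⟩ := Finset.mem_filter.mp hp
      have hpe : p = (aB, bs) := Prod.ext hp1 hp2
      rwa [hpe] at hpV
    have hvBV : (aB, bs) ∈ V := (Finset.mem_sdiff.mp hvB).1
    have hvBF : (aB, bs) ∉ F := (Finset.mem_sdiff.mp hvB).2
    have haBmin : ∀ q ∈ V \ F, q.2 = bs → aB ≤ q.1 := fun q hq h2 =>
      Finset.min'_le _ _ (Finset.mem_image_of_mem _ (Finset.mem_filter.mpr ⟨hq, h2⟩))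
    have haBA : aB ∈ A := by
      have := I1 hvBV
      rw [Finset.mem_erase, Finset.mem_product] at this
      exact this.2.1
    -- shared recursion for the "erase v, add hole v" steps
    have hsd : V.erase (aB, bs) \ F = (V \ F).erase (aB, bs) := by
      ext p
      simp only [Finset.mem_sdiff, Finset.mem_erase]
      tauto
    have eraseRec : (∃ S, GridValid (V.erase (aB, bs)) F dL dR S) →
        IsZZ (GridPoset (V.erase (aB, bs)) F dL dR) := by
      intro hex
      have hcard : (V.erase (aB, bs) \ F).card < (V \ F).card := by
        rw [hsd, Finset.card_erase_of_mem hvB]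
        have : 0 < (V \ F).card := Finset.card_pos.mpr hVFne
        omega
      refine ih (gmeas (V.erase (aB, bs)) F dL dR)
        (lt_of_lt_of_le (gmeas_lt_card hcard le_rfl le_rfl) hμ)
        (V.erase (aB, bs)) F (insert (aB, bs) H) dL dR le_rfl
        ((Finset.erase_subset _ _).trans I1)
        (fun p hp => Finset.mem_erase.mpr ⟨fun he => hvBF (he ▸ hp), I2 hp⟩)
        (fun p hp q hq => I3 p (Finset.mem_of_mem_erase hp) q hq)
        (fun p hp halive hH => by
          rw [Finset.mem_insert] at hH
          push_neg at hH
          exact Finset.mem_erase.mpr ⟨hH.1, I4 p hp halive hH.2⟩)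
        (fun p hp q hq => by
          rw [hsd] at hq
          rw [Finset.mem_insert] at hp
          rcases hp with rfl | hp
          · rw [Finset.mem_erase] at hq
            have hq' := hq.2
            have hbsq := hbsmin q hq'
            simp only
            by_cases hqb : q.2 = bs
            · have := haBmin q hq' hqb
              have hne : q.1 ≠ aB := by
                intro he
                exact hq.1 (Prod.ext he hqb)
              omega
            · omega
          · exact I5 p hp q (Finset.mem_of_mem_erase hq))
        I6L I6R hex
    by_cases hdla : aB ∈ dL
    case neg =>
      -- dutyless : remove
      obtain ⟨S, hS⟩ := I7
      exact zz_remove (aB, bs) hvBF hdla hbsdR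
        (eraseRec ⟨S.erase (aB, bs), gridValid_erase _ hvBF hdla hbsdR hS⟩)
    case pos =>
      by_cases hrn : (V.filter (fun p => p.1 = aB ∧ bs < p.2)).Nonempty
      case neg =>
        -- promote : v is the unique row witness
        have hunique : ∀ p ∈ V, p.1 = aB → p = (aB, bs) := by
          intro p hp hp1
          by_cases hpF : p ∈ F
          · exact absurd ⟨aB, hdla, p, hpF, hp1⟩ hC1
          · have hpVF : p ∈ V \ F := Finset.mem_sdiff.mpr ⟨hp, hpF⟩
            have := hbsmin p hpVF
            by_cases hpb : p.2 = bs
            · exact Prod.ext hp1 hpb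
            · exact absurd ⟨p, Finset.mem_filter.mpr ⟨hp, hp1, by omega⟩⟩ hrn
        refine zz_promote (aB, bs) hdla hunique ?_
        have hsub : V.filter (fun p => kap p (aB, bs)) \ insert (aB, bs) F ⊆
            (V \ F).erase (aB, bs) := by
          intro p hp
          rw [Finset.mem_sdiff, Finset.mem_filter, Finset.mem_insert] at hp
          push_neg at hp
          exact Finset.mem_erase.mpr ⟨hp.2.1, Finset.mem_sdiff.mpr ⟨hp.1.1, hp.2.2⟩⟩
        have hcard : (V.filter (fun p => kap p (aB, bs)) \ insert (aB, bs) F).card <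
            (V \ F).card := by
          have h1 := Finset.card_le_card hsub
          rw [Finset.card_erase_of_mem hvB] at h1
          have : 0 < (V \ F).card := Finset.card_pos.mpr hVFne
          omega
        obtain ⟨S, hS⟩ := I7
        refine ih (gmeas (V.filter (fun p => kap p (aB, bs))) (insert (aB, bs) F)
            (dL.erase aB) (dR.erase bs))
          (lt_of_lt_of_le (gmeas_lt_card hcard
            (Finset.card_le_card (Finset.erase_subset _ _))
            (Finset.card_le_card (Finset.erase_subset _ _))) hμ)
          _ _ H _ _ le_rfl
          ((Finset.filter_subset _ _).trans I1)
          (Finset.insert_subset (Finset.mem_filter.mpr ⟨hvBV, kap_refl _⟩)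
            (fun q hq => Finset.mem_filter.mpr ⟨I2 hq, kap_symm (I3 _ hvBV q hq)⟩))
          (fun p hp q hq => by
            rw [Finset.mem_insert] at hq
            rcases hq with rfl | hq
            · exact (Finset.mem_filter.mp hp).2
            · exact I3 p (Finset.mem_filter.mp hp).1 q hq)
          (fun p hp halive hH => Finset.mem_filter.mpr
            ⟨I4 p hp (fun q hq => halive q (Finset.mem_insert_of_mem hq)) hH,
              halive _ (Finset.mem_insert_self _ _)⟩)
          (fun p hp q hq => I5 p hp q (Finset.mem_of_mem_erase (hsub hq)))
          (fun a' ha' => I6L a' (Finset.mem_of_mem_erase ha'))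
          (fun b' hb' => I6R b' (Finset.mem_of_mem_erase hb'))
          ⟨S, gridValid_promote _ hdla hunique hS⟩
      case pos =>
        -- transfer
        obtain ⟨u0, hu0⟩ := hrn
        rw [Finset.mem_filter] at hu0
        have hu0V := hu0.1
        have hu0a := hu0.2.1
        have hu0b := hu0.2.2
        have hb2ne : ((V.filter (fun p => p.1 ≤ aB ∧ bs < p.2)).image Prod.snd).Nonempty :=
          ⟨u0.2, Finset.mem_image_of_mem _ (Finset.mem_filter.mpr ⟨hu0V, le_of_eq hu0a, hu0b⟩)⟩
        set b2 := ((V.filter (fun p => p.1 ≤ aB ∧ bs < p.2)).image Prod.snd).min' hb2ne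
          with hb2def
        have hb2min : ∀ q ∈ V, q.1 ≤ aB → bs < q.2 → b2 ≤ q.2 := fun q hq h1 h2 =>
          Finset.min'_le _ _ (Finset.mem_image_of_mem _ (Finset.mem_filter.mpr ⟨hq, h1, h2⟩))
        obtain ⟨p2, hp2, hp2b⟩ := Finset.mem_image.mp (Finset.min'_mem _ hb2ne)
        rw [← hb2def] at hp2b
        rw [Finset.mem_filter] at hp2
        have hbslt : bs < b2 := by
          have h1 := hp2.2.2
          omega
        have hb2B : b2 ∈ B := by
          have := I1 hp2.1
          rw [Finset.mem_erase, Finset.mem_product] at this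
          rw [← hp2b]
          exact this.2.2
        have hwrect : ((aB : ℕ), b2) ∈ (A ×ˢ B).erase (A.min' hA, B.max' hB) := by
          rw [Finset.mem_erase, Finset.mem_product]
          refine ⟨fun he => ?_, haBA, hb2B⟩
          have h1 : aB = A.min' hA := congrArg Prod.fst he
          have h2 := (I6L aB hdla).2
          omega
        have hwalive : ∀ fz ∈ F, kap (aB, b2) fz := by
          intro fz hfz
          have h1 := I3 _ hvBV fz hfz
          have h2 := I3 u0 hu0V fz hfz
          have h3 : fz.1 ≤ aB → bs < fz.2 → b2 ≤ fz.2 := hb2min fz (I2 hfz)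
          unfold kap at h1 h2 ⊢
          simp only at h1 h2 ⊢
          omega
        have hwH : ((aB : ℕ), b2) ∉ H := by
          intro hH
          have := I5 _ hH _ hvB
          simp only at this
          omega
        have hwV : ((aB : ℕ), b2) ∈ V := I4 _ hwrect hwalive hwH
        have hvw : ((aB : ℕ), bs) ≠ (aB, b2) := by
          intro he
          have : bs = b2 := congrArg Prod.snd he
          omega
        have hdom : ∀ u ∈ V, kap u (aB, bs) → kap u (aB, b2) := by
          intro u hu hk
          by_cases huF : u ∈ F
          · exact kap_symm (hwalive u huF)
          · have huVF : u ∈ V \ F := Finset.mem_sdiff.mpr ⟨hu, huF⟩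
            have hbs_u := hbsmin u huVF
            by_cases hcase : u.2 = bs
            · have := haBmin u huVF hcase
              unfold kap at hk ⊢
              simp only at hk ⊢
              omega
            · have h3 : u.1 ≤ aB → b2 ≤ u.2 := fun h => hb2min u hu h (by omega)
              unfold kap at hk ⊢
              simp only at hk ⊢
              omega
        obtain ⟨S, hS⟩ := I7
        exact zz_transfer (aB, bs) (aB, b2) hwV hvw hvBF hdom rfl hbsdR
          (eraseRec ⟨_, gridValid_transfer (aB, bs) (aB, b2) hwV hvw hvBF hdom rfl hbsdR hS⟩)

/-! ### Translating the fiber into the grid model -/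

open Classical

variable {n : ℕ}

/-- rows: left brackets of `Y` -/
noncomputable def Lset (Y : Psi (n + 1)) : Finset ℕ :=
  (Y.1.filter (fun y => y.1.1 = 0)).image (fun y => y.1.2)

/-- columns: right brackets of `Y` -/
noncomputable def Rset (Y : Psi (n + 1)) : Finset ℕ :=
  (Y.1.filter (fun y => y.1.2 = n + 1)).image (fun y => y.1.1)

noncomputable def Aset (Y : Psi (n + 1)) : Finset ℕ := insert 0 (Lset Y)
noncomputable def Bset (Y : Psi (n + 1)) : Finset ℕ := insert (n + 1) (Rset Y)

/-- the trunk part of a fan, as a finite set of pairs -/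
def trunkOf (S : Finset (FanBracket n)) : Finset (ℕ × ℕ) :=
  S.biUnion (fun x => match x with
    | .inl _ => ∅
    | .inr p => {p.1})

theorem mem_trunkOf {S : Finset (FanBracket n)} {p : ℕ × ℕ} :
    p ∈ trunkOf S ↔ ∃ q : FanTrunk n, Sum.inr q ∈ S ∧ q.1 = p := by
  unfold trunkOf
  rw [Finset.mem_biUnion]
  constructor
  · rintro ⟨x, hx, hp⟩
    match x with
    | .inl b => simp at hp
    | .inr q =>
        simp only [Finset.mem_singleton] at hp
        exact ⟨q, hx, hp.symm⟩
  · rintro ⟨q, hq, hqp⟩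
    exact ⟨Sum.inr q, hq, by simp [hqp]⟩

theorem mem_Lset {Y : Psi (n + 1)} {a : ℕ} :
    a ∈ Lset Y ↔ ∃ y ∈ Y.1, y.1 = (0, a) := by
  unfold Lset
  rw [Finset.mem_image]
  constructor
  · rintro ⟨y, hy, rfl⟩
    rw [Finset.mem_filter] at hy
    exact ⟨y, hy.1, Prod.ext hy.2 rfl⟩
  · rintro ⟨y, hy, hye⟩
    exact ⟨y, Finset.mem_filter.mpr ⟨hy, by rw [hye]⟩, by rw [hye]⟩

theorem mem_Rset {Y : Psi (n + 1)} {b : ℕ} :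
    b ∈ Rset Y ↔ ∃ y ∈ Y.1, y.1 = (b, n + 1) := by
  unfold Rset
  rw [Finset.mem_image]
  constructor
  · rintro ⟨y, hy, rfl⟩
    rw [Finset.mem_filter] at hy
    exact ⟨y, hy.1, Prod.ext rfl hy.2⟩
  · rintro ⟨y, hy, hye⟩
    exact ⟨y, Finset.mem_filter.mpr ⟨hy, by rw [hye]⟩, by rw [hye]⟩

theorem Lset_bounds {Y : Psi (n + 1)} {a : ℕ} (h : a ∈ Lset Y) : 1 ≤ a ∧ a ≤ n := by
  obtain ⟨y, hy, hye⟩ := mem_Lset.mp h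
  obtain ⟨h1, h2, h3⟩ := y.2
  rw [hye] at h1 h2 h3
  simp at h1 h2 h3
  omega

theorem Rset_bounds {Y : Psi (n + 1)} {b : ℕ} (h : b ∈ Rset Y) : 1 ≤ b ∧ b ≤ n := by
  obtain ⟨y, hy, hye⟩ := mem_Rset.mp h
  obtain ⟨h1, h2, h3⟩ := y.2
  rw [hye] at h1 h2 h3
  simp at h1 h2 h3
  omega

/-- arithmetic content of `PsiCompat` -/
theorem psiCompat_arith {m : ℕ} {b c : PsiBracket m} (h : PsiCompat b c) :
    b.1.2 < c.1.1 ∨ c.1.2 < b.1.1 ∨ (c.1.1 ≤ b.1.1 ∧ b.1.2 ≤ c.1.2) ∨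
      (b.1.1 ≤ c.1.1 ∧ c.1.2 ≤ b.1.2) := by
  obtain ⟨hb1, hb2, hb3⟩ := b.2
  obtain ⟨hc1, hc2, hc3⟩ := c.2
  unfold PsiCompat PsiBracket.leaves at h
  rcases h with h | h | h
  · by_contra hcon
    push_neg at hcon
    have hmem1 : max b.1.1 c.1.1 ∈ Set.Icc b.1.1 b.1.2 := by
      simp only [Set.mem_Icc]; omega
    have hmem2 : max b.1.1 c.1.1 ∈ Set.Icc c.1.1 c.1.2 := by
      simp only [Set.mem_Icc]; omega
    exact Set.disjoint_left.mp h hmem1 hmem2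
  · rw [Set.Icc_subset_Icc_iff (by omega)] at h
    omega
  · rw [Set.Icc_subset_Icc_iff (by omega)] at h
    omega

theorem L_lt_R {Y : Psi (n + 1)} {a b : ℕ} (ha : a ∈ Lset Y) (hb : b ∈ Rset Y) :
    a < b := by
  obtain ⟨y, hy, hye⟩ := mem_Lset.mp ha
  obtain ⟨z, hz, hze⟩ := mem_Rset.mp hb
  have h := psiCompat_arith (Y.2 y hy z hz)
  obtain ⟨hb1, hb2, hb3⟩ := y.2
  obtain ⟨hc1, hc2, hc3⟩ := z.2
  rw [hye] at h hb1 hb2 hb3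
  rw [hze] at h hc1 hc2 hc3
  simp at h hb1 hb2 hb3 hc1 hc2 hc3
  omega

theorem A_lt_B {Y : Psi (n + 1)} {a b : ℕ} (ha : a ∈ Aset Y) (hb : b ∈ Bset Y) :
    a < b := by
  unfold Aset at ha
  unfold Bset at hb
  rw [Finset.mem_insert] at ha hb
  rcases ha with rfl | ha <;> rcases hb with rfl | hb
  · omega
  · have := Rset_bounds hb; omega
  · have := Lset_bounds ha; omega
  · exact L_lt_R ha hb

theorem Aset_min {Y : Psi (n + 1)} (h : (Aset Y).Nonempty) : (Aset Y).min' h = 0 := by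
  refine le_antisymm (Finset.min'_le _ _ (Finset.mem_insert_self _ _)) (Nat.zero_le _)

theorem Bset_max {Y : Psi (n + 1)} (h : (Bset Y).Nonempty) : (Bset Y).max' h = n + 1 := by
  refine le_antisymm ?_ (Finset.le_max' _ _ (Finset.mem_insert_self _ _))
  apply Finset.max'_le
  intro b hb
  rw [Bset, Finset.mem_insert] at hb
  rcases hb with rfl | hb
  · omega
  · have := Rset_bounds hb; omega

/-- the ambient grid for the fiber over `Y` relative to `T₀` -/
noncomputable def Vgrid (Y : Psi (n + 1)) (F : Finset (ℕ × ℕ)) : Finset (ℕ × ℕ) :=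
  (((Aset Y) ×ˢ (Bset Y)).erase (0, n + 1)).filter (fun p => ∀ q ∈ F, kap p q)

theorem mem_Vgrid {Y : Psi (n + 1)} {F : Finset (ℕ × ℕ)} {p : ℕ × ℕ} :
    p ∈ Vgrid Y F ↔ (p ≠ (0, n + 1) ∧ p.1 ∈ Aset Y ∧ p.2 ∈ Bset Y) ∧
      ∀ q ∈ F, kap p q := by
  unfold Vgrid
  rw [Finset.mem_filter, Finset.mem_erase, Finset.mem_product]

theorem Bset_le {Y : Psi (n + 1)} {b : ℕ} (h : b ∈ Bset Y) : b ≤ n + 1 := by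
  rw [Bset, Finset.mem_insert] at h
  rcases h with rfl | h
  · omega
  · have := Rset_bounds h; omega

/-- the non-trunk brackets determined by `Y` -/
noncomputable def NEset (Y : Psi (n + 1)) : Finset (FanBracket n) :=
  (Y.1.filter (fun y => 1 ≤ y.1.1 ∧ y.1.2 ≤ n)).attach.image
    (fun y => Sum.inl ⟨y.1.1, by
      have h := Finset.mem_filter.mp y.2
      exact ⟨h.2.1, y.1.2.1, h.2.2⟩⟩)

theorem mem_NEset {Y : Psi (n + 1)} {x : FanBracket n} :
    x ∈ NEset Y ↔ ∃ b : FanIntl n, x = Sum.inl b ∧ ∃ y ∈ Y.1, y.1 = b.1 := by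
  unfold NEset
  rw [Finset.mem_image]
  constructor
  · rintro ⟨y, _, rfl⟩
    refine ⟨_, rfl, y.1, (Finset.mem_filter.mp y.2).1, rfl⟩
  · rintro ⟨b, rfl, y, hy, hyb⟩
    have hyf : y ∈ Y.1.filter (fun y => 1 ≤ y.1.1 ∧ y.1.2 ≤ n) := by
      rw [Finset.mem_filter, hyb]
      exact ⟨hy, b.2.1, b.2.2.2⟩
    refine ⟨⟨y, hyf⟩, Finset.mem_attach _ _, ?_⟩
    congr 1
    exact Subtype.ext hyb

/-- the trunk brackets corresponding to a set of grid pairs -/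
noncomputable def SEset (S : Finset (ℕ × ℕ)) : Finset (FanBracket n) :=
  (S.filter (fun p => p.1 < p.2 ∧ p.2 ≤ n + 1 ∧ ¬(p.1 = 0 ∧ p.2 = n + 1))).attach.image
    (fun p => Sum.inr (⟨p.1, by
      have h := Finset.mem_filter.mp p.2
      exact h.2⟩ : FanTrunk n))

theorem mem_SEset {S : Finset (ℕ × ℕ)} {x : FanBracket n} :
    x ∈ SEset (n := n) S ↔ ∃ q : FanTrunk n, x = Sum.inr q ∧ q.1 ∈ S := by
  unfold SEset
  rw [Finset.mem_image]
  constructor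
  · rintro ⟨p, _, rfl⟩
    exact ⟨_, rfl, (Finset.mem_filter.mp p.2).1⟩
  · rintro ⟨q, rfl, hq⟩
    have hqf : q.1 ∈ S.filter (fun p => p.1 < p.2 ∧ p.2 ≤ n + 1 ∧ ¬(p.1 = 0 ∧ p.2 = n + 1)) :=
      Finset.mem_filter.mpr ⟨hq, q.2⟩
    refine ⟨⟨q.1, hqf⟩, Finset.mem_attach _ _, ?_⟩
    congr 1

/-- combined bracket system of a grid element -/
noncomputable def fanOf (Y : Psi (n + 1)) (S : Finset (ℕ × ℕ)) : Finset (FanBracket n) :=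
  NEset Y ∪ SEset S

theorem mem_cutSet {S : Finset (FanBracket n)} {y : PsiBracket (n + 1)} :
    y ∈ cutSet S ↔ ∃ x ∈ S, y ∈ cutBracket x := Finset.mem_biUnion

theorem compat_left {Y : Psi (n + 1)} {y : PsiBracket (n + 1)} (hy : y ∈ Y.1)
    (hy1 : 1 ≤ y.1.1) {a : ℕ} (ha : a ∈ Lset Y) : y.1.2 ≤ a ∨ a < y.1.1 := by
  obtain ⟨z, hz, hze⟩ := mem_Lset.mp ha
  have h := psiCompat_arith (Y.2 y hy z hz)
  have hb := y.2
  have hc := z.2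
  have hz1 : z.1.1 = 0 := by rw [hze]
  have hz2 : z.1.2 = a := by rw [hze]
  obtain ⟨hb1, hb2, hb3⟩ := hb
  obtain ⟨hc1, hc2, hc3⟩ := hc
  omega

theorem compat_right {Y : Psi (n + 1)} {y : PsiBracket (n + 1)} (hy : y ∈ Y.1)
    (hy2 : y.1.2 ≤ n) {b : ℕ} (hb : b ∈ Rset Y) : y.1.2 < b ∨ b ≤ y.1.1 := by
  obtain ⟨z, hz, hze⟩ := mem_Rset.mp hb
  have h := psiCompat_arith (Y.2 y hy z hz)
  have hby := y.2
  have hc := z.2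
  have hz1 : z.1.1 = b := by rw [hze]
  have hz2 : z.1.2 = n + 1 := by rw [hze]
  obtain ⟨hb1, hb2, hb3⟩ := hby
  obtain ⟨hc1, hc2, hc3⟩ := hc
  omega

/-- the mixed compatibility: a non-trunk bracket of `Y` with a grid pair -/
theorem mixed_compat {Y : Psi (n + 1)} {y : PsiBracket (n + 1)} (hy : y ∈ Y.1)
    (hyn : 1 ≤ y.1.1 ∧ y.1.2 ≤ n) {p : ℕ × ℕ}
    (hp1 : p.1 ∈ Aset Y) (hp2 : p.2 ∈ Bset Y) :
    y.1.2 ≤ p.1 ∨ p.2 ≤ y.1.1 ∨ (p.1 < y.1.1 ∧ y.1.2 < p.2) := by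
  have hL : y.1.2 ≤ p.1 ∨ p.1 < y.1.1 := by
    rw [Aset, Finset.mem_insert] at hp1
    rcases hp1 with h0 | hL
    · right; omega
    · exact compat_left hy hyn.1 hL
  have hR : y.1.2 < p.2 ∨ p.2 ≤ y.1.1 := by
    rw [Bset, Finset.mem_insert] at hp2
    rcases hp2 with h0 | hR
    · left; omega
    · exact compat_right hy hyn.2 hR
  omega

theorem fanOf_compat (Y : Psi (n + 1)) (S : Finset (ℕ × ℕ))
    (hSA : ∀ p ∈ S, p.1 ∈ Aset Y ∧ p.2 ∈ Bset Y)
    (hSk : ∀ p ∈ S, ∀ q ∈ S, kap p q) :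
    ∀ x ∈ fanOf Y S, ∀ y ∈ fanOf Y S, FanCompat x y := by
  intro x hx y hy
  rw [fanOf, Finset.mem_union] at hx hy
  rcases hx with hx | hx <;> rcases hy with hy | hy
  · obtain ⟨b, rfl, yb, hyb, hybe⟩ := mem_NEset.mp hx
    obtain ⟨c, rfl, yc, hyc, hyce⟩ := mem_NEset.mp hy
    have h := Y.2 yb hyb yc hyc
    unfold PsiCompat PsiBracket.leaves at h
    rw [hybe, hyce] at h
    show Disjoint (FanBracket.leaves (.inl b)) (FanBracket.leaves (.inl c)) ∨
      FanBracket.leaves (.inl b) ⊆ FanBracket.leaves (.inl c) ∨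
      FanBracket.leaves (.inl c) ⊆ FanBracket.leaves (.inl b)
    unfold FanBracket.leaves
    exact h
  · obtain ⟨b, rfl, yb, hyb, hybe⟩ := mem_NEset.mp hx
    obtain ⟨q, rfl, hq⟩ := mem_SEset.mp hy
    have h := mixed_compat hyb (by rw [hybe]; exact ⟨b.2.1, b.2.2.2⟩)
      (hSA q.1 hq).1 (hSA q.1 hq).2
    rw [hybe] at h
    show b.1.2 ≤ q.1.1 ∨ q.1.2 ≤ b.1.1 ∨ (q.1.1 < b.1.1 ∧ b.1.2 < q.1.2)
    exact h
  · obtain ⟨q, rfl, hq⟩ := mem_SEset.mp hx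
    obtain ⟨b, rfl, yb, hyb, hybe⟩ := mem_NEset.mp hy
    have h := mixed_compat hyb (by rw [hybe]; exact ⟨b.2.1, b.2.2.2⟩)
      (hSA q.1 hq).1 (hSA q.1 hq).2
    rw [hybe] at h
    show b.1.2 ≤ q.1.1 ∨ q.1.2 ≤ b.1.1 ∨ (q.1.1 < b.1.1 ∧ b.1.2 < q.1.2)
    exact h
  · obtain ⟨q, rfl, hq⟩ := mem_SEset.mp hx
    obtain ⟨q', rfl, hq'⟩ := mem_SEset.mp hy
    exact hSk q.1 hq q'.1 hq'

theorem Yval_eq {Y : Psi (n + 1)} {Z : Fan n} (hZ : cutFan Z = Y) :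
    Y.1 = cutSet Z.1 := by rw [← hZ]; rfl

theorem cut_left_mem {Z : Fan n} {q : FanTrunk n} (hq : Sum.inr q ∈ Z.1)
    (h1 : 1 ≤ q.1.1) :
    (⟨(0, q.1.1), by obtain ⟨a, b, c⟩ := q.2; omega⟩ : PsiBracket (n + 1)) ∈ cutSet Z.1 := by
  rw [mem_cutSet]
  refine ⟨Sum.inr q, hq, ?_⟩
  simp only [cutBracket, Finset.mem_union]
  left
  rw [dif_pos h1]
  exact Finset.mem_singleton_self _

theorem cut_right_mem {Z : Fan n} {q : FanTrunk n} (hq : Sum.inr q ∈ Z.1)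
    (h2 : q.1.2 ≤ n) :
    (⟨(q.1.2, n + 1), by obtain ⟨a, b, c⟩ := q.2; omega⟩ : PsiBracket (n + 1)) ∈ cutSet Z.1 := by
  rw [mem_cutSet]
  refine ⟨Sum.inr q, hq, ?_⟩
  simp only [cutBracket, Finset.mem_union]
  right
  rw [dif_pos h2]
  exact Finset.mem_singleton_self _

theorem trunk_grid {Y : Psi (n + 1)} {Z : Fan n} (hZ : cutFan Z = Y) {q : FanTrunk n}
    (hq : Sum.inr q ∈ Z.1) : q.1.1 ∈ Aset Y ∧ q.1.2 ∈ Bset Y := by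
  constructor
  · by_cases h1 : 1 ≤ q.1.1
    · refine Finset.mem_insert_of_mem (mem_Lset.mpr
        ⟨⟨(0, q.1.1), by obtain ⟨a, b, c⟩ := q.2; omega⟩, ?_, rfl⟩)
      rw [Yval_eq hZ]
      exact cut_left_mem hq h1
    · have : q.1.1 = 0 := by omega
      rw [this]
      exact Finset.mem_insert_self _ _
  · by_cases h2 : q.1.2 ≤ n
    · refine Finset.mem_insert_of_mem (mem_Rset.mpr
        ⟨⟨(q.1.2, n + 1), by obtain ⟨a, b, c⟩ := q.2; omega⟩, ?_, rfl⟩)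
      rw [Yval_eq hZ]
      exact cut_right_mem hq h2
    · have h3 : q.1.2 = n + 1 := by obtain ⟨a, b, c⟩ := q.2; omega
      rw [h3]
      exact Finset.mem_insert_self _ _

/-- FanCompat between two trunk brackets is `kap` -/
theorem fanCompat_inr {p q : FanTrunk n} (h : FanCompat (Sum.inr p) (Sum.inr q)) :
    kap p.1 q.1 := h

/-- the trunk of an element of the fiber is a valid grid element -/
theorem trunk_valid {Y : Psi (n + 1)} {T : Fan n} {Z : Fan n}
    (hZ : cutFan Z = Y) (hTZ : T ≤ Z) :
    GridValid (Vgrid Y (trunkOf T.1)) (trunkOf T.1) (Lset Y) (Rset Y) (trunkOf Z.1) := by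
  have hTZ' : T.1 ⊆ Z.1 := hTZ
  have hk : ∀ p ∈ trunkOf Z.1, ∀ q ∈ trunkOf Z.1, kap p q := by
    intro p hp q hq
    obtain ⟨p', hp', rfl⟩ := mem_trunkOf.mp hp
    obtain ⟨q', hq', rfl⟩ := mem_trunkOf.mp hq
    exact fanCompat_inr (Z.2 _ hp' _ hq')
  refine ⟨?_, hk, ?_, ?_, ?_⟩
  · intro p hp
    obtain ⟨q, hq, rfl⟩ := mem_trunkOf.mp hp
    rw [mem_Vgrid]
    refine ⟨⟨?_, (trunk_grid hZ hq).1, (trunk_grid hZ hq).2⟩, ?_⟩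
    · intro he
      obtain ⟨a, b, c⟩ := q.2
      exact c ⟨congrArg Prod.fst he, congrArg Prod.snd he⟩
    · intro r hr
      obtain ⟨r', hr', rfl⟩ := mem_trunkOf.mp hr
      exact fanCompat_inr (Z.2 _ hq _ (hTZ' hr'))
  · intro p hp
    obtain ⟨q, hq, rfl⟩ := mem_trunkOf.mp hp
    exact mem_trunkOf.mpr ⟨q, hTZ' hq, rfl⟩
  · intro a ha
    obtain ⟨y, hy, hye⟩ := mem_Lset.mp ha
    rw [Yval_eq hZ, mem_cutSet] at hy
    obtain ⟨x, hx, hmem⟩ := hy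
    match x with
    | .inl c =>
        simp only [cutBracket, Finset.mem_singleton] at hmem
        exfalso
        have h1 : y.1.1 = c.1.1 := by rw [hmem]
        have := c.2.1
        rw [hye] at h1
        simp at h1
        omega
    | .inr q =>
        simp only [cutBracket, Finset.mem_union] at hmem
        have hab := Lset_bounds ha
        rcases hmem with hmem | hmem
        · split_ifs at hmem with hc
          · rw [Finset.mem_singleton] at hmem
            have h1 : y.1 = (0, q.1.1) := by rw [hmem]
            rw [hye] at h1
            have h2 : a = q.1.1 := (Prod.ext_iff.mp h1).2
            exact ⟨q.1, mem_trunkOf.mpr ⟨q, hx, rfl⟩, h2.symm⟩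
          · exact absurd hmem (Finset.notMem_empty _)
        · split_ifs at hmem with hc
          · rw [Finset.mem_singleton] at hmem
            exfalso
            have h1 : y.1 = (q.1.2, n + 1) := by rw [hmem]
            rw [hye] at h1
            have h2 : a = n + 1 := (Prod.ext_iff.mp h1).2
            omega
          · exact absurd hmem (Finset.notMem_empty _)
  · intro b hb
    obtain ⟨y, hy, hye⟩ := mem_Rset.mp hb
    rw [Yval_eq hZ, mem_cutSet] at hy
    obtain ⟨x, hx, hmem⟩ := hy
    match x with
    | .inl c =>
        simp only [cutBracket, Finset.mem_singleton] at hmem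
        exfalso
        have h1 : y.1.2 = c.1.2 := by rw [hmem]
        have := c.2.2.2
        rw [hye] at h1
        simp at h1
        omega
    | .inr q =>
        simp only [cutBracket, Finset.mem_union] at hmem
        have hbb := Rset_bounds hb
        rcases hmem with hmem | hmem
        · split_ifs at hmem with hc
          · rw [Finset.mem_singleton] at hmem
            exfalso
            have h1 : y.1 = (0, q.1.1) := by rw [hmem]
            rw [hye] at h1
            have h2 : b = 0 := (Prod.ext_iff.mp h1).1
            omega
          · exact absurd hmem (Finset.notMem_empty _)
        · split_ifs at hmem with hc
          · rw [Finset.mem_singleton] at hmem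
            have h1 : y.1 = (q.1.2, n + 1) := by rw [hmem]
            rw [hye] at h1
            have h2 : b = q.1.2 := (Prod.ext_iff.mp h1).1
            exact ⟨q.1, mem_trunkOf.mpr ⟨q, hx, rfl⟩, h2.symm⟩
          · exact absurd hmem (Finset.notMem_empty _)

/-- conditions on grid pairs -/
theorem grid_cond {Y : Psi (n + 1)} {p : ℕ × ℕ}
    (hp : p ≠ (0, n + 1) ∧ p.1 ∈ Aset Y ∧ p.2 ∈ Bset Y) :
    p.1 < p.2 ∧ p.2 ≤ n + 1 ∧ ¬(p.1 = 0 ∧ p.2 = n + 1) := by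
  refine ⟨A_lt_B hp.2.1 hp.2.2, Bset_le hp.2.2, fun h => hp.1 (Prod.ext h.1 h.2)⟩

theorem cut_fanOf {Y : Psi (n + 1)} {S : Finset (ℕ × ℕ)}
    (hSg : ∀ p ∈ S, p ≠ (0, n + 1) ∧ p.1 ∈ Aset Y ∧ p.2 ∈ Bset Y)
    (hdL : ∀ a ∈ Lset Y, ∃ p ∈ S, p.1 = a) (hdR : ∀ b ∈ Rset Y, ∃ p ∈ S, p.2 = b) :
    cutSet (fanOf Y S) = Y.1 := by
  ext y
  rw [mem_cutSet]
  constructor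
  · rintro ⟨x, hx, hmem⟩
    rw [fanOf, Finset.mem_union] at hx
    rcases hx with hx | hx
    · obtain ⟨b, rfl, z, hz, hze⟩ := mem_NEset.mp hx
      simp only [cutBracket, Finset.mem_singleton] at hmem
      have : y = z := by
        apply Subtype.ext
        rw [hmem, hze]
      rw [this]
      exact hz
    · obtain ⟨q, rfl, hq⟩ := mem_SEset.mp hx
      simp only [cutBracket, Finset.mem_union] at hmem
      rcases hmem with hmem | hmem
      · split_ifs at hmem with hc
        · rw [Finset.mem_singleton] at hmem
          have hqA := (hSg q.1 hq).2.1
          rw [Aset, Finset.mem_insert] at hqA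
          rcases hqA with h0 | hL
          · omega
          · obtain ⟨z, hz, hze⟩ := mem_Lset.mp hL
            have : y = z := by
              apply Subtype.ext
              rw [hmem, hze]
            rw [this]
            exact hz
        · exact absurd hmem (Finset.notMem_empty _)
      · split_ifs at hmem with hc
        · rw [Finset.mem_singleton] at hmem
          have hqB := (hSg q.1 hq).2.2
          rw [Bset, Finset.mem_insert] at hqB
          rcases hqB with h0 | hR
          · omega
          · obtain ⟨z, hz, hze⟩ := mem_Rset.mp hR
            have : y = z := by
              apply Subtype.ext
              rw [hmem, hze]
            rw [this]
            exact hz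
        · exact absurd hmem (Finset.notMem_empty _)
  · intro hy
    obtain ⟨hy1, hy2, hy3⟩ := y.2
    by_cases hcase : 1 ≤ y.1.1 ∧ y.1.2 ≤ n
    · refine ⟨Sum.inl ⟨y.1, ⟨hcase.1, hy1, hcase.2⟩⟩, ?_, ?_⟩
      · rw [fanOf, Finset.mem_union]
        exact Or.inl (mem_NEset.mpr ⟨_, rfl, y, hy, rfl⟩)
      · simp only [cutBracket, Finset.mem_singleton]
    · by_cases h0 : y.1.1 = 0
      · have haL : y.1.2 ∈ Lset Y := mem_Lset.mpr ⟨y, hy, Prod.ext h0 rfl⟩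
        obtain ⟨p, hp, hpa⟩ := hdL _ haL
        have hcond := grid_cond (hSg p hp)
        refine ⟨Sum.inr ⟨p, hcond⟩, ?_, ?_⟩
        · rw [fanOf, Finset.mem_union]
          exact Or.inr (mem_SEset.mpr ⟨_, rfl, hp⟩)
        · simp only [cutBracket, Finset.mem_union]
          left
          have hb := Lset_bounds haL
          rw [dif_pos (show 1 ≤ p.1 by omega), Finset.mem_singleton]
          apply Subtype.ext
          show y.1 = (0, p.1)
          rw [hpa]
          exact Prod.ext h0 rfl
      · have h1 : 1 ≤ y.1.1 := by omega
        have h2 : y.1.2 = n + 1 := by omega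
        have hbR : y.1.1 ∈ Rset Y := mem_Rset.mpr ⟨y, hy, Prod.ext rfl h2⟩
        obtain ⟨p, hp, hpb⟩ := hdR _ hbR
        have hcond := grid_cond (hSg p hp)
        refine ⟨Sum.inr ⟨p, hcond⟩, ?_, ?_⟩
        · rw [fanOf, Finset.mem_union]
          exact Or.inr (mem_SEset.mpr ⟨_, rfl, hp⟩)
        · simp only [cutBracket, Finset.mem_union]
          right
          have hb := Rset_bounds hbR
          rw [dif_pos (show p.2 ≤ n by omega), Finset.mem_singleton]
          apply Subtype.ext
          show y.1 = (p.2, n + 1)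
          rw [hpb]
          exact Prod.ext rfl h2

theorem trunkOf_fanOf {Y : Psi (n + 1)} {S : Finset (ℕ × ℕ)}
    (hSg : ∀ p ∈ S, p ≠ (0, n + 1) ∧ p.1 ∈ Aset Y ∧ p.2 ∈ Bset Y) :
    trunkOf (fanOf Y S) = S := by
  ext p
  rw [mem_trunkOf]
  constructor
  · rintro ⟨q, hq, rfl⟩
    rw [fanOf, Finset.mem_union] at hq
    rcases hq with hq | hq
    · obtain ⟨b, hb, _⟩ := mem_NEset.mp hq
      exact absurd hb (by simp)
    · obtain ⟨q', hq', hmem⟩ := mem_SEset.mp hq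
      rw [Sum.inr.injEq] at hq'
      rw [hq']
      exact hmem
  · intro hp
    refine ⟨⟨p, grid_cond (hSg p hp)⟩, ?_, rfl⟩
    rw [fanOf, Finset.mem_union]
    exact Or.inr (mem_SEset.mpr ⟨_, rfl, hp⟩)

theorem fan_eq_fanOf {Y : Psi (n + 1)} {Z : Fan n} (hZ : cutFan Z = Y) :
    Z.1 = fanOf Y (trunkOf Z.1) := by
  ext x
  rw [fanOf, Finset.mem_union]
  constructor
  · intro hx
    match x with
    | .inl b =>
        left
        refine mem_NEset.mpr ⟨b, rfl, ⟨b.1, ⟨b.2.2.1, by obtain ⟨h1, h2, h3⟩ := b.2; omega⟩⟩, ?_, rfl⟩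
        rw [Yval_eq hZ, mem_cutSet]
        refine ⟨Sum.inl b, hx, ?_⟩
        simp only [cutBracket, Finset.mem_singleton]
    | .inr q =>
        right
        exact mem_SEset.mpr ⟨q, rfl, mem_trunkOf.mpr ⟨q, hx, rfl⟩⟩
  · intro hx
    rcases hx with hx | hx
    · obtain ⟨b, rfl, y, hy, hye⟩ := mem_NEset.mp hx
      rw [Yval_eq hZ, mem_cutSet] at hy
      obtain ⟨x', hx', hmem⟩ := hy
      match x' with
      | .inl c =>
          simp only [cutBracket, Finset.mem_singleton] at hmem
          have : c = b := by
            apply Subtype.ext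
            rw [← hye, hmem]
          rwa [← this]
      | .inr q =>
          exfalso
          simp only [cutBracket, Finset.mem_union] at hmem
          obtain ⟨hb1, hb2, hb3⟩ := b.2
          rcases hmem with hmem | hmem
          · split_ifs at hmem with hc
            · rw [Finset.mem_singleton] at hmem
              have h1 : y.1 = (0, q.1.1) := by rw [hmem]
              rw [hye] at h1
              have h2 := Prod.ext_iff.mp h1
              simp at h2
              omega
            · exact absurd hmem (Finset.notMem_empty _)
          · split_ifs at hmem with hc
            · rw [Finset.mem_singleton] at hmem
              have h1 : y.1 = (q.1.2, n + 1) := by rw [hmem]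
              rw [hye] at h1
              have h2 := Prod.ext_iff.mp h1
              simp at h2
              omega
            · exact absurd hmem (Finset.notMem_empty _)
    · obtain ⟨q, rfl, hq⟩ := mem_SEset.mp hx
      obtain ⟨q', hq', hqe⟩ := mem_trunkOf.mp hq
      have : q' = q := Subtype.ext hqe
      rwa [← this]

section FiberIso

variable {Y : Psi (n + 1)} {T : Fan n}

theorem SEset_mono {S S' : Finset (ℕ × ℕ)} (h : S ⊆ S') :
    SEset (n := n) S ⊆ SEset S' := by
  intro x hx
  obtain ⟨q, rfl, hq⟩ := mem_SEset.mp hx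
  exact mem_SEset.mpr ⟨q, rfl, h hq⟩

/-- the fan associated to a valid grid element -/
noncomputable def fanOfGrid (hT : cutFan T ≤ Y)
    (S : GridPoset (Vgrid Y (trunkOf T.1)) (trunkOf T.1) (Lset Y) (Rset Y)) :
    {Z : Fan n // cutFan Z = Y ∧ T ≤ Z} := by
  refine ⟨⟨fanOf Y S.1, ?_⟩, ?_, ?_⟩
  · refine fanOf_compat Y S.1 (fun p hp => ?_) S.2.2.1
    have := mem_Vgrid.mp (S.2.1 hp)
    exact ⟨this.1.2.1, this.1.2.2⟩
  · apply Subtype.ext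
    show cutSet (fanOf Y S.1) = Y.1
    refine cut_fanOf (fun p hp => ?_) S.2.2.2.2.1 S.2.2.2.2.2
    have := mem_Vgrid.mp (S.2.1 hp)
    exact ⟨this.1.1, this.1.2.1, this.1.2.2⟩
  · intro x hx
    show x ∈ fanOf Y S.1
    rw [fanOf, Finset.mem_union]
    match x with
    | .inl c =>
        left
        refine mem_NEset.mpr ⟨c, rfl,
          ⟨c.1, ⟨c.2.2.1, by obtain ⟨h1, h2, h3⟩ := c.2; omega⟩⟩, ?_, rfl⟩
        have hsub : cutSet T.1 ⊆ Y.1 := hT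
        apply hsub
        rw [mem_cutSet]
        refine ⟨Sum.inl c, hx, ?_⟩
        simp only [cutBracket, Finset.mem_singleton]
    | .inr q =>
        right
        refine mem_SEset.mpr ⟨q, rfl, ?_⟩
        exact S.2.2.2.1 (mem_trunkOf.mpr ⟨q, hx, rfl⟩)

/-- the order isomorphism between the fiber and the grid poset -/
noncomputable def fiberIso (hT : cutFan T ≤ Y) :
    {Z : Fan n // cutFan Z = Y ∧ T ≤ Z} ≃o
      GridPoset (Vgrid Y (trunkOf T.1)) (trunkOf T.1) (Lset Y) (Rset Y) where
  toFun Z := ⟨trunkOf Z.1.1, trunk_valid Z.2.1 Z.2.2⟩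
  invFun S := fanOfGrid hT S
  left_inv Z := by
    apply Subtype.ext
    apply Subtype.ext
    show fanOf Y (trunkOf Z.1.1) = Z.1.1
    exact (fan_eq_fanOf Z.2.1).symm
  right_inv S := by
    apply Subtype.ext
    show trunkOf (fanOf Y S.1) = S.1
    refine trunkOf_fanOf (fun p hp => ?_)
    have := mem_Vgrid.mp (S.2.1 hp)
    exact ⟨this.1.1, this.1.2.1, this.1.2.2⟩
  map_rel_iff' := by
    intro Z Z'
    constructor
    · intro h
      have h' : trunkOf Z.1.1 ⊆ trunkOf Z'.1.1 := h
      show Z.1 ≤ Z'.1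
      show Z.1.1 ⊆ Z'.1.1
      rw [fan_eq_fanOf Z.2.1, fan_eq_fanOf Z'.2.1]
      exact Finset.union_subset_union (Finset.Subset.refl _) (SEset_mono h')
    · intro h
      show trunkOf Z.1.1 ⊆ trunkOf Z'.1.1
      intro p hp
      obtain ⟨q, hq, rfl⟩ := mem_trunkOf.mp hp
      have h' : Z.1.1 ⊆ Z'.1.1 := h
      exact mem_trunkOf.mpr ⟨q, h' hq, rfl⟩

end FiberIso

section Nonempty

variable {Y : Psi (n + 1)} {T : Fan n}

theorem trunk_grid_sub (hsub : cutSet T.1 ⊆ Y.1) {q : FanTrunk n}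
    (hq : Sum.inr q ∈ T.1) : q.1.1 ∈ Aset Y ∧ q.1.2 ∈ Bset Y := by
  constructor
  · by_cases h1 : 1 ≤ q.1.1
    · refine Finset.mem_insert_of_mem (mem_Lset.mpr
        ⟨⟨(0, q.1.1), by obtain ⟨a, b, c⟩ := q.2; omega⟩, ?_, rfl⟩)
      exact hsub (cut_left_mem hq h1)
    · have : q.1.1 = 0 := by omega
      rw [this]
      exact Finset.mem_insert_self _ _
  · by_cases h2 : q.1.2 ≤ n
    · refine Finset.mem_insert_of_mem (mem_Rset.mpr
        ⟨⟨(q.1.2, n + 1), by obtain ⟨a, b, c⟩ := q.2; omega⟩, ?_, rfl⟩)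
      exact hsub (cut_right_mem hq h2)
    · have h3 : q.1.2 = n + 1 := by obtain ⟨a, b, c⟩ := q.2; omega
      rw [h3]
      exact Finset.mem_insert_self _ _

variable (hT : cutFan T ≤ Y)

theorem F0_pairwise : ∀ p ∈ trunkOf T.1, ∀ q ∈ trunkOf T.1, kap p q := by
  intro p hp q hq
  obtain ⟨p', hp', rfl⟩ := mem_trunkOf.mp hp
  obtain ⟨q', hq', rfl⟩ := mem_trunkOf.mp hq
  exact fanCompat_inr (T.2 _ hp' _ hq')

include hT in
theorem F0_grid : ∀ t ∈ trunkOf T.1, t.1 ∈ Aset Y ∧ t.2 ∈ Bset Y := by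
  intro t ht
  obtain ⟨q, hq, rfl⟩ := mem_trunkOf.mp ht
  exact trunk_grid_sub hT hq

theorem F0_ne_corner : ∀ t ∈ trunkOf T.1, t ≠ ((0 : ℕ), n + 1) := by
  intro t ht he
  obtain ⟨q, hq, rfl⟩ := mem_trunkOf.mp ht
  obtain ⟨a, b, c⟩ := q.2
  exact c ⟨congrArg Prod.fst he, congrArg Prod.snd he⟩

/-- canonical column completing a duty row `a` -/
noncomputable def bfun (Y : Psi (n + 1)) (T : Fan n) (a : ℕ) : ℕ :=
  (insert ((Bset Y).min' ⟨n + 1, Finset.mem_insert_self _ _⟩)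
    (((trunkOf T.1).filter (fun t => a < t.1)).image Prod.snd)).max'
    (Finset.insert_nonempty _ _)

/-- canonical row completing a duty column `b` -/
noncomputable def afun (T : Fan n) (b : ℕ) : ℕ :=
  (insert 0 (((trunkOf T.1).filter (fun t => b < t.2)).image Prod.fst)).max'
    (Finset.insert_nonempty _ _)

include hT in
theorem bfun_memB (a : ℕ) : bfun Y T a ∈ Bset Y := by
  have h := Finset.max'_mem _ (Finset.insert_nonempty
    ((Bset Y).min' ⟨n + 1, Finset.mem_insert_self _ _⟩)
    (((trunkOf T.1).filter (fun t => a < t.1)).image Prod.snd))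
  rw [Finset.mem_insert] at h
  rcases h with h | h
  · rw [bfun, h]
    exact Finset.min'_mem _ _
  · rw [bfun]
    obtain ⟨t, ht, hte⟩ := Finset.mem_image.mp h
    rw [← hte]
    rw [Finset.mem_filter] at ht
    exact (F0_grid hT t ht.1).2

theorem bfun_ge (a : ℕ) : ∀ t ∈ trunkOf T.1, a < t.1 → t.2 ≤ bfun Y T a := by
  intro t ht hat
  exact Finset.le_max' _ _ (Finset.mem_insert_of_mem
    (Finset.mem_image_of_mem _ (Finset.mem_filter.mpr ⟨ht, hat⟩)))

include hT in
theorem bfun_le (a : ℕ) : ∀ t ∈ trunkOf T.1, t.1 < a → bfun Y T a ≤ t.2 := by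
  intro t ht hat
  apply Finset.max'_le
  intro y hy
  rw [Finset.mem_insert] at hy
  rcases hy with rfl | hy
  · exact Finset.min'_le _ _ ((F0_grid hT) t ht).2
  · obtain ⟨t', ht', hte⟩ := Finset.mem_image.mp hy
    rw [Finset.mem_filter] at ht'
    have hk := F0_pairwise t' ht'.1 t ht
    unfold kap at hk
    have h1 := ht'.2
    omega

include hT in
theorem bfun_kap (a : ℕ) : ∀ t ∈ trunkOf T.1, kap (a, bfun Y T a) t := by
  intro t ht
  rcases lt_trichotomy t.1 a with h | h | h
  · have := bfun_le hT a t ht h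
    unfold kap
    simp only
    omega
  · unfold kap
    simp only
    omega
  · have := bfun_ge (Y := Y) a t ht h
    unfold kap
    simp only
    omega

theorem bfun_mono {a a' : ℕ} (h : a ≤ a') : bfun Y T a' ≤ bfun Y T a := by
  apply Finset.max'_le
  intro y hy
  rw [Finset.mem_insert] at hy
  rcases hy with rfl | hy
  · exact Finset.le_max' _ _ (Finset.mem_insert_self _ _)
  · obtain ⟨t', ht', hte⟩ := Finset.mem_image.mp hy
    rw [Finset.mem_filter] at ht'
    refine Finset.le_max' _ _ (Finset.mem_insert_of_mem
      (Finset.mem_image.mpr ⟨t', Finset.mem_filter.mpr ⟨ht'.1, by omega⟩, hte⟩))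

include hT in
theorem afun_memA (b : ℕ) : afun T b ∈ Aset Y := by
  have h := Finset.max'_mem _ (Finset.insert_nonempty (0 : ℕ)
    (((trunkOf T.1).filter (fun t => b < t.2)).image Prod.fst))
  rw [Finset.mem_insert] at h
  rcases h with h | h
  · rw [afun, h]
    exact Finset.mem_insert_self _ _
  · rw [afun]
    obtain ⟨t, ht, hte⟩ := Finset.mem_image.mp h
    rw [← hte]
    rw [Finset.mem_filter] at ht
    exact (F0_grid hT t ht.1).1

theorem afun_ge (b : ℕ) : ∀ t ∈ trunkOf T.1, b < t.2 → t.1 ≤ afun T b := by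
  intro t ht hbt
  exact Finset.le_max' _ _ (Finset.mem_insert_of_mem
    (Finset.mem_image_of_mem _ (Finset.mem_filter.mpr ⟨ht, hbt⟩)))

theorem afun_le (b : ℕ) : ∀ t ∈ trunkOf T.1, t.2 < b → afun T b ≤ t.1 := by
  intro t ht hbt
  apply Finset.max'_le
  intro y hy
  rw [Finset.mem_insert] at hy
  rcases hy with rfl | hy
  · omega
  · obtain ⟨t', ht', hte⟩ := Finset.mem_image.mp hy
    rw [Finset.mem_filter] at ht'
    have hk := F0_pairwise t' ht'.1 t ht
    unfold kap at hk
    have h1 := ht'.2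
    omega

theorem afun_kap (b : ℕ) : ∀ t ∈ trunkOf T.1, kap (afun T b, b) t := by
  intro t ht
  rcases lt_trichotomy t.2 b with h | h | h
  · have := afun_le b t ht h
    unfold kap
    simp only
    omega
  · unfold kap
    simp only
    omega
  · have := afun_ge b t ht h
    unfold kap
    simp only
    omega

theorem afun_mono {b b' : ℕ} (h : b ≤ b') : afun T b' ≤ afun T b := by
  apply Finset.max'_le
  intro y hy
  rw [Finset.mem_insert] at hy
  rcases hy with rfl | hy
  · exact Finset.le_max' _ _ (Finset.mem_insert_self _ _)
  · obtain ⟨t', ht', hte⟩ := Finset.mem_image.mp hy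
    rw [Finset.mem_filter] at ht'
    refine Finset.le_max' _ _ (Finset.mem_insert_of_mem
      (Finset.mem_image.mpr ⟨t', Finset.mem_filter.mpr ⟨ht'.1, by omega⟩, hte⟩))

include hT in
theorem cross_kap {a b : ℕ} (ha : a ∈ Lset Y) (hb : b ∈ Rset Y) :
    kap (a, bfun Y T a) (afun T b, b) := by
  have haB := Lset_bounds ha
  by_cases h : a ≤ afun T b
  · have hmem := Finset.max'_mem _ (Finset.insert_nonempty (0 : ℕ)
      (((trunkOf T.1).filter (fun t => b < t.2)).image Prod.fst))
    rw [Finset.mem_insert] at hmem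
    rcases hmem with h0 | hmem
    · exfalso
      rw [afun] at h
      omega
    · obtain ⟨t, ht, hte⟩ := Finset.mem_image.mp hmem
      rw [Finset.mem_filter] at ht
      have hafun : afun T b = t.1 := by rw [afun, ← hte]
      rcases lt_or_eq_of_le (by omega : a ≤ t.1) with hlt | heq
      · have := bfun_ge (Y := Y) a t ht.1 hlt
        have hbt := ht.2
        unfold kap
        simp only
        omega
      · unfold kap
        simp only
        omega
  · have hble : bfun Y T a ≤ b := by
      apply Finset.max'_le
      intro y hy
      rw [Finset.mem_insert] at hy
      rcases hy with rfl | hy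
      · exact Finset.min'_le _ _ (Finset.mem_insert_of_mem hb)
      · obtain ⟨t, ht, hte⟩ := Finset.mem_image.mp hy
        rw [Finset.mem_filter] at ht
        by_contra hgt
        have : b < t.2 := by omega
        have := afun_ge b t ht.1 this
        have := ht.2
        omega
    unfold kap
    simp only
    omega

end Nonempty

section Assembly

variable {Y : Psi (n + 1)} {T : Fan n}


/-- the canonical completion: a valid element of the grid poset -/
noncomputable def S0 (Y : Psi (n + 1)) (T : Fan n) : Finset (ℕ × ℕ) :=
  trunkOf T.1 ∪ (Lset Y).image (fun a => (a, bfun Y T a)) ∪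
    (Rset Y).image (fun b => (afun T b, b))

theorem mem_S0 {p : ℕ × ℕ} : p ∈ S0 Y T ↔ p ∈ trunkOf T.1 ∨
    (∃ a ∈ Lset Y, p = (a, bfun Y T a)) ∨ ∃ b ∈ Rset Y, p = (afun T b, b) := by
  unfold S0
  simp only [Finset.mem_union, Finset.mem_image]
  constructor
  · rintro ((h | ⟨a, ha, rfl⟩) | ⟨b, hb, rfl⟩)
    · exact Or.inl h
    · exact Or.inr (Or.inl ⟨a, ha, rfl⟩)
    · exact Or.inr (Or.inr ⟨b, hb, rfl⟩)
  · rintro (h | ⟨a, ha, rfl⟩ | ⟨b, hb, rfl⟩)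
    · exact Or.inl (Or.inl h)
    · exact Or.inl (Or.inr ⟨a, ha, rfl⟩)
    · exact Or.inr ⟨b, hb, rfl⟩

theorem S0_kap (hT : cutFan T ≤ Y) :
    ∀ p ∈ S0 Y T, ∀ q ∈ S0 (n := n) Y T, kap p q := by
  intro p hp q hq
  rcases mem_S0.mp hp with hp | ⟨a, ha, rfl⟩ | ⟨b, hb, rfl⟩ <;>
    rcases mem_S0.mp hq with hq | ⟨a', ha', rfl⟩ | ⟨b', hb', rfl⟩
  · exact F0_pairwise p hp q hq
  · exact kap_symm (bfun_kap hT a' p hp)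
  · exact kap_symm (afun_kap b' p hp)
  · exact bfun_kap hT a q hq
  · rcases le_total a a' with h | h
    · have := bfun_mono (Y := Y) (T := T) h
      unfold kap
      simp only
      omega
    · have := bfun_mono (Y := Y) (T := T) h
      unfold kap
      simp only
      omega
  · exact cross_kap hT ha hb'
  · exact afun_kap b q hq
  · exact kap_symm (cross_kap hT ha' hb)
  · rcases le_total b b' with h | h
    · have := afun_mono (T := T) h
      unfold kap
      simp only
      omega
    · have := afun_mono (T := T) h
      unfold kap
      simp only
      omega

theorem F0_sub_V (hT : cutFan T ≤ Y) : trunkOf T.1 ⊆ Vgrid Y (trunkOf T.1) := by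
  intro t ht
  rw [mem_Vgrid]
  exact ⟨⟨F0_ne_corner t ht, (F0_grid hT t ht).1, (F0_grid hT t ht).2⟩,
    fun q hq => F0_pairwise t ht q hq⟩

theorem S0_valid (hT : cutFan T ≤ Y) :
    GridValid (Vgrid Y (trunkOf T.1)) (trunkOf T.1) (Lset Y) (Rset Y) (S0 Y T) := by
  refine ⟨?_, S0_kap hT, ?_, ?_, ?_⟩
  · intro p hp
    rcases mem_S0.mp hp with h | ⟨a, ha, rfl⟩ | ⟨b, hb, rfl⟩
    · exact F0_sub_V hT h
    · rw [mem_Vgrid]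
      have hab := Lset_bounds ha
      refine ⟨⟨fun he => ?_, Finset.mem_insert_of_mem ha, bfun_memB hT a⟩,
        fun q hq => bfun_kap hT a q hq⟩
      have := congrArg Prod.fst he
      simp at this
      omega
    · rw [mem_Vgrid]
      have hbb := Rset_bounds hb
      refine ⟨⟨fun he => ?_, afun_memA hT b, Finset.mem_insert_of_mem hb⟩,
        fun q hq => afun_kap b q hq⟩
      have := congrArg Prod.snd he
      simp at this
      omega
  · intro t ht
    exact mem_S0.mpr (Or.inl ht)
  · intro a ha
    exact ⟨(a, bfun Y T a), mem_S0.mpr (Or.inr (Or.inl ⟨a, ha, rfl⟩)), rfl⟩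
  · intro b hb
    exact ⟨(afun T b, b), mem_S0.mpr (Or.inr (Or.inr ⟨b, hb, rfl⟩)), rfl⟩

theorem fiber_grid_isZZ (hT : cutFan T ≤ Y) :
    IsZZ {Z : Fan n // cutFan Z = Y ∧ T ≤ Z} := by
  have hA : (Aset Y).Nonempty := ⟨0, Finset.mem_insert_self _ _⟩
  have hB : (Bset Y).Nonempty := ⟨n + 1, Finset.mem_insert_self _ _⟩
  have hmin : (Aset Y).min' hA = 0 := Aset_min hA
  have hmax : (Bset Y).max' hB = n + 1 := Bset_max hB
  refine isZZ_of_orderIso (fiberIso hT) ?_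
  refine grid_alg (Aset Y) (Bset Y) hA hB _ (Vgrid Y (trunkOf T.1)) (trunkOf T.1) ∅
    (Lset Y) (Rset Y) le_rfl ?_ (F0_sub_V hT) ?_ ?_ (by simp) ?_ ?_
    ⟨S0 Y T, S0_valid hT⟩
  · intro p hp
    rw [hmin, hmax]
    rw [mem_Vgrid] at hp
    rw [Finset.mem_erase, Finset.mem_product]
    exact ⟨hp.1.1, hp.1.2.1, hp.1.2.2⟩
  · intro p hp q hq
    exact (mem_Vgrid.mp hp).2 q hq
  · intro p hp halive _
    rw [hmin, hmax, Finset.mem_erase, Finset.mem_product] at hp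
    rw [mem_Vgrid]
    exact ⟨⟨hp.1, hp.2.1, hp.2.2⟩, halive⟩
  · intro a ha
    rw [hmin]
    have := Lset_bounds ha
    exact ⟨Finset.mem_insert_of_mem ha, by omega⟩
  · intro b hb
    rw [hmax]
    have := Rset_bounds hb
    exact ⟨Finset.mem_insert_of_mem hb, by omega⟩

end Assembly

section FiniteInstances

instance : Finite (FanIntl n) :=
  Finite.of_injective (fun p => ((⟨p.1.1, by obtain ⟨a, b, c⟩ := p.2; omega⟩,
    ⟨p.1.2, by obtain ⟨a, b, c⟩ := p.2; omega⟩) : Fin (n + 2) × Fin (n + 2)))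
    (by
      rintro ⟨⟨a, b⟩, _⟩ ⟨⟨c, d⟩, _⟩ h
      simp only [Prod.mk.injEq, Fin.mk.injEq] at h
      apply Subtype.ext
      simp [h.1, h.2])

instance : Finite (FanTrunk n) :=
  Finite.of_injective (fun p => ((⟨p.1.1, by obtain ⟨a, b, c⟩ := p.2; omega⟩,
    ⟨p.1.2, by obtain ⟨a, b, c⟩ := p.2; omega⟩) : Fin (n + 2) × Fin (n + 2)))
    (by
      rintro ⟨⟨a, b⟩, _⟩ ⟨⟨c, d⟩, _⟩ h
      simp only [Prod.mk.injEq, Fin.mk.injEq] at h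
      apply Subtype.ext
      simp [h.1, h.2])

noncomputable instance : Finite (Finset (FanBracket n)) :=
  Finite.of_injective (fun s : Finset (FanBracket n) => ((s : Set (FanBracket n))))
    (fun s t h => by simpa [Finset.coe_inj] using h)

instance : Finite (Fan n) := Subtype.finite

instance {Y : Psi (n + 1)} {T : Fan n} : Finite {Z : Fan n // cutFan Z = Y ∧ T ≤ Z} :=
  Subtype.finite

end FiniteInstances

/-- **Proposition 3.6.** For `Y ∈ Ψ([n+1])` and `T ∈ Φ(underline-n)` with
`Y ≥ Π_n T`, the geometric realization of the subposet
`Π_n⁻¹(Y | ≥ T) = {Z : Π_n Z = Y and Z ≥ T}` is contractible. -/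
theorem contractible_realization_fiber_cutFan_above (n : ℕ) (hn : 1 ≤ n)
    (Y : Psi (n + 1)) (T : Fan n) (hT : cutFan T ≤ Y) :
    ContractibleSpace ↥(PosetRealization {Z : Fan n // cutFan Z = Y ∧ T ≤ Z}) := by
  haveI : Fintype {Z : Fan n // cutFan Z = Y ∧ T ≤ Z} := Fintype.ofFinite _
  exact (fiber_grid_isZZ hT).contractibleSpace
end

section
/- For every n ≥ 1 there is a homeomorphism F from the closure of γ_n(Δ^n) in (S^1)^n × (S^1)^{P_n} × [0,+∞]^{S_n} onto the closure Cycl_n of β_n(Δ^n) in Δ̄^n × [0,+∞]^{S_n}, satisfying F ∘ γ_n = β_n on Δ^n. In other words, the cyclohedron can equivalently be defined as the closure of Δ^n under the inclusion β_n. (Lemma 5.1 of the paper.) -/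
open scoped ENNReal

/-- The open configuration space `Δ^n = {0 < t 1 < … < t n < 1}` of `n` points in `(0,1)`. -/
def openSimplex (n : ℕ) : Set (Fin n → ℝ) :=
  {t | (∀ i j : Fin n, i < j → t i < t j) ∧ (∀ i, 0 < t i) ∧ ∀ i, t i < 1}

/-- Extension of a configuration `t : Fin n → ℝ` by the boundary conventions
`t 0 = 0` and `t (n+1) = 1`, giving a function on `Fin (n+2)`. -/
def ext01 {n : ℕ} (t : Fin n → ℝ) : Fin (n + 2) → ℝ :=
  Fin.cons 0 (Fin.snoc t 1)

/-- Extension of a configuration `t : Fin n → ℝ` by the convention `t 0 = 0` only,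
giving a function on `Fin (n+1)`. -/
def ext0 {n : ℕ} (t : Fin n → ℝ) : Fin (n + 1) → ℝ :=
  Fin.cons 0 t

/-- The index set `T_n` of triples `0 ≤ i < j < k ≤ n+1`. -/
abbrev TriIdx (n : ℕ) : Type :=
  {p : Fin (n + 2) × Fin (n + 2) × Fin (n + 2) // p.1 < p.2.1 ∧ p.2.1 < p.2.2}

/-- The map `α_n : Δ^n → [0,1]^{T_n}`, `s_{ijk} = (t_j − t_i)/(t_k − t_i)`
(with `t_0 = 0`, `t_{n+1} = 1`), whose image's closure is the associahedron. -/
noncomputable def alphaMap (n : ℕ) (t : Fin n → ℝ) : TriIdx n → ℝ := fun q =>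
  (ext01 t q.1.2.1 - ext01 t q.1.1) / (ext01 t q.1.2.2 - ext01 t q.1.1)

/-- The `n`-dimensional associahedron: the closure of `α_n(Δ^n)`. -/
noncomputable def Assoc (n : ℕ) : Set (TriIdx n → ℝ) :=
  closure (alphaMap n '' openSimplex n)

/-- The index set `S_n` of triples of pairwise distinct elements of `{0, 1, …, n}`. -/
abbrev TripleIdx (n : ℕ) : Type :=
  {p : Fin (n + 1) × Fin (n + 1) × Fin (n + 1) // p.1 ≠ p.2.1 ∧ p.1 ≠ p.2.2 ∧ p.2.1 ≠ p.2.2}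

/-- `s̃_{kℓm}(t) = |sin π(t_ℓ − t_k)| / |sin π(t_m − t_k)| ∈ [0, +∞]`
(with the convention `t_0 = 0`). -/
noncomputable def sTilde (n : ℕ) (t : Fin n → ℝ) : TripleIdx n → ℝ≥0∞ := fun q =>
  ENNReal.ofReal |Real.sin (Real.pi * (ext0 t q.1.2.1 - ext0 t q.1.1))| /
    ENNReal.ofReal |Real.sin (Real.pi * (ext0 t q.1.2.2 - ext0 t q.1.1))|

/-- The map `β_n : Δ^n → Δ̄^n × [0,+∞]^{S_n}`. -/
noncomputable def betaMap (n : ℕ) (t : Fin n → ℝ) : (Fin n → ℝ) × (TripleIdx n → ℝ≥0∞) :=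
  (t, sTilde n t)

/-- The `n`-dimensional cyclohedron: the closure of `β_n(Δ^n)`. -/
noncomputable def Cycl (n : ℕ) : Set ((Fin n → ℝ) × (TripleIdx n → ℝ≥0∞)) :=
  closure (betaMap n '' openSimplex n)

/-- The index set `P_n` of pairs `0 ≤ k < ℓ ≤ n`. -/
abbrev PairIdx (n : ℕ) : Type := {p : Fin (n + 1) × Fin (n + 1) // p.1 < p.2}

/-- The map `γ_n : Δ^n → (S¹)^n × (S¹)^{P_n} × [0,+∞]^{S_n}` with components
`i_k(t) = e^{2πi t_k}`, `π_{kℓ}(t) = e^{πi(t_k + t_ℓ + 1/2)}` and `s̃_{kℓm}(t)`. -/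
noncomputable def gammaMap (n : ℕ) (t : Fin n → ℝ) :
    (Fin n → Circle) × (PairIdx n → Circle) × (TripleIdx n → ℝ≥0∞) :=
  (fun k => Circle.exp (2 * Real.pi * t k),
   fun p => Circle.exp (Real.pi * (ext0 t p.1.1 + ext0 t p.1.2 + 1 / 2)),
   sTilde n t)

/-- Auxiliary map recovering `β_n` data from `γ_n` data: the coordinate `t k` is recovered
from the pair coordinate at `(0, k+1)` via `arccos`, which is globally continuous. -/
noncomputable def phiMap (n : ℕ)
    (x : (Fin n → Circle) × (PairIdx n → Circle) × (TripleIdx n → ℝ≥0∞)) :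
    (Fin n → ℝ) × (TripleIdx n → ℝ≥0∞) :=
  (fun k =>
    Real.arccos (((x.2.1 ⟨(0, k.succ), Fin.succ_pos k⟩ : Circle) : ℂ) / Complex.I).re / Real.pi,
   x.2.2)

/-- Auxiliary map in the other direction. -/
noncomputable def psiMap (n : ℕ) (y : (Fin n → ℝ) × (TripleIdx n → ℝ≥0∞)) :
    (Fin n → Circle) × (PairIdx n → Circle) × (TripleIdx n → ℝ≥0∞) :=
  (fun k => Circle.exp (2 * Real.pi * y.1 k),
   fun p => Circle.exp (Real.pi * (ext0 y.1 p.1.1 + ext0 y.1 p.1.2 + 1 / 2)),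
   y.2)

lemma psi_beta (n : ℕ) (t : Fin n → ℝ) : psiMap n (betaMap n t) = gammaMap n t := rfl

lemma phi_gamma (n : ℕ) (t : Fin n → ℝ) (h0 : ∀ k, 0 ≤ t k) (h1 : ∀ k, t k ≤ 1) :
    phiMap n (gammaMap n t) = betaMap n t := by
  unfold phiMap gammaMap betaMap
  refine Prod.ext (funext fun k => ?_) rfl
  simp only
  have hang : Real.pi * (ext0 t (0 : Fin (n + 1)) + ext0 t k.succ + 1 / 2)
      = Real.pi * t k + Real.pi / 2 := by
    simp only [ext0, Fin.cons_zero, Fin.cons_succ]; ring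
  have hre : (((Circle.exp (Real.pi * (ext0 t (0 : Fin (n + 1)) + ext0 t k.succ + 1 / 2))
      : Circle) : ℂ) / Complex.I).re = Real.cos (Real.pi * t k) := by
    rw [hang, Circle.coe_exp, Complex.div_I, Complex.neg_re, Complex.mul_I_re, neg_neg,
      Complex.exp_ofReal_mul_I_im, Real.sin_add_pi_div_two]
  rw [hre, Real.arccos_cos (mul_nonneg Real.pi_pos.le (h0 k))
      (by nlinarith [Real.pi_pos, h1 k]),
    mul_div_cancel_left₀ _ (Real.pi_ne_zero)]

lemma phi_continuous (n : ℕ) : Continuous (phiMap n) := by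
  refine Continuous.prodMk (continuous_pi fun k => ?_) (continuous_snd.comp continuous_snd)
  have h1 : Continuous fun x : (Fin n → Circle) × (PairIdx n → Circle) × (TripleIdx n → ℝ≥0∞) =>
      ((x.2.1 ⟨(0, k.succ), Fin.succ_pos k⟩ : Circle) : ℂ) :=
    continuous_subtype_val.comp ((continuous_apply _).comp (continuous_fst.comp continuous_snd))
  exact (Real.continuous_arccos.comp (Complex.continuous_re.comp (h1.div_const _))).div_const _

lemma cont_ext0 (n : ℕ) (i : Fin (n + 1)) : Continuous fun t : Fin n → ℝ => ext0 t i := by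
  induction i using Fin.cases with
  | zero => simp only [ext0, Fin.cons_zero]; exact continuous_const
  | succ j => simp only [ext0, Fin.cons_succ]; exact continuous_apply j

lemma psi_continuous (n : ℕ) : Continuous (psiMap n) := by
  refine Continuous.prodMk (continuous_pi fun k => Circle.exp.continuous.comp ?_)
    (Continuous.prodMk (continuous_pi fun p => Circle.exp.continuous.comp ?_) continuous_snd)
  · exact continuous_const.mul ((continuous_apply k).comp continuous_fst)
  · exact continuous_const.mul
      ((((cont_ext0 n p.1.1).comp continuous_fst).add
        ((cont_ext0 n p.1.2).comp continuous_fst)).add continuous_const)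

/-- **Lemma 5.1.** The cyclohedron, originally defined as the closure of `γ_n(Δ^n)` in
`(S¹)^n × (S¹)^{P_n} × [0,+∞]^{S_n}`, can equivalently be defined as the closure
`Cycl_n` of `β_n(Δ^n)` in `Δ̄^n × [0,+∞]^{S_n}`: there is a homeomorphism between the
two closures commuting with the two embeddings of `Δ^n`. -/
theorem cyclohedron_eq_closure_beta (n : ℕ) (hn : 1 ≤ n) :
    ∃ F : ↥(closure (gammaMap n '' openSimplex n)) ≃ₜ ↥(Cycl n),
      ∀ t (ht : t ∈ openSimplex n),
        F ⟨gammaMap n t, subset_closure (Set.mem_image_of_mem _ ht)⟩ =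
          ⟨betaMap n t, subset_closure (Set.mem_image_of_mem _ ht)⟩ := by
  classical
  have hphig : ∀ t ∈ openSimplex n, phiMap n (gammaMap n t) = betaMap n t :=
    fun t ht => phi_gamma n t (fun k => (ht.2.1 k).le) (fun k => (ht.2.2 k).le)
  have hImgPhi : phiMap n '' (gammaMap n '' openSimplex n) = betaMap n '' openSimplex n := by
    rw [← Set.image_comp]
    exact Set.image_congr hphig
  have hImgPsi : psiMap n '' (betaMap n '' openSimplex n) = gammaMap n '' openSimplex n := by
    rw [← Set.image_comp]
    exact Set.image_congr fun t _ => psi_beta n t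
  have hA : Set.MapsTo (phiMap n) (closure (gammaMap n '' openSimplex n)) (Cycl n) := by
    intro x hx
    have h2 := image_closure_subset_closure_image (s := gammaMap n '' openSimplex n)
      (phi_continuous n)
    have := h2 (Set.mem_image_of_mem _ hx)
    rwa [hImgPhi] at this
  have hB : Set.MapsTo (psiMap n) (Cycl n) (closure (gammaMap n '' openSimplex n)) := by
    intro x hx
    have h2 := image_closure_subset_closure_image (s := betaMap n '' openSimplex n)
      (psi_continuous n)
    have := h2 (Set.mem_image_of_mem _ hx)
    rwa [hImgPsi] at this
  let fwd : ↥(closure (gammaMap n '' openSimplex n)) → ↥(Cycl n) :=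
    fun a => ⟨phiMap n a, hA a.2⟩
  let bwd : ↥(Cycl n) → ↥(closure (gammaMap n '' openSimplex n)) :=
    fun b => ⟨psiMap n b, hB b.2⟩
  have hfwd : Continuous fwd :=
    ((phi_continuous n).comp continuous_subtype_val).subtype_mk _
  have hbwd : Continuous bwd :=
    ((psi_continuous n).comp continuous_subtype_val).subtype_mk _
  have hdS : Dense (Subtype.val ⁻¹' (gammaMap n '' openSimplex n) :
      Set ↥(closure (gammaMap n '' openSimplex n))) := by
    intro x
    rw [closure_subtype, Subtype.image_preimage_coe,
      Set.inter_eq_self_of_subset_right subset_closure]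
    exact x.2
  have hdT : Dense (Subtype.val ⁻¹' (betaMap n '' openSimplex n) : Set ↥(Cycl n)) := by
    intro x
    rw [closure_subtype, Subtype.image_preimage_coe]
    have : Cycl n ∩ (betaMap n '' openSimplex n) = betaMap n '' openSimplex n :=
      Set.inter_eq_self_of_subset_right subset_closure
    rw [this]
    exact x.2
  have heq1 : bwd ∘ fwd = id := by
    refine Continuous.ext_on hdS (hbwd.comp hfwd) continuous_id ?_
    rintro ⟨x, hx⟩ hxS
    obtain ⟨t, ht, hxt⟩ := hxS
    have hxt' : gammaMap n t = x := hxt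
    refine Subtype.ext ?_
    show psiMap n (phiMap n x) = x
    rw [← hxt', hphig t ht, psi_beta]
  have heq2 : fwd ∘ bwd = id := by
    refine Continuous.ext_on hdT (hfwd.comp hbwd) continuous_id ?_
    rintro ⟨x, hx⟩ hxS
    obtain ⟨t, ht, hxt⟩ := hxS
    have hxt' : betaMap n t = x := hxt
    refine Subtype.ext ?_
    show phiMap n (psiMap n x) = x
    rw [← hxt', psi_beta, hphig t ht]
  refine ⟨{ toEquiv := ⟨fwd, bwd, fun a => congrFun heq1 a, fun b => congrFun heq2 b⟩,
            continuous_toFun := hfwd, continuous_invFun := hbwd }, ?_⟩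
  intro t ht
  exact Subtype.ext (hphig t ht)
end

section
/- Let r ≥ 1 and ℓ ≥ 1, and let p̂ : [0,1]^{T_{r+ℓ-1}} → [0,1]^{T_{r-1}} × [0,1]^{T_{ℓ-1}} be the coordinate projection defined by (p̂(s))^1_{ijk} = s_{ijk} for 0 ≤ i < j < k ≤ r and (p̂(s))^2_{ijk} = s_{i+r, j+r, k+r} for 0 ≤ i < j < k ≤ ℓ. Then p̂ maps Assoc_{r+ℓ-1} onto Assoc_{r-1} × Assoc_{ℓ-1}, and for every point y ∈ α_{r-1}(Δ^{r-1}) × α_{ℓ-1}(Δ^{ℓ-1}) (i.e. for every point of the interior of Assoc_{r-1} × Assoc_{ℓ-1}), the preimage p̂^{-1}(y) ∩ Assoc_{r+ℓ-1} is homeomorphic to the closed interval [0,1]. (Lemma 6.2 of the paper.) -/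
open scoped ENNReal

/-- The coordinate projection
`p̂ : [0,1]^{T_{r+ℓ-1}} → [0,1]^{T_{r-1}} × [0,1]^{T_{ℓ-1}}` defined by
`(p̂ s)¹_{ijk} = s_{ijk}` (for `0 ≤ i < j < k ≤ r`) and `(p̂ s)²_{ijk} = s_{i+r,j+r,k+r}`
(for `0 ≤ i < j < k ≤ ℓ`). -/
def assocProj (r l : ℕ) (hr : 1 ≤ r) (hl : 1 ≤ l) (s : TriIdx (r + l - 1) → ℝ) :
    (TriIdx (r - 1) → ℝ) × (TriIdx (l - 1) → ℝ) :=
  (fun q => s ⟨(Fin.castLE (by omega) q.1.1, Fin.castLE (by omega) q.1.2.1,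
      Fin.castLE (by omega) q.1.2.2), q.2.1, q.2.2⟩,
   fun q => s ⟨(⟨r + q.1.1.1, by have := q.1.1.isLt; omega⟩,
      ⟨r + q.1.2.1.1, by have := q.1.2.1.isLt; omega⟩,
      ⟨r + q.1.2.2.1, by have := q.1.2.2.isLt; omega⟩),
      by have := q.2.1; simp only [Fin.lt_def] at this ⊢; omega,
      by have := q.2.2; simp only [Fin.lt_def] at this ⊢; omega⟩)

lemma ext01_zero {n : ℕ} (t : Fin n → ℝ) : ext01 t 0 = 0 := rfl

lemma ext01_last {n : ℕ} (t : Fin n → ℝ) : ext01 t (Fin.last (n+1)) = 1 := by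
  have : Fin.last (n+1) = Fin.succ (Fin.last n) := rfl
  rw [this, ext01, Fin.cons_succ, Fin.snoc_last]

lemma ext01_strictMono {n : ℕ} {t : Fin n → ℝ} (ht : t ∈ openSimplex n) :
    StrictMono (ext01 t) := by
  obtain ⟨h1, h2, h3⟩ := ht
  intro a b hab
  rcases Fin.eq_zero_or_eq_succ a with rfl | ⟨a', rfl⟩
  · rcases Fin.eq_zero_or_eq_succ b with rfl | ⟨b', rfl⟩
    · exact absurd hab (lt_irrefl _)
    · rw [ext01, Fin.cons_zero, Fin.cons_succ]
      rcases Fin.eq_castSucc_or_eq_last b' with ⟨b'', rfl⟩ | rfl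
      · rw [Fin.snoc_castSucc]; exact h2 b''
      · rw [Fin.snoc_last]; norm_num
  · rcases Fin.eq_zero_or_eq_succ b with rfl | ⟨b', rfl⟩
    · exact absurd hab (by simp [Fin.lt_def])
    · rw [ext01, Fin.cons_succ, Fin.cons_succ]
      have hab' : a' < b' := by simpa using hab
      rcases Fin.eq_castSucc_or_eq_last b' with ⟨b'', rfl⟩ | rfl
      · rcases Fin.eq_castSucc_or_eq_last a' with ⟨a'', rfl⟩ | rfl
        · rw [Fin.snoc_castSucc, Fin.snoc_castSucc]
          exact h1 _ _ (by simpa using hab')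
        · exfalso; have := hab'; simp only [Fin.lt_def, Fin.val_last, Fin.coe_castSucc] at this; omega
      · rw [Fin.snoc_last]
        rcases Fin.eq_castSucc_or_eq_last a' with ⟨a'', rfl⟩ | rfl
        · rw [Fin.snoc_castSucc]; exact h3 a''
        · exact absurd hab' (lt_irrefl _)

lemma ext01_nonneg {n : ℕ} {t : Fin n → ℝ} (ht : t ∈ openSimplex n) (a : Fin (n+2)) :
    0 ≤ ext01 t a := by
  rcases eq_or_lt_of_le (Fin.zero_le a) with h | h
  · rw [← h]; rfl
  · exact (le_of_lt (by simpa [ext01_zero] using ext01_strictMono ht h))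

lemma ext01_le_one {n : ℕ} {t : Fin n → ℝ} (ht : t ∈ openSimplex n) (a : Fin (n+2)) :
    ext01 t a ≤ 1 := by
  rcases eq_or_lt_of_le (Fin.le_last a) with h | h
  · rw [h, ext01_last]
  · exact (le_of_lt (by simpa [ext01_last] using ext01_strictMono ht h))

lemma ext01_pos {n : ℕ} {t : Fin n → ℝ} (ht : t ∈ openSimplex n) {a : Fin (n+2)}
    (ha : 0 < a) : 0 < ext01 t a := by
  simpa [ext01_zero] using ext01_strictMono ht ha

lemma ext01_lt_one {n : ℕ} {t : Fin n → ℝ} (ht : t ∈ openSimplex n) {a : Fin (n+2)}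
    (ha : a < Fin.last (n+1)) : ext01 t a < 1 := by
  simpa [ext01_last] using ext01_strictMono ht ha
lemma alphaMap_mem_Icc {n : ℕ} {t : Fin n → ℝ} (ht : t ∈ openSimplex n) (q : TriIdx n) :
    alphaMap n t q ∈ Set.Icc (0:ℝ) 1 := by
  have hm := ext01_strictMono ht
  have h1 : ext01 t q.1.1 < ext01 t q.1.2.1 := hm q.2.1
  have h2 : ext01 t q.1.2.1 < ext01 t q.1.2.2 := hm q.2.2
  simp only [alphaMap]
  constructor
  · exact div_nonneg (by linarith) (by linarith)
  · rw [div_le_one (by linarith)]; linarith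

lemma assoc_subset_Icc (n : ℕ) : Assoc n ⊆ Set.Icc (0 : TriIdx n → ℝ) 1 := by
  apply closure_minimal _ isClosed_Icc
  rintro s ⟨t, ht, rfl⟩
  rw [Set.mem_Icc]
  constructor <;> intro q
  · exact (alphaMap_mem_Icc ht q).1
  · exact (alphaMap_mem_Icc ht q).2

lemma isCompact_assoc (n : ℕ) : IsCompact (Assoc n) :=
  IsCompact.of_isClosed_subset isCompact_Icc isClosed_closure (assoc_subset_Icc n)

/-- The interpolation `T(c,·)` on `Fin (r+l+1)`. -/
noncomputable def Tfun (r l : ℕ) (u : Fin (r-1) → ℝ) (v : Fin (l-1) → ℝ) (c : ℝ)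
    (a : Fin (r+l-1+2)) : ℝ :=
  if h : a.1 ≤ r then c * ext01 u ⟨a.1, by omega⟩
  else c + (1-c) * ext01 v ⟨a.1 - r, by have := a.isLt; omega⟩

/-- The curve `γ` of which the fiber is the image. -/
noncomputable def gam (r l : ℕ) (u : Fin (r-1) → ℝ) (v : Fin (l-1) → ℝ) (c : ℝ) :
    TriIdx (r+l-1) → ℝ := fun q =>
  if hk : q.1.2.2.1 ≤ r then
    alphaMap (r-1) u ⟨(⟨q.1.1.1, by have h1 := Fin.lt_def.mp q.2.1; have h2 := Fin.lt_def.mp q.2.2; omega⟩,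
      ⟨q.1.2.1.1, by have h2 := Fin.lt_def.mp q.2.2; omega⟩,
      ⟨q.1.2.2.1, by omega⟩),
      Fin.mk_lt_mk.mpr (Fin.lt_def.mp q.2.1), Fin.mk_lt_mk.mpr (Fin.lt_def.mp q.2.2)⟩
  else if hi : r ≤ q.1.1.1 then
    alphaMap (l-1) v ⟨(⟨q.1.1.1 - r, by have := q.1.1.isLt; omega⟩,
      ⟨q.1.2.1.1 - r, by have := q.1.2.1.isLt; omega⟩,
      ⟨q.1.2.2.1 - r, by have := q.1.2.2.isLt; omega⟩),
      Fin.mk_lt_mk.mpr (by have h1 := Fin.lt_def.mp q.2.1; omega),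
      Fin.mk_lt_mk.mpr (by have h1 := Fin.lt_def.mp q.2.1; have h2 := Fin.lt_def.mp q.2.2; omega)⟩
  else (Tfun r l u v c q.1.2.1 - Tfun r l u v c q.1.1) /
    (Tfun r l u v c q.1.2.2 - Tfun r l u v c q.1.1)

lemma gam_of_le {r l : ℕ} {u : Fin (r-1) → ℝ} {v : Fin (l-1) → ℝ} {c : ℝ}
    (q : TriIdx (r+l-1)) (hk : q.1.2.2.1 ≤ r) :
    gam r l u v c q = alphaMap (r-1) u
      ⟨(⟨q.1.1.1, by have h1 := Fin.lt_def.mp q.2.1; have h2 := Fin.lt_def.mp q.2.2; omega⟩,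
        ⟨q.1.2.1.1, by have h2 := Fin.lt_def.mp q.2.2; omega⟩,
        ⟨q.1.2.2.1, by omega⟩),
        Fin.mk_lt_mk.mpr (Fin.lt_def.mp q.2.1), Fin.mk_lt_mk.mpr (Fin.lt_def.mp q.2.2)⟩ :=
  dif_pos hk

lemma gam_of_ge {r l : ℕ} {u : Fin (r-1) → ℝ} {v : Fin (l-1) → ℝ} {c : ℝ}
    (q : TriIdx (r+l-1)) (hk : ¬ q.1.2.2.1 ≤ r) (hi : r ≤ q.1.1.1) :
    gam r l u v c q = alphaMap (l-1) v
      ⟨(⟨q.1.1.1 - r, by have := q.1.1.isLt; omega⟩,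
        ⟨q.1.2.1.1 - r, by have := q.1.2.1.isLt; omega⟩,
        ⟨q.1.2.2.1 - r, by have := q.1.2.2.isLt; omega⟩),
        Fin.mk_lt_mk.mpr (by have h1 := Fin.lt_def.mp q.2.1; omega),
        Fin.mk_lt_mk.mpr (by have h1 := Fin.lt_def.mp q.2.1; have h2 := Fin.lt_def.mp q.2.2; omega)⟩ :=
  (dif_neg hk).trans (dif_pos hi)

lemma gam_mixed {r l : ℕ} {u : Fin (r-1) → ℝ} {v : Fin (l-1) → ℝ} {c : ℝ}
    (q : TriIdx (r+l-1)) (hk : ¬ q.1.2.2.1 ≤ r) (hi : ¬ r ≤ q.1.1.1) :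
    gam r l u v c q = (Tfun r l u v c q.1.2.1 - Tfun r l u v c q.1.1) /
      (Tfun r l u v c q.1.2.2 - Tfun r l u v c q.1.1) :=
  (dif_neg hk).trans (dif_neg hi)
section Core
variable {r l : ℕ} {u : Fin (r-1) → ℝ} {v : Fin (l-1) → ℝ} {c : ℝ}

lemma Tfun_le {a : Fin (r+l-1+2)} (ha : a.1 ≤ r) (c : ℝ) :
    Tfun r l u v c a = c * ext01 u ⟨a.1, by omega⟩ := dif_pos ha

lemma Tfun_ge (hr : 1 ≤ r) (hl : 1 ≤ l) (hu : u ∈ openSimplex (r-1))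
    {a : Fin (r+l-1+2)} (ha : r ≤ a.1) (c : ℝ) :
    Tfun r l u v c a = c + (1-c) * ext01 v ⟨a.1 - r, by have := a.isLt; omega⟩ := by
  rcases eq_or_lt_of_le ha with h | h
  · rw [Tfun_le (le_of_eq h.symm)]
    have h1 : (⟨a.1, by omega⟩ : Fin (r-1+2)) = Fin.last (r-1+1) := by
      apply Fin.ext; simp only [Fin.val_mk, Fin.val_last]; omega
    have h2 : (⟨a.1 - r, by have := a.isLt; omega⟩ : Fin (l-1+2)) = 0 := by
      apply Fin.ext; simp only [Fin.val_mk, Fin.val_zero]; omega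
    rw [h1, h2, ext01_last, ext01_zero, mul_one, mul_zero, add_zero]
  · exact dif_neg (by omega)

lemma Tfun_zero_idx (c : ℝ) : Tfun r l u v c 0 = 0 := by
  rw [Tfun_le (by simp only [Fin.val_zero]; omega)]
  have : (⟨(0 : Fin (r+l-1+2)).1, by simp only [Fin.val_zero]; omega⟩ : Fin (r-1+2)) = 0 := by
    apply Fin.ext; simp only [Fin.val_mk, Fin.val_zero]
  rw [this, ext01_zero, mul_zero]

lemma Tfun_last_idx (hr : 1 ≤ r) (hl : 1 ≤ l) (hu : u ∈ openSimplex (r-1)) (c : ℝ) :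
    Tfun r l u v c (Fin.last (r+l-1+1)) = 1 := by
  rw [Tfun_ge hr hl hu (by simp only [Fin.val_last]; omega)]
  have : (⟨(Fin.last (r+l-1+1)).1 - r, by simp only [Fin.val_last]; omega⟩ : Fin (l-1+2))
      = Fin.last (l-1+1) := by
    apply Fin.ext; simp only [Fin.val_mk, Fin.val_last]; omega
  rw [this, ext01_last]; ring

lemma Tfun_r_idx (hr : 1 ≤ r) (c : ℝ) : Tfun r l u v c ⟨r, by omega⟩ = c := by
  rw [Tfun_le (le_refl _)]
  have : (⟨r, by omega⟩ : Fin (r-1+2)) = Fin.last (r-1+1) := by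
    apply Fin.ext; simp only [Fin.val_mk, Fin.val_last]; omega
  rw [this, ext01_last, mul_one]

lemma Tfun_denom_pos (hu : u ∈ openSimplex (r-1)) (hv : v ∈ openSimplex (l-1))
    (hr : 1 ≤ r) (hl : 1 ≤ l)
    (hc : c ∈ Set.Icc (0:ℝ) 1) {i k : Fin (r+l-1+2)}
    (hik : i.1 < r) (hk : r < k.1) :
    0 < Tfun r l u v c k - Tfun r l u v c i := by
  rw [Tfun_le hik.le, Tfun_ge hr hl hu hk.le]
  have hU : ext01 u ⟨i.1, by omega⟩ < 1 :=
    ext01_lt_one hu (by rw [Fin.lt_def]; simp only [Fin.val_mk, Fin.val_last]; omega)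
  have hV : 0 < ext01 v ⟨k.1 - r, by have := k.isLt; omega⟩ :=
    ext01_pos hv (by rw [Fin.lt_def]; simp only [Fin.val_mk, Fin.val_zero]; omega)
  obtain ⟨hc0, hc1⟩ := hc
  rcases eq_or_lt_of_le hc0 with h | h
  · rw [← h]; simpa using hV
  · have h1 : 0 < c * (1 - ext01 u ⟨i.1, by omega⟩) := mul_pos h (by linarith)
    have h2 : 0 ≤ (1-c) * ext01 v ⟨k.1 - r, by have := k.isLt; omega⟩ :=
      mul_nonneg (by linarith) hV.le
    nlinarith

lemma Tfun_strictMono (hr : 1 ≤ r) (hl : 1 ≤ l) (hu : u ∈ openSimplex (r-1))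
    (hv : v ∈ openSimplex (l-1)) (hc : c ∈ Set.Ioo (0:ℝ) 1) :
    StrictMono (Tfun r l u v c) := by
  intro a b hab
  rw [Fin.lt_def] at hab
  obtain ⟨hc0, hc1⟩ := hc
  by_cases hbr : b.1 ≤ r
  · rw [Tfun_le (by omega), Tfun_le hbr]
    refine mul_lt_mul_of_pos_left (ext01_strictMono hu ?_) hc0
    rw [Fin.lt_def]; simp only [Fin.val_mk]; omega
  · by_cases har : a.1 ≤ r
    · calc Tfun r l u v c a ≤ Tfun r l u v c ⟨r, by omega⟩ := by
            rw [Tfun_le har, Tfun_r_idx hr]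
            nlinarith [ext01_le_one hu (⟨a.1, by omega⟩ : Fin (r-1+2))]
        _ < Tfun r l u v c b := by
            rw [Tfun_r_idx hr, Tfun_ge hr hl hu (by omega)]
            have hV : 0 < ext01 v ⟨b.1 - r, by have := b.isLt; omega⟩ :=
              ext01_pos hv (by rw [Fin.lt_def]; simp only [Fin.val_mk, Fin.val_zero]; omega)
            nlinarith
    · rw [Tfun_ge hr hl hu (by omega), Tfun_ge hr hl hu (by omega)]
      have := ext01_strictMono hv
        (show (⟨a.1-r, by have := a.isLt; omega⟩ : Fin (l-1+2))
            < ⟨b.1-r, by have := b.isLt; omega⟩ by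
          rw [Fin.lt_def]; simp only [Fin.val_mk]; omega)
      nlinarith

end Core
section Curve
variable {r l : ℕ} {u : Fin (r-1) → ℝ} {v : Fin (l-1) → ℝ} {c : ℝ}

/-- The configuration interpolating `u` and `v` with break at `c`. -/
noncomputable def tcfg (r l : ℕ) (u : Fin (r-1) → ℝ) (v : Fin (l-1) → ℝ) (c : ℝ)
    (m : Fin (r+l-1)) : ℝ :=
  Tfun r l u v c (Fin.castSucc m.succ)

lemma ext01_tcfg (hr : 1 ≤ r) (hl : 1 ≤ l) (hu : u ∈ openSimplex (r-1)) (c : ℝ) :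
    ext01 (tcfg r l u v c) = Tfun r l u v c := by
  funext a
  refine Fin.cases ?_ (fun b => ?_) a
  · rw [ext01_zero, Tfun_zero_idx]
  · show (Fin.snoc (tcfg r l u v c) 1 : Fin (r+l-1+1) → ℝ) b = _
    rcases Fin.eq_castSucc_or_eq_last b with ⟨b', rfl⟩ | rfl
    · rw [Fin.snoc_castSucc, tcfg, Fin.succ_castSucc]
    · rw [Fin.snoc_last]
      have : (Fin.last (r+l-1)).succ = Fin.last (r+l-1+1) := rfl
      rw [this, Tfun_last_idx hr hl hu]

lemma tcfg_mem (hr : 1 ≤ r) (hl : 1 ≤ l) (hu : u ∈ openSimplex (r-1))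
    (hv : v ∈ openSimplex (l-1)) (hc : c ∈ Set.Ioo (0:ℝ) 1) :
    tcfg r l u v c ∈ openSimplex (r+l-1) := by
  have hsm := Tfun_strictMono hr hl hu hv hc
  refine ⟨fun i j hij => hsm ?_, fun i => ?_, fun i => ?_⟩
  · rw [Fin.lt_def]; simp only [Fin.coe_castSucc, Fin.val_succ]
    exact Nat.add_lt_add_right hij 1
  · rw [show (0:ℝ) = Tfun r l u v c 0 from (Tfun_zero_idx c).symm]
    apply hsm
    rw [Fin.lt_def]; simp only [Fin.coe_castSucc, Fin.val_succ, Fin.val_zero]; omega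
  · rw [show (1:ℝ) = Tfun r l u v c (Fin.last (r+l-1+1)) from
      (Tfun_last_idx hr hl hu c).symm]
    apply hsm
    rw [Fin.lt_def]; simp only [Fin.coe_castSucc, Fin.val_succ, Fin.val_last]
    have := i.isLt; omega

lemma alphaMap_tcfg (hr : 1 ≤ r) (hl : 1 ≤ l) (hu : u ∈ openSimplex (r-1))
    (hv : v ∈ openSimplex (l-1)) (hc : c ∈ Set.Ioo (0:ℝ) 1) :
    alphaMap (r+l-1) (tcfg r l u v c) = gam r l u v c := by
  funext q
  obtain ⟨⟨i, j, k⟩, hij, hjk⟩ := q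
  have hij' : i.1 < j.1 := Fin.lt_def.mp hij
  have hjk' : j.1 < k.1 := Fin.lt_def.mp hjk
  rw [alphaMap, gam, ext01_tcfg hr hl hu]
  dsimp only
  split_ifs with hk hi
  · -- pure first block
    rw [Tfun_le (by omega : i.1 ≤ r), Tfun_le (by omega : j.1 ≤ r), Tfun_le hk]
    rw [alphaMap]
    dsimp only
    rw [← mul_sub, ← mul_sub, mul_div_mul_left _ _ (ne_of_gt hc.1)]
  · -- pure second block
    rw [Tfun_ge hr hl hu (by omega : r ≤ i.1), Tfun_ge hr hl hu (by omega : r ≤ j.1),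
      Tfun_ge hr hl hu (by omega : r ≤ k.1)]
    rw [alphaMap]
    dsimp only
    have e1 : c + (1-c) * ext01 v ⟨j.1 - r, by have := j.isLt; omega⟩ -
        (c + (1-c) * ext01 v ⟨i.1 - r, by have := i.isLt; omega⟩) =
        (1-c) * (ext01 v ⟨j.1 - r, by have := j.isLt; omega⟩ -
          ext01 v ⟨i.1 - r, by have := i.isLt; omega⟩) := by ring
    have e2 : c + (1-c) * ext01 v ⟨k.1 - r, by have := k.isLt; omega⟩ -
        (c + (1-c) * ext01 v ⟨i.1 - r, by have := i.isLt; omega⟩) =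
        (1-c) * (ext01 v ⟨k.1 - r, by have := k.isLt; omega⟩ -
          ext01 v ⟨i.1 - r, by have := i.isLt; omega⟩) := by ring
    rw [e1, e2, mul_div_mul_left _ _ (by have := hc.2; intro h; apply absurd h; intro h'; linarith : (1:ℝ) - c ≠ 0)]
  · rfl

lemma gam_apply_q0 (hr : 1 ≤ r) (hl : 1 ≤ l) (hu : u ∈ openSimplex (r-1)) (c : ℝ) :
    gam r l u v c ⟨(0, ⟨r, by omega⟩, Fin.last (r+l-1+1)),
      by rw [Fin.lt_def]; simp only [Fin.val_zero, Fin.val_mk]; omega,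
      by rw [Fin.lt_def]; simp only [Fin.val_mk, Fin.val_last]; omega⟩ = c := by
  rw [gam]
  dsimp only
  rw [dif_neg (by simp only [Fin.val_last]; omega)]
  rw [dif_neg (by simp only [Fin.val_zero]; omega)]
  rw [Tfun_zero_idx, Tfun_r_idx hr, Tfun_last_idx hr hl hu]
  norm_num

end Curve
section Proj
variable {r l : ℕ} {u : Fin (r-1) → ℝ} {v : Fin (l-1) → ℝ} {c : ℝ}

lemma assocProj_gam (hr : 1 ≤ r) (hl : 1 ≤ l) (c : ℝ) :
    assocProj r l hr hl (gam r l u v c) = (alphaMap (r-1) u, alphaMap (l-1) v) := by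
  refine Prod.ext ?_ ?_ <;> dsimp only [assocProj] <;> funext q <;>
    obtain ⟨⟨i, j, k⟩, hij, hjk⟩ := q <;>
    have hij' : i.1 < j.1 := Fin.lt_def.mp hij <;>
    have hjk' : j.1 < k.1 := Fin.lt_def.mp hjk
  · rw [gam]
    dsimp only
    rw [dif_pos (by simp only [Fin.coe_castLE]; omega)]
    congr 1
  · rw [gam]
    dsimp only
    have hk2 : 2 ≤ k.1 := by omega
    rw [dif_neg (by omega)]
    rw [dif_pos (by omega)]
    congr 1
    refine Subtype.ext ?_
    simp only [Prod.mk.injEq]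
    refine ⟨Fin.ext ?_, Fin.ext ?_, Fin.ext ?_⟩ <;> simp only [Fin.val_mk] <;> omega

lemma gam_mem_image (hr : 1 ≤ r) (hl : 1 ≤ l) (hu : u ∈ openSimplex (r-1))
    (hv : v ∈ openSimplex (l-1)) (hc : c ∈ Set.Ioo (0:ℝ) 1) :
    gam r l u v c ∈ alphaMap (r+l-1) '' openSimplex (r+l-1) :=
  ⟨tcfg r l u v c, tcfg_mem hr hl hu hv hc, alphaMap_tcfg hr hl hu hv hc⟩

lemma continuousOn_gam (hr : 1 ≤ r) (hl : 1 ≤ l) (hu : u ∈ openSimplex (r-1))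
    (hv : v ∈ openSimplex (l-1)) :
    ContinuousOn (fun c => gam r l u v c) (Set.Icc (0:ℝ) 1) := by
  apply continuousOn_pi.mpr
  intro q
  obtain ⟨⟨i, j, k⟩, hij, hjk⟩ := q
  have hij' : i.1 < j.1 := Fin.lt_def.mp hij
  have hjk' : j.1 < k.1 := Fin.lt_def.mp hjk
  by_cases hk : k.1 ≤ r
  · simp only [gam, dif_pos hk]
    exact continuousOn_const
  · by_cases hi : r ≤ i.1
    · simp only [gam, dif_neg hk, dif_pos hi]
      exact continuousOn_const
    · simp only [gam, dif_neg hk, dif_neg hi]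
      have hT : ∀ a : Fin (r+l-1+2), ContinuousOn (fun c => Tfun r l u v c a)
          (Set.Icc (0:ℝ) 1) := by
        intro a
        by_cases ha : a.1 ≤ r
        · simp only [Tfun, dif_pos ha]
          exact (continuous_id.mul continuous_const).continuousOn
        · simp only [Tfun, dif_neg ha]
          exact (continuous_id.add ((continuous_const.sub continuous_id).mul
            continuous_const)).continuousOn
      apply ContinuousOn.div ((hT j).sub (hT i)) ((hT k).sub (hT i))
      intro x hx
      exact ne_of_gt (Tfun_denom_pos hu hv hr hl hx (by omega) (by omega))

lemma gam_mem_assoc (hr : 1 ≤ r) (hl : 1 ≤ l) (hu : u ∈ openSimplex (r-1))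
    (hv : v ∈ openSimplex (l-1)) (hc : c ∈ Set.Icc (0:ℝ) 1) :
    gam r l u v c ∈ Assoc (r+l-1) := by
  have h1 : (fun c => gam r l u v c) '' Set.Icc 0 1 ⊆
      closure ((fun c => gam r l u v c) '' Set.Ioo 0 1) := by
    have := (continuousOn_gam hr hl hu hv)
    rw [← closure_Ioo (by norm_num : (0:ℝ) ≠ 1)] at this ⊢
    exact this.image_closure
  have h2 : (fun c => gam r l u v c) '' Set.Ioo 0 1 ⊆
      alphaMap (r+l-1) '' openSimplex (r+l-1) := by
    rintro _ ⟨x, hx, rfl⟩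
    exact gam_mem_image hr hl hu hv hx
  have := h1 ⟨c, hc, rfl⟩
  exact closure_mono h2 this

end Proj
section Split
variable {r l : ℕ} {t : Fin (r+l-1) → ℝ}

/-- First rescaled half of a configuration. -/
noncomputable def utConf (r l : ℕ) (t : Fin (r+l-1) → ℝ) (m : Fin (r-1)) : ℝ :=
  ext01 t ⟨m.1+1, by have := m.isLt; omega⟩ / ext01 t ⟨r, by have := m.isLt; omega⟩

/-- Second rescaled half of a configuration. -/
noncomputable def vtConf (r l : ℕ) (t : Fin (r+l-1) → ℝ) (m : Fin (l-1)) : ℝ :=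
  (ext01 t ⟨r+m.1+1, by have := m.isLt; omega⟩ - ext01 t ⟨r, by have := m.isLt; omega⟩) /
    (1 - ext01 t ⟨r, by have := m.isLt; omega⟩)

lemma ext01_utConf (hr : 1 ≤ r) (hl : 1 ≤ l) (ht : t ∈ openSimplex (r+l-1))
    (b : Fin (r-1+2)) :
    ext01 (utConf r l t) b
      = ext01 t ⟨b.1, by have := b.isLt; omega⟩ / ext01 t ⟨r, by omega⟩ := by
  have hpos : 0 < ext01 t ⟨r, by omega⟩ :=
    ext01_pos ht (by rw [Fin.lt_def]; simp only [Fin.val_zero, Fin.val_mk]; omega)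
  refine Fin.cases ?_ (fun b' => ?_) b
  · rw [ext01_zero]
    have : (⟨(0:Fin (r-1+2)).1, by have := (0:Fin (r-1+2)).isLt; omega⟩ : Fin (r+l-1+2)) = 0 := by
      apply Fin.ext; simp only [Fin.val_mk, Fin.val_zero]
    rw [this, ext01_zero, zero_div]
  · show (Fin.snoc (utConf r l t) 1 : Fin (r-1+1) → ℝ) b' = _
    rcases Fin.eq_castSucc_or_eq_last b' with ⟨b'', rfl⟩ | rfl
    · rw [Fin.snoc_castSucc, utConf]
      congr 1
      all_goals (apply Fin.ext; simp only [Fin.val_mk, Fin.val_succ, Fin.coe_castSucc])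
    · rw [Fin.snoc_last]
      have : (⟨(Fin.succ (Fin.last (r-1))).1, by have := (Fin.succ (Fin.last (r-1))).isLt; omega⟩
          : Fin (r+l-1+2)) = ⟨r, by omega⟩ := by
        apply Fin.ext; simp only [Fin.val_mk, Fin.val_succ, Fin.val_last]; omega
      rw [this, div_self (ne_of_gt hpos)]

lemma ext01_vtConf (hr : 1 ≤ r) (hl : 1 ≤ l) (ht : t ∈ openSimplex (r+l-1))
    (b : Fin (l-1+2)) :
    ext01 (vtConf r l t) b
      = (ext01 t ⟨r+b.1, by have := b.isLt; omega⟩ - ext01 t ⟨r, by omega⟩) /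
        (1 - ext01 t ⟨r, by omega⟩) := by
  have hlt1 : ext01 t ⟨r, by omega⟩ < 1 :=
    ext01_lt_one ht (by rw [Fin.lt_def]; simp only [Fin.val_mk, Fin.val_last]; omega)
  refine Fin.cases ?_ (fun b' => ?_) b
  · rw [ext01_zero]
    have : (⟨r+(0:Fin (l-1+2)).1, by have := (0:Fin (l-1+2)).isLt; omega⟩ : Fin (r+l-1+2))
        = ⟨r, by omega⟩ := by
      apply Fin.ext; simp only [Fin.val_mk, Fin.val_zero]; omega
    rw [this, sub_self, zero_div]
  · show (Fin.snoc (vtConf r l t) 1 : Fin (l-1+1) → ℝ) b' = _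
    rcases Fin.eq_castSucc_or_eq_last b' with ⟨b'', rfl⟩ | rfl
    · rw [Fin.snoc_castSucc, vtConf]
      congr 2
      all_goals (apply Fin.ext; simp only [Fin.val_mk, Fin.val_succ, Fin.coe_castSucc]; omega)
    · rw [Fin.snoc_last]
      have : (⟨r+(Fin.succ (Fin.last (l-1))).1,
          by have := (Fin.succ (Fin.last (l-1))).isLt; omega⟩ : Fin (r+l-1+2))
          = Fin.last (r+l-1+1) := by
        apply Fin.ext; simp only [Fin.val_mk, Fin.val_succ, Fin.val_last]; omega
      rw [this, ext01_last, div_self (by linarith)]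

lemma utConf_mem (hr : 1 ≤ r) (hl : 1 ≤ l) (ht : t ∈ openSimplex (r+l-1)) :
    utConf r l t ∈ openSimplex (r-1) := by
  have hsm := ext01_strictMono ht
  have hpos : 0 < ext01 t (⟨r, by omega⟩ : Fin (r+l-1+2)) :=
    ext01_pos ht (by rw [Fin.lt_def]; simp only [Fin.val_zero, Fin.val_mk]; omega)
  refine ⟨fun i j hij => ?_, fun i => ?_, fun i => ?_⟩
  · unfold utConf
    gcongr
    exact hsm (by rw [Fin.lt_def]; simp only [Fin.val_mk]; omega)
  · exact div_pos (ext01_pos ht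
      (by rw [Fin.lt_def]; simp only [Fin.val_zero, Fin.val_mk]; omega)) hpos
  · rw [utConf, div_lt_one hpos]
    exact hsm (by rw [Fin.lt_def]; simp only [Fin.val_mk]; have := i.isLt; omega)

lemma vtConf_mem (hr : 1 ≤ r) (hl : 1 ≤ l) (ht : t ∈ openSimplex (r+l-1)) :
    vtConf r l t ∈ openSimplex (l-1) := by
  have hsm := ext01_strictMono ht
  have hlt1 : ext01 t (⟨r, by omega⟩ : Fin (r+l-1+2)) < 1 :=
    ext01_lt_one ht (by rw [Fin.lt_def]; simp only [Fin.val_mk, Fin.val_last]; omega)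
  refine ⟨fun i j hij => ?_, fun i => ?_, fun i => ?_⟩
  · unfold vtConf
    gcongr
    exact hsm (by rw [Fin.lt_def]; simp only [Fin.val_mk]; omega)
  · refine div_pos (sub_pos.mpr (hsm ?_)) (by linarith)
    rw [Fin.lt_def]; simp only [Fin.val_mk]; omega
  · rw [vtConf, div_lt_one (by linarith)]
    have : ext01 t ⟨r+i.1+1, by have := i.isLt; omega⟩ < 1 := by
      refine ext01_lt_one ht ?_
      rw [Fin.lt_def]; simp only [Fin.val_mk, Fin.val_last]; have := i.isLt; omega
    linarith

lemma assocProj_alphaMap (hr : 1 ≤ r) (hl : 1 ≤ l) (ht : t ∈ openSimplex (r+l-1)) :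
    assocProj r l hr hl (alphaMap (r+l-1) t)
      = (alphaMap (r-1) (utConf r l t), alphaMap (l-1) (vtConf r l t)) := by
  have hsm := ext01_strictMono ht
  have hpos : 0 < ext01 t (⟨r, by omega⟩ : Fin (r+l-1+2)) :=
    ext01_pos ht (by rw [Fin.lt_def]; simp only [Fin.val_zero, Fin.val_mk]; omega)
  have hlt1 : ext01 t (⟨r, by omega⟩ : Fin (r+l-1+2)) < 1 :=
    ext01_lt_one ht (by rw [Fin.lt_def]; simp only [Fin.val_mk, Fin.val_last]; omega)
  refine Prod.ext ?_ ?_ <;> dsimp only [assocProj] <;> funext q <;>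
    obtain ⟨⟨i, j, k⟩, hij, hjk⟩ := q
  · rw [alphaMap, alphaMap]
    dsimp only
    rw [ext01_utConf hr hl ht, ext01_utConf hr hl ht, ext01_utConf hr hl ht,
      div_sub_div_same, div_sub_div_same, div_div_div_cancel_right₀ (ne_of_gt hpos)]
    have e : ∀ (b : Fin (r-1+2)) (h : b.1 < r+l-1+2), Fin.castLE (by omega) b
        = (⟨b.1, h⟩ : Fin (r+l-1+2)) := fun b h => Fin.ext (by simp only [Fin.coe_castLE, Fin.val_mk])
    rw [e i (by have := i.isLt; omega), e j (by have := j.isLt; omega),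
      e k (by have := k.isLt; omega)]
  · rw [alphaMap, alphaMap]
    dsimp only
    rw [ext01_vtConf hr hl ht, ext01_vtConf hr hl ht, ext01_vtConf hr hl ht,
      div_sub_div_same, div_sub_div_same,
      div_div_div_cancel_right₀ (by intro h; rw [sub_eq_zero] at h; exact absurd h.symm (ne_of_lt hlt1)),
      sub_sub_sub_cancel_right, sub_sub_sub_cancel_right]

end Split
section Fiber
open Filter Topology
variable {r l : ℕ} {u : Fin (r-1) → ℝ} {v : Fin (l-1) → ℝ}

set_option maxHeartbeats 4000000 in
lemma fiber_eq (hr : 1 ≤ r) (hl : 1 ≤ l) (hu : u ∈ openSimplex (r-1))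
    (hv : v ∈ openSimplex (l-1)) :
    assocProj r l hr hl ⁻¹' {(alphaMap (r-1) u, alphaMap (l-1) v)} ∩ Assoc (r+l-1)
      = (fun c => gam r l u v c) '' Set.Icc 0 1 := by
  apply subset_antisymm
  · rintro s ⟨hs1, hs2⟩
    rw [Set.mem_preimage, Set.mem_singleton_iff] at hs1
    obtain ⟨g, hg, hgs⟩ := mem_closure_iff_seq_limit.mp hs2
    simp only [Set.mem_image] at hg
    choose tt htt hat using hg
    have evals : ∀ q, Tendsto (fun m => g m q) atTop (𝓝 (s q)) :=
      fun q => tendsto_pi_nhds.mp hgs q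
    set ar : Fin (r+l-1+2) := ⟨r, by omega⟩ with har_def
    have h0ar : (0 : Fin (r+l-1+2)) < ar := by
      rw [Fin.lt_def]; simp only [Fin.val_zero, har_def, Fin.val_mk]; omega
    have harlast : ar < Fin.last (r+l-1+1) := by
      rw [Fin.lt_def]; simp only [har_def, Fin.val_mk, Fin.val_last]; omega
    set q0 : TriIdx (r+l-1) := ⟨(0, ar, Fin.last (r+l-1+1)), h0ar, harlast⟩ with hq0_def
    set c := s q0 with hc_def
    have hgq0 : ∀ m, g m q0 = ext01 (tt m) ar := by
      intro m
      rw [← hat m, alphaMap]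
      rw [hq0_def]
      rw [ext01_zero, ext01_last, sub_zero, sub_zero, div_one]
    have hcI : c ∈ Set.Icc (0:ℝ) 1 := by
      refine isClosed_Icc.mem_of_tendsto (evals q0) (Filter.Eventually.of_forall fun m => ?_)
      rw [← hat m]
      exact alphaMap_mem_Icc (htt m) q0
    have hWr : Tendsto (fun m => ext01 (tt m) ar) atTop (𝓝 c) :=
      (evals q0).congr hgq0
    have hWrpos : ∀ m, 0 < ext01 (tt m) ar := fun m => ext01_pos (htt m) h0ar
    have hWrlt1 : ∀ m, ext01 (tt m) ar < 1 := fun m => ext01_lt_one (htt m) harlast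
    have key : ∀ a : Fin (r+l-1+2),
        Tendsto (fun m => ext01 (tt m) a) atTop (𝓝 (Tfun r l u v c a)) := by
      intro a
      by_cases haru : a.1 ≤ r
      · rcases Nat.eq_zero_or_pos a.1 with ha0 | hapos
        · have ha : a = 0 := Fin.ext (by simp only [Fin.val_zero]; omega)
          rw [ha, Tfun_zero_idx]
          simp only [ext01_zero]
          exact tendsto_const_nhds
        · rcases eq_or_lt_of_le haru with har' | har'
          · have ha : a = ar := Fin.ext (by simp only [har_def, Fin.val_mk]; omega)
            rw [ha, har_def, Tfun_r_idx hr]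
            exact hWr
          · -- 0 < a.1 < r
            set qa : TriIdx (r+l-1) := ⟨(0, a, ar),
              by rw [Fin.lt_def]; simp only [Fin.val_zero]; omega,
              by rw [Fin.lt_def]; simp only [har_def, Fin.val_mk]; omega⟩ with hqa_def
            set qa' : TriIdx (r-1) := ⟨(0, ⟨a.1, by omega⟩, Fin.last (r-1+1)),
              by rw [Fin.lt_def]; simp only [Fin.val_zero, Fin.val_mk]; omega,
              by rw [Fin.lt_def]; simp only [Fin.val_mk, Fin.val_last]; omega⟩ with hqa'_def
            have hproj : ∀ x : TriIdx (r+l-1) → ℝ, (assocProj r l hr hl x).1 qa' = x qa := by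
              intro x
              dsimp only [assocProj]
              apply congrArg
              refine Subtype.ext ?_
              simp only [hqa_def, hqa'_def, Prod.mk.injEq]
              refine ⟨Fin.ext ?_, Fin.ext ?_, Fin.ext ?_⟩ <;>
                simp only [Fin.coe_castLE, Fin.val_mk, Fin.val_zero, Fin.val_last,
                  har_def] <;> omega
            have hsqa : s qa = ext01 u ⟨a.1, by omega⟩ := by
              have h := congrArg (fun z => z.1 qa') hs1
              dsimp only at h
              rw [hproj s] at h
              rw [h, alphaMap]
              rw [hqa'_def]
              rw [ext01_zero, ext01_last, sub_zero, sub_zero, div_one]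
            have h1 : Tendsto (fun m => ext01 (tt m) a / ext01 (tt m) ar) atTop
                (𝓝 (ext01 u ⟨a.1, by omega⟩)) := by
              rw [← hsqa]
              refine (evals qa).congr fun m => ?_
              rw [← hat m, alphaMap]
              rw [hqa_def]
              rw [ext01_zero, sub_zero, sub_zero]
            have h2 : Tendsto (fun m => ext01 (tt m) a) atTop
                (𝓝 (ext01 u ⟨a.1, by omega⟩ * c)) :=
              (h1.mul hWr).congr fun m => div_mul_cancel₀ _ (ne_of_gt (hWrpos m))
            rw [Tfun_le haru, mul_comm]
            exact h2
      · push_neg at haru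
        rcases eq_or_lt_of_le (show a.1 ≤ r+l by have := a.isLt; omega) with hal | hal
        · have ha : a = Fin.last (r+l-1+1) := Fin.ext (by simp only [Fin.val_last]; omega)
          rw [ha, Tfun_last_idx hr hl hu]
          simp only [ext01_last]
          exact tendsto_const_nhds
        · -- r < a.1 < r + l
          set qa : TriIdx (r+l-1) := ⟨(ar, a, Fin.last (r+l-1+1)),
            by rw [Fin.lt_def]; simp only [har_def, Fin.val_mk]; omega,
            by rw [Fin.lt_def]; simp only [Fin.val_last]; omega⟩ with hqa_def
          set qa'' : TriIdx (l-1) := ⟨(0, ⟨a.1 - r, by omega⟩, Fin.last (l-1+1)),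
            by rw [Fin.lt_def]; simp only [Fin.val_zero, Fin.val_mk]; omega,
            by rw [Fin.lt_def]; simp only [Fin.val_mk, Fin.val_last]; omega⟩ with hqa''_def
          have hproj : ∀ x : TriIdx (r+l-1) → ℝ, (assocProj r l hr hl x).2 qa'' = x qa := by
            intro x
            dsimp only [assocProj]
            apply congrArg
            refine Subtype.ext ?_
            simp only [hqa_def, hqa''_def, Prod.mk.injEq]
            refine ⟨Fin.ext ?_, Fin.ext ?_, Fin.ext ?_⟩ <;>
              simp only [Fin.val_mk, Fin.val_zero, Fin.val_last, har_def] <;> omega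
          have hsqa : s qa = ext01 v ⟨a.1 - r, by omega⟩ := by
            have h := congrArg (fun z => z.2 qa'') hs1
            dsimp only at h
            rw [hproj s] at h
            rw [h, alphaMap]
            rw [hqa''_def]
            rw [ext01_zero, ext01_last, sub_zero, sub_zero, div_one]
          have h1 : Tendsto (fun m => (ext01 (tt m) a - ext01 (tt m) ar) /
              (1 - ext01 (tt m) ar)) atTop (𝓝 (ext01 v ⟨a.1 - r, by omega⟩)) := by
            rw [← hsqa]
            refine (evals qa).congr fun m => ?_
            rw [← hat m, alphaMap]
            rw [hqa_def]
            rw [ext01_last]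
          have h2 : Tendsto (fun m => ext01 (tt m) a) atTop
              (𝓝 (c + ext01 v ⟨a.1 - r, by omega⟩ * (1 - c))) := by
            refine (hWr.add (h1.mul (tendsto_const_nhds.sub hWr))).congr fun m => ?_
            rw [div_mul_cancel₀ _
              (by have := hWrlt1 m; intro h; rw [sub_eq_zero] at h; linarith)]
            ring
          rw [Tfun_ge hr hl hu haru.le]
          convert h2 using 2
          ring
    refine ⟨c, hcI, ?_⟩
    show gam r l u v c = s
    symm
    funext q
    obtain ⟨⟨i, j, k⟩, hij, hjk⟩ := q
    have hij' : i.1 < j.1 := Fin.lt_def.mp hij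
    have hjk' : j.1 < k.1 := Fin.lt_def.mp hjk
    by_cases hk : k.1 ≤ r
    · set qs : TriIdx (r-1) := ⟨(⟨i.1, by omega⟩, ⟨j.1, by omega⟩, ⟨k.1, by omega⟩),
        by rw [Fin.lt_def]; simp only [Fin.val_mk]; omega,
        by rw [Fin.lt_def]; simp only [Fin.val_mk]; omega⟩ with hqs_def
      have hproj : (assocProj r l hr hl s).1 qs = s ⟨(i,j,k), hij, hjk⟩ := by
        dsimp only [assocProj]
        apply congrArg
        refine Subtype.ext ?_
        simp only [hqs_def, Prod.mk.injEq]
        exact ⟨Fin.ext (by simp only [Fin.coe_castLE, Fin.val_mk]),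
          Fin.ext (by simp only [Fin.coe_castLE, Fin.val_mk]),
          Fin.ext (by simp only [Fin.coe_castLE, Fin.val_mk])⟩
      have h := congrArg (fun z => z.1 qs) hs1
      dsimp only at h
      rw [hproj] at h
      rw [gam_of_le ⟨(i,j,k), hij, hjk⟩ hk, h]
    · by_cases hi : r ≤ i.1
      · set qs : TriIdx (l-1) := ⟨(⟨i.1 - r, by have := i.isLt; omega⟩,
          ⟨j.1 - r, by have := j.isLt; omega⟩, ⟨k.1 - r, by have := k.isLt; omega⟩),
          by rw [Fin.lt_def]; simp only [Fin.val_mk]; omega,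
          by rw [Fin.lt_def]; simp only [Fin.val_mk]; omega⟩ with hqs_def
        have hproj : (assocProj r l hr hl s).2 qs = s ⟨(i,j,k), hij, hjk⟩ := by
          dsimp only [assocProj]
          apply congrArg
          refine Subtype.ext ?_
          simp only [hqs_def, Prod.mk.injEq]
          exact ⟨Fin.ext (by simp only [Fin.val_mk]; omega),
            Fin.ext (by simp only [Fin.val_mk]; omega),
            Fin.ext (by simp only [Fin.val_mk]; omega)⟩
        have h := congrArg (fun z => z.2 qs) hs1
        dsimp only at h
        rw [hproj] at h
        rw [gam_of_ge ⟨(i,j,k), hij, hjk⟩ hk hi, h]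
      · push_neg at hi
        have hlim : Tendsto (fun m => g m ⟨(i,j,k), hij, hjk⟩) atTop
            (𝓝 ((Tfun r l u v c j - Tfun r l u v c i) /
              (Tfun r l u v c k - Tfun r l u v c i))) := by
          refine Tendsto.congr (fun m => ?_) (((key j).sub (key i)).div ((key k).sub (key i))
            (ne_of_gt (Tfun_denom_pos hu hv hr hl hcI hi (by omega))))
          rw [← hat m]; rfl
        have heq := tendsto_nhds_unique (evals ⟨(i,j,k), hij, hjk⟩) hlim
        rw [gam_mixed ⟨(i,j,k), hij, hjk⟩ hk (not_le.mpr hi)]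
        exact heq
  · rintro _ ⟨x, hx, rfl⟩
    refine ⟨?_, gam_mem_assoc hr hl hu hv hx⟩
    rw [Set.mem_preimage, Set.mem_singleton_iff]
    exact assocProj_gam hr hl x

end Fiber
section Main
open Filter Topology

lemma assocProj_continuous (r l : ℕ) (hr : 1 ≤ r) (hl : 1 ≤ l) :
    Continuous (assocProj r l hr hl) := by
  unfold assocProj
  exact Continuous.prodMk (continuous_pi fun q => continuous_apply _)
    (continuous_pi fun q => continuous_apply _)

lemma assocProj_image (r l : ℕ) (hr : 1 ≤ r) (hl : 1 ≤ l) :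
    assocProj r l hr hl '' Assoc (r + l - 1) = Assoc (r - 1) ×ˢ Assoc (l - 1) := by
  apply subset_antisymm
  · intro z hz
    have h1 : assocProj r l hr hl '' Assoc (r+l-1) ⊆
        closure (assocProj r l hr hl '' (alphaMap (r+l-1) '' openSimplex (r+l-1))) :=
      image_closure_subset_closure_image (assocProj_continuous r l hr hl)
    have h2 : assocProj r l hr hl '' (alphaMap (r+l-1) '' openSimplex (r+l-1)) ⊆
        (alphaMap (r-1) '' openSimplex (r-1)) ×ˢ (alphaMap (l-1) '' openSimplex (l-1)) := by
      rintro _ ⟨_, ⟨t, ht, rfl⟩, rfl⟩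
      rw [assocProj_alphaMap hr hl ht]
      exact ⟨⟨utConf r l t, utConf_mem hr hl ht, rfl⟩, ⟨vtConf r l t, vtConf_mem hr hl ht, rfl⟩⟩
    have h3 := closure_mono h2 (h1 hz)
    rwa [closure_prod_eq] at h3
  · rw [show Assoc (r-1) ×ˢ Assoc (l-1) = closure ((alphaMap (r-1) '' openSimplex (r-1)) ×ˢ
      (alphaMap (l-1) '' openSimplex (l-1))) from (closure_prod_eq).symm]
    refine closure_minimal ?_ (((isCompact_assoc (r+l-1)).image
      (assocProj_continuous r l hr hl)).isClosed)
    rintro ⟨y1, y2⟩ ⟨⟨u, hu, rfl⟩, ⟨v, hv, rfl⟩⟩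
    exact ⟨gam r l u v (1/2), gam_mem_assoc hr hl hu hv (by norm_num),
      assocProj_gam hr hl _⟩

end Main
/-- **Lemma 6.2.** The projection `p̂` maps `Assoc_{r+ℓ-1}` onto
`Assoc_{r-1} × Assoc_{ℓ-1}`, and the preimage in `Assoc_{r+ℓ-1}` of every point of the
interior of `Assoc_{r-1} × Assoc_{ℓ-1}` is homeomorphic to the closed interval
`[0,1]`. -/
theorem assocProj_surjOn_and_fibers_interval (r l : ℕ) (hr : 1 ≤ r) (hl : 1 ≤ l) :
    assocProj r l hr hl '' Assoc (r + l - 1) = Assoc (r - 1) ×ˢ Assoc (l - 1) ∧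
    ∀ y ∈ (alphaMap (r - 1) '' openSimplex (r - 1)) ×ˢ
        (alphaMap (l - 1) '' openSimplex (l - 1)),
      Nonempty (↥(assocProj r l hr hl ⁻¹' {y} ∩ Assoc (r + l - 1)) ≃ₜ
        ↥(Set.Icc (0 : ℝ) 1)) := by
  refine ⟨assocProj_image r l hr hl, ?_⟩
  intro y hy
  obtain ⟨u, hu, hyu⟩ := hy.1
  obtain ⟨v, hv, hyv⟩ := hy.2
  have hy_eq : y = (alphaMap (r-1) u, alphaMap (l-1) v) := Prod.ext hyu.symm hyv.symm
  rw [hy_eq, fiber_eq hr hl hu hv]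
  set F : Set.Icc (0:ℝ) 1 → (TriIdx (r+l-1) → ℝ) := fun c => gam r l u v c.1 with hF_def
  have hFc : Continuous F :=
    continuousOn_iff_continuous_restrict.mp (continuousOn_gam hr hl hu hv)
  have hFinj : Function.Injective F := by
    intro a b hab
    have ha := gam_apply_q0 (u := u) (v := v) hr hl hu a.1
    have hb := gam_apply_q0 (u := u) (v := v) hr hl hu b.1
    refine Subtype.ext ?_
    rw [← ha, ← hb]
    exact congrFun hab _
  have e1 : Set.Icc (0:ℝ) 1 ≃ₜ Set.range F :=
    Topology.IsEmbedding.toHomeomorph (f := F) (hFc.isClosedEmbedding hFinj).toIsEmbedding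
  have hrange : Set.range F = (fun c => gam r l u v c) '' Set.Icc 0 1 := by
    show Set.range ((Set.Icc (0:ℝ) 1).restrict fun c => gam r l u v c) = _
    exact Set.range_restrict _ _
  exact ⟨(e1.trans (Homeomorph.setCongr hrange)).symm⟩
end
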